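/- arXiv:math/0608316 — 12 statements merged into one kernel-verified Lean document; each statement's English description precedes it below -/
import Mathlib

section
/- For every integer N ≥ 5, the quantity D_N := (1/d_N) · Σ_{i=1}^{N-1} d_i d_{N-i} satisfies D_N ≤ E(5)/N² where E(N) = (6/49)·N²/((N-6/7)(N-4/7)) + (240/49²)·N²/((N-4/7)(N-11/7)(N-13/7)), and in particular D_N ≤ 0.24/N². -/
/-!
With `r n = (7n+1)(7n+3)/4` we have `d (n+1) = r n * d n`, and `r` is nondecreasing. Comparing the
two products of ratios gives `d i * d j ≤ d k * d (i + j - k)` whenever `k ≤ i, j`, so the inner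
terms `2 ≤ i ≤ N - 2` of the convolution are each at most `d 2 * d (N - 2)`, while the two outer
terms equal `d 1 * d (N - 1)`. Dividing by `d N = r (N - 1) r (N - 2) d (N - 2)` leaves a rational
function of `N`, bounded by `E(5) / N²` through a polynomial inequality whose difference has
nonnegative coefficients in `N - 5`.
-/

noncomputable def Efun (N : ℝ) : ℝ :=
  6 / 49 * N ^ 2 / ((N - 6 / 7) * (N - 4 / 7)) +
    240 / 2401 * N ^ 2 / ((N - 4 / 7) * (N - 11 / 7) * (N - 13 / 7))

open Finset

section RatioRecurrence

variable {d r : ℕ → ℝ}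

theorem eq_mul_prod_of_rec (hrec : ∀ n, d (n + 1) = r n * d n) (m a : ℕ) :
    d (m + a) = d m * ∏ t ∈ range a, r (m + t) := by
  induction a with
  | zero => simp
  | succ a ih => rw [← add_assoc, hrec, ih, prod_range_succ]; ring

theorem pos_of_rec (hrec : ∀ n, d (n + 1) = r n * d n) (h0 : 0 < d 0) (hr : ∀ n, 0 < r n)
    (n : ℕ) : 0 < d n := by
  rw [← zero_add n, eq_mul_prod_of_rec hrec]
  exact mul_pos h0 (prod_pos fun t _ => hr _)

theorem mul_le_mul_sub_of_rec (hrec : ∀ n, d (n + 1) = r n * d n) (hr : Monotone r)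
    (hr0 : ∀ n, 0 ≤ r n) (hd : ∀ n, 0 ≤ d n) {i j k : ℕ} (hi : k ≤ i) (hj : k ≤ j) :
    d i * d j ≤ d k * d (i + j - k) := by
  obtain ⟨a, rfl⟩ := Nat.exists_eq_add_of_le hi
  obtain ⟨b, rfl⟩ := Nat.exists_eq_add_of_le hj
  have hprod : ∏ t ∈ range a, r (k + t) ≤ ∏ t ∈ range a, r (k + b + t) :=
    prod_le_prod (fun t _ => hr0 _) fun t _ => hr (by omega)
  calc d (k + a) * d (k + b)
      = d k * d (k + b) * ∏ t ∈ range a, r (k + t) := by rw [eq_mul_prod_of_rec hrec]; ring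
    _ ≤ d k * d (k + b) * ∏ t ∈ range a, r (k + b + t) :=
        mul_le_mul_of_nonneg_left hprod (mul_nonneg (hd k) (hd _))
    _ = d k * d (k + a + (k + b) - k) := by
        rw [mul_assoc, ← eq_mul_prod_of_rec hrec]; congr 2; omega

theorem sum_Icc_mul_sub_le_of_rec (hrec : ∀ n, d (n + 1) = r n * d n) (hr : Monotone r)
    (hr0 : ∀ n, 0 ≤ r n) (hd : ∀ n, 0 ≤ d n) {n : ℕ} (hn : 1 ≤ n) :
    ∑ i ∈ Icc 1 (n + 1), d i * d (n + 2 - i) ≤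
      2 * d 1 * d (n + 1) + (n - 1) * (d 2 * d n) := by
  have hinner : ∀ i ∈ Icc 2 n, d i * d (n + 2 - i) ≤ d 2 * d n := fun i hi => by
    simp only [mem_Icc] at hi
    simpa [show i + (n + 2 - i) - 2 = n by omega] using
      mul_le_mul_sub_of_rec hrec hr hr0 hd hi.1 (show 2 ≤ n + 2 - i by omega)
  have hsum := sum_le_card_nsmul _ _ _ hinner
  rw [Nat.card_Icc, nsmul_eq_mul, Nat.cast_sub (by omega)] at hsum
  rw [sum_Icc_succ_top (by omega), ← insert_Icc_add_one_left_eq_Icc hn,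
    sum_insert (by simp)]
  simp only [show n + 2 - (n + 1) = 1 by omega, show n + 2 - 1 = n + 1 by omega,
    Nat.reduceAdd] at hsum ⊢
  push_cast at hsum
  linarith

end RatioRecurrence

noncomputable def dRatio (n : ℕ) : ℝ := (7 * n + 1) * (7 * n + 3) / 4

theorem dRatio_pos (n : ℕ) : 0 < dRatio n := by unfold dRatio; positivity

theorem dRatio_monotone : Monotone dRatio :=
  monotone_nat_of_le_succ fun n => by
    unfold dRatio; push_cast; nlinarith [n.cast_nonneg (α := ℝ)]

theorem Efun_five : Efun 5 = 15175 / 69223 := by norm_num [Efun]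

theorem convolution_dRatio_le {n : ℕ} (hn : 3 ≤ n) :
    (3 / 2 * dRatio n + 15 * (n - 1)) * (n + 2) ^ 2 ≤
      15175 / 69223 * (dRatio (n + 1) * dRatio n) := by
  obtain ⟨t, rfl⟩ := Nat.exists_eq_add_of_le hn
  have ht : (0 : ℝ) ≤ t := t.cast_nonneg
  unfold dRatio
  push_cast
  nlinarith [pow_nonneg ht 2, pow_nonneg ht 3, pow_nonneg ht 4]

theorem DN_bound (d : ℕ → ℝ)
    (hd0 : d 0 = 1)
    (hd : ∀ n : ℕ, 1 ≤ n → d n = (7 * (n : ℝ) - 6) * (7 * (n : ℝ) - 4) / 4 * d (n - 1)) :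
    ∀ N : ℕ, 5 ≤ N →
      (1 / d N) * ∑ i ∈ Finset.Icc 1 (N - 1), d i * d (N - i) ≤ Efun 5 / (N : ℝ) ^ 2 ∧
      (1 / d N) * ∑ i ∈ Finset.Icc 1 (N - 1), d i * d (N - i) ≤ 0.24 / (N : ℝ) ^ 2 := by
  intro N hN
  obtain ⟨n, rfl⟩ : ∃ n, N = n + 2 := ⟨N - 2, by omega⟩
  have hrec : ∀ n, d (n + 1) = dRatio n * d n := fun n => by
    rw [hd (n + 1) n.succ_pos, dRatio]; push_cast; ring_nf
  have hpos := pos_of_rec hrec (by rw [hd0]; exact one_pos) dRatio_pos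
  have hd1 : d 1 = 3 / 4 := by rw [hrec, hd0, dRatio]; norm_num
  have hd2 : d 2 = 15 := by rw [hrec, hd1, dRatio]; norm_num
  have hsum := sum_Icc_mul_sub_le_of_rec hrec dRatio_monotone (fun n => (dRatio_pos n).le)
    (fun n => (hpos n).le) (show 1 ≤ n by omega)
  have hratio := convolution_dRatio_le (show 3 ≤ n by omega)
  have key : 1 / d (n + 2) * ∑ i ∈ Icc 1 (n + 1), d i * d (n + 2 - i)
      ≤ 15175 / 69223 / ((n + 2 : ℕ) : ℝ) ^ 2 := by
    rw [one_div_mul_eq_div, div_le_div_iff₀ (hpos _) (by positivity), hrec, hrec n]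
    rw [hd1, hd2, hrec n] at hsum
    push_cast
    nlinarith [hpos n, mul_le_mul_of_nonneg_right hratio (hpos n).le]
  exact ⟨Efun_five ▸ key, key.trans (by gcongr; norm_num)⟩
end

section
/- For any integers N ≥ N₀ ≥ 3, one has (1/d_N) Σ_{i=1}^{N-1} d_i d_{N-i} ≤ 2 d_1 d_{N-1}/d_N + (N-3) d_2 d_{N-2}/d_N ≤ E(N₀)/N², where E is the rational function E(N) = (6/49) N²/((N-6/7)(N-4/7)) + (240/2401) N²/((N-4/7)(N-11/7)(N-13/7)). -/
open Finset

section MonotoneRatio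

variable {d c : ℕ → ℝ} (hd : ∀ n, 1 ≤ n → d n = c n * d (n - 1))
include hd

theorem pos_of_ratio_pos (h0 : 0 < d 0) (hc : ∀ n, 1 ≤ n → 0 < c n) (n : ℕ) : 0 < d n := by
  induction n with
  | zero => exact h0
  | succ n ih => rw [hd (n + 1) n.succ_pos]; exact mul_pos (hc _ n.succ_pos) ih

variable (hnonneg : ∀ n, 0 ≤ d n) (hc : MonotoneOn c (Set.Ici 1))
include hnonneg hc

theorem mul_sub_succ_le {N i : ℕ} (h : 2 * i + 1 ≤ N) :
    d (i + 1) * d (N - (i + 1)) ≤ d i * d (N - i) := by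
  have hci : c (i + 1) ≤ c (N - i) :=
    hc (Set.mem_Ici.2 (by omega)) (Set.mem_Ici.2 (by omega)) (by omega)
  have hNi : d (N - i) = c (N - i) * d (N - (i + 1)) := by
    rw [hd _ (by omega), Nat.sub_sub]
  rw [hd (i + 1) (by omega), Nat.add_sub_cancel, hNi]
  nlinarith [mul_le_mul_of_nonneg_right hci (mul_nonneg (hnonneg i) (hnonneg (N - (i + 1))))]

theorem mul_sub_le_of_le {N k i : ℕ} (hki : k ≤ i) (hiN : 2 * i ≤ N) :
    d i * d (N - i) ≤ d k * d (N - k) := by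
  induction i, hki using Nat.le_induction with
  | base => exact le_rfl
  | succ i _ ih => exact (mul_sub_succ_le hd hnonneg hc (by omega)).trans (ih (by omega))

theorem mul_sub_le_of_mem_Icc {N k i : ℕ} (hi : i ∈ Icc k (N - k)) :
    d i * d (N - i) ≤ d k * d (N - k) := by
  rw [mem_Icc] at hi
  rcases le_total (2 * i) N with h | h
  · exact mul_sub_le_of_le hd hnonneg hc hi.1 h
  · have := mul_sub_le_of_le hd hnonneg hc (N := N) (k := k) (i := N - i) (by omega) (by omega)
    rwa [Nat.sub_sub_self (by omega), mul_comm] at this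

end MonotoneRatio

theorem sum_Icc_one_le {f : ℕ → ℝ} {N : ℕ} {M : ℝ} (hN : 3 ≤ N)
    (hf : ∀ i ∈ Icc 2 (N - 2), f i ≤ M) :
    ∑ i ∈ Icc 1 (N - 1), f i ≤ f 1 + f (N - 1) + ((N : ℝ) - 3) * M := by
  have hsplit : Icc 1 (N - 1) = insert 1 (insert (N - 1) (Icc 2 (N - 2))) := by
    ext j; simp only [mem_Icc, mem_insert]; omega
  have hcard : ((Icc 2 (N - 2)).card : ℝ) = N - 3 := by
    rw [Nat.card_Icc, show N - 2 + 1 - 2 = N - 3 by omega, Nat.cast_sub hN, Nat.cast_ofNat]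
  rw [hsplit, sum_insert (by simp only [mem_insert, mem_Icc]; omega),
    sum_insert (by simp only [mem_Icc]; omega), add_assoc, ← hcard]
  gcongr
  simpa using sum_le_card_nsmul _ _ _ hf

theorem div_sub_antitoneOn {a : ℝ} (ha : 0 ≤ a) :
    AntitoneOn (fun x => x / (x - a)) (Set.Ioi a) := by
  intro x hx y hy hxy
  rw [Set.mem_Ioi] at hx hy
  rw [div_le_div_iff₀ (by linarith) (by linarith)]
  nlinarith

theorem Efun_eq_mul_div_sub (x : ℝ) :
    Efun x = 6 / 49 * (x / (x - 6 / 7) * (x / (x - 4 / 7))) +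
      240 / 2401 * (x / (x - 4 / 7) * (x / (x - 11 / 7)) * (x - 13 / 7)⁻¹) := by
  simp only [Efun, div_eq_mul_inv, mul_inv]; ring

theorem Efun_antitoneOn : AntitoneOn Efun (Set.Ioi (13 / 7)) := by
  intro x hx y hy hxy
  rw [Set.mem_Ioi] at hx hy
  have hpos {z : ℝ} (hz : 13 / 7 < z) {a : ℝ} (ha : a ≤ 13 / 7) : 0 ≤ z / (z - a) :=
    div_nonneg (by linarith) (by linarith)
  have hanti {a : ℝ} (ha : 0 ≤ a) (ha' : a ≤ 13 / 7) : y / (y - a) ≤ x / (x - a) :=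
    div_sub_antitoneOn ha (Set.mem_Ioi.2 (by linarith)) (Set.mem_Ioi.2 (by linarith)) hxy
  have hpair {a b : ℝ} (ha : 0 ≤ a) (ha' : a ≤ 13 / 7) (hb : 0 ≤ b) (hb' : b ≤ 13 / 7) :
      y / (y - a) * (y / (y - b)) ≤ x / (x - a) * (x / (x - b)) :=
    mul_le_mul (hanti ha ha') (hanti hb hb') (hpos hy hb') (hpos hx ha')
  rw [Efun_eq_mul_div_sub, Efun_eq_mul_div_sub]
  gcongr _ * ?_ + _ * (?_ * ?_)
  · exact hpair (by norm_num) (by norm_num) (by norm_num) (by norm_num)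
  · exact mul_nonneg (hpos hx (by norm_num)) (hpos hx (by norm_num))
  · exact hpair (by norm_num) (by norm_num) (by norm_num) (by norm_num)
  · exact inv_anti₀ (by linarith) (by linarith)

theorem Efun_eq_div (x : ℝ) :
    Efun x = 6 * x ^ 2 / ((7 * x - 6) * (7 * x - 4)) +
      240 * x ^ 2 / (7 * ((7 * x - 4) * (7 * x - 11) * (7 * x - 13))) := by
  have hsev (a : ℝ) : x - a / 7 = (7 * x - a) / 7 := by ring
  rw [Efun, hsev, hsev, hsev, hsev]
  simp only [div_eq_mul_inv, mul_inv]
  ring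

theorem sq_mul_le_Efun {x : ℝ} (hx : 3 ≤ x) :
    x ^ 2 * (6 / ((7 * x - 6) * (7 * x - 4)) +
      240 * (x - 3) / ((7 * x - 6) * (7 * x - 4) * (7 * x - 11) * (7 * x - 13))) ≤ Efun x := by
  have h6 : 0 < 7 * x - 6 := by linarith
  have h4 : 0 < 7 * x - 4 := by linarith
  have h11 : 0 < 7 * x - 11 := by linarith
  have h13 : 0 < 7 * x - 13 := by linarith
  have hgap : Efun x - x ^ 2 * (6 / ((7 * x - 6) * (7 * x - 4)) +
      240 * (x - 3) / ((7 * x - 6) * (7 * x - 4) * (7 * x - 11) * (7 * x - 13))) =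
      3600 * x ^ 2 / (7 * ((7 * x - 6) * (7 * x - 4) * (7 * x - 11) * (7 * x - 13))) := by
    rw [Efun_eq_div, div_add_div, div_add_div, mul_div_assoc', div_sub_div, div_eq_div_iff]
    · ring
    all_goals positivity
  rw [← sub_nonneg, hgap]
  positivity

section Recurrence

variable {d : ℕ → ℝ} (hd0 : d 0 = 1)
  (hd : ∀ n : ℕ, 1 ≤ n → d n = (7 * (n : ℝ) - 6) * (7 * (n : ℝ) - 4) / 4 * d (n - 1))

theorem recurrence_ratio_monotoneOn :
    MonotoneOn (fun n : ℕ => (7 * (n : ℝ) - 6) * (7 * (n : ℝ) - 4) / 4) (Set.Ici 1) := by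
  intro m hm n _ hmn
  have hm : (1 : ℝ) ≤ m := by exact_mod_cast hm
  have hmn : (m : ℝ) ≤ n := by exact_mod_cast hmn
  dsimp only
  gcongr <;> linarith

include hd0 hd

theorem pos_of_recurrence (n : ℕ) : 0 < d n :=
  pos_of_ratio_pos hd (by rw [hd0]; exact one_pos) (fun n hn => by
    have hn : (1 : ℝ) ≤ n := by exact_mod_cast hn
    exact div_pos (mul_pos (by linarith) (by linarith)) four_pos) n

theorem d_one : d 1 = 3 / 4 := by
  rw [hd 1 le_rfl, Nat.sub_self, hd0]; norm_num

theorem d_two : d 2 = 15 := by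
  rw [hd 2 one_le_two, d_one hd0 hd]; norm_num

theorem sum_Icc_mul_sub_le {N : ℕ} (hN : 3 ≤ N) :
    ∑ i ∈ Icc 1 (N - 1), d i * d (N - i) ≤
      2 * d 1 * d (N - 1) + ((N : ℝ) - 3) * d 2 * d (N - 2) := by
  have hnonneg n := (pos_of_recurrence hd0 hd n).le
  have := sum_Icc_one_le hN fun i hi =>
    mul_sub_le_of_mem_Icc hd hnonneg recurrence_ratio_monotoneOn hi
  rw [Nat.sub_sub_self (by omega)] at this
  linarith

theorem boundary_terms_div_eq {N : ℕ} (hN : 3 ≤ N) :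
    2 * d 1 * d (N - 1) / d N + ((N : ℝ) - 3) * d 2 * d (N - 2) / d N =
      6 / ((7 * N - 6) * (7 * N - 4)) +
        240 * (N - 3) / ((7 * N - 6) * (7 * N - 4) * (7 * N - 11) * (7 * N - 13)) := by
  have hN' : (3 : ℝ) ≤ N := by exact_mod_cast hN
  have hN1 : d (N - 1) = (7 * (N : ℝ) - 13) * (7 * N - 11) / 4 * d (N - 2) := by
    rw [hd (N - 1) (by omega), Nat.cast_sub (by omega), Nat.sub_sub]
    ring_nf
  have h2 := pos_of_recurrence hd0 hd (N - 2)
  have h6 : (0 : ℝ) < 7 * N - 6 := by linarith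
  have h4 : (0 : ℝ) < 7 * N - 4 := by linarith
  have h11 : (0 : ℝ) < 7 * N - 11 := by linarith
  have h13 : (0 : ℝ) < 7 * N - 13 := by linarith
  rw [hd N (by omega), hN1, d_one hd0 hd, d_two hd0 hd, div_add_div, div_add_div,
    div_eq_div_iff]
  · ring
  all_goals positivity

end Recurrence

theorem DN_two_bounds (d : ℕ → ℝ)
    (hd0 : d 0 = 1)
    (hd : ∀ n : ℕ, 1 ≤ n → d n = (7 * (n : ℝ) - 6) * (7 * (n : ℝ) - 4) / 4 * d (n - 1)) :
    ∀ N N₀ : ℕ, 3 ≤ N₀ → N₀ ≤ N →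
      (1 / d N) * ∑ i ∈ Finset.Icc 1 (N - 1), d i * d (N - i)
        ≤ 2 * d 1 * d (N - 1) / d N + ((N : ℝ) - 3) * d 2 * d (N - 2) / d N ∧
      2 * d 1 * d (N - 1) / d N + ((N : ℝ) - 3) * d 2 * d (N - 2) / d N
        ≤ Efun (N₀ : ℝ) / (N : ℝ) ^ 2 := by
  intro N N₀ hN₀ hN₀N
  have hN₀' : (3 : ℝ) ≤ N₀ := by exact_mod_cast hN₀
  have hN₀N' : (N₀ : ℝ) ≤ N := by exact_mod_cast hN₀N
  have hN : 3 ≤ N := hN₀.trans hN₀N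
  refine ⟨?_, ?_⟩
  · rw [one_div_mul_eq_div, ← add_div]
    exact div_le_div_of_nonneg_right (sum_Icc_mul_sub_le hd0 hd hN)
      (pos_of_recurrence hd0 hd N).le
  · rw [boundary_terms_div_eq hd0 hd hN, le_div_iff₀ (by positivity), mul_comm]
    calc _ ≤ Efun N := sq_mul_le_Efun (hN₀'.trans hN₀N')
      _ ≤ Efun N₀ := Efun_antitoneOn (Set.mem_Ioi.2 (by linarith))
          (Set.mem_Ioi.2 (by linarith)) hN₀N'
end

section
/- Let c_n be defined by c_0 = 1 and the nonlinear recurrence c_n = ((7n-6)(7n-4)/4) c_{n-1} + (1/2) Σ_{k=1}^{n-1} ((7n-7k-6)(7n-7k-4)/2) c_{n-k-1} Σ_{i=0}^{k} c_i c_{k-i} − (1/2) Σ_{k=1}^{n-1} c_k c_{n-k}. Then c_n > 0 for all n ≥ 0. -/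
noncomputable def Aa (m : ℕ) : ℝ := (7*(m:ℝ)-6)*(7*(m:ℝ)-4)/4

lemma Aa_ge {m : ℕ} (h : 1 ≤ m) : 3/4 ≤ Aa m := by
  have h' : (1:ℝ) ≤ m := by exact_mod_cast h
  unfold Aa; nlinarith

lemma Aa_pos {m : ℕ} (h : 1 ≤ m) : 0 < Aa m := lt_of_lt_of_le (by norm_num) (Aa_ge h)

lemma Aa_mono {a b : ℕ} (h1 : 1 ≤ a) (h : a ≤ b) : Aa a ≤ Aa b := by
  have h1' : (1:ℝ) ≤ a := by exact_mod_cast h1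
  have h' : (a:ℝ) ≤ b := by exact_mod_cast h
  unfold Aa; nlinarith

lemma prod_sq_aux : ∀ j : ℕ, 1 ≤ j →
    (∏ m ∈ Finset.Icc 1 j, (1+1/((m:ℝ))^2)) * ((j:ℝ)+1) ≤ 4*j := by
  intro j hj
  induction j, hj using Nat.le_induction with
  | base => norm_num
  | succ j hj ih =>
    rw [Finset.prod_Icc_succ_top (by omega : 1 ≤ j+1)]
    push_cast
    set P := ∏ m ∈ Finset.Icc 1 j, (1+1/((m:ℝ))^2) with hP
    have hPnn : 0 ≤ P := Finset.prod_nonneg (by intro i _; positivity)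
    set x : ℝ := (j:ℝ) with hx
    have hx1 : (1:ℝ) ≤ x := by rw [hx]; exact_mod_cast hj
    have key : P * (x+1) ≤ 4*x := ih
    have e1 : (1 + 1/(x+1)^2) = ((x+1)^2+1)/(x+1)^2 := by field_simp
    rw [e1, show P * (((x+1)^2+1)/(x+1)^2) * (x+1+1)
        = P * ((x+1)^2+1) * (x+1+1) / (x+1)^2 by ring,
      div_le_iff₀ (by positivity : (0:ℝ) < (x+1)^2)]
    nlinarith [mul_le_mul_of_nonneg_right key
        (show (0:ℝ) ≤ ((x+1)^2+1)*(x+1+1) by positivity), hPnn, hx1]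

lemma prod_sq (j : ℕ) : (∏ m ∈ Finset.Icc 1 j, (1+1/((m:ℝ))^2)) ≤ 4 := by
  rcases Nat.eq_zero_or_pos j with h | h
  · subst h; norm_num
  · have h2 := prod_sq_aux j h
    have hx : (0:ℝ) ≤ (j:ℝ) := Nat.cast_nonneg j
    nlinarith [h2]

set_option maxHeartbeats 2000000 in
theorem master (c : ℕ → ℝ)
    (hc0 : c 0 = 1)
    (hc : ∀ n : ℕ, 1 ≤ n → c n =
      (7 * (n : ℝ) - 6) * (7 * (n : ℝ) - 4) / 4 * c (n - 1)
      + (1 / 2) * ∑ k ∈ Finset.Icc 1 (n - 1),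
          (7 * (n : ℝ) - 7 * (k : ℝ) - 6) * (7 * (n : ℝ) - 7 * (k : ℝ) - 4) / 2
            * c (n - k - 1) * ∑ i ∈ Finset.range (k + 1), c i * c (k - i)
      - (1 / 2) * ∑ k ∈ Finset.Icc 1 (n - 1), c k * c (n - k)) :
    ∀ n : ℕ, (0 < c n) ∧
      (1 ≤ n → Aa n * c (n-1) ≤ c n ∧ c n ≤ (1+1/((n:ℝ))^2) * (Aa n * c (n-1))) ∧
      (2 ≤ n → (∑ k ∈ Finset.Icc 1 (n-1), c k * c (n-k)) ≤ 2 * c (n-1)) := by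
  have e1 : c 1 = (3/4 : ℝ) := by
    have h := hc 1 (by norm_num)
    norm_num [Finset.sum_Icc_succ_top, Finset.Icc_self, Finset.sum_range_succ, hc0] at h
    linarith [h]
  have e2 : c 2 = (507/32 : ℝ) := by
    have h := hc 2 (by norm_num)
    norm_num [Finset.sum_Icc_succ_top, Finset.Icc_self, Finset.sum_range_succ, hc0, e1] at h
    linarith [h]
  have e3 : c 3 = (33435/32 : ℝ) := by
    have h := hc 3 (by norm_num)
    norm_num [Finset.sum_Icc_succ_top, Finset.Icc_self, Finset.sum_range_succ, hc0, e1, e2] at h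
    linarith [h]
  have e4 : c 4 = (287936775/2048 : ℝ) := by
    have h := hc 4 (by norm_num)
    norm_num [Finset.sum_Icc_succ_top, Finset.Icc_self, Finset.sum_range_succ, hc0, e1, e2, e3] at h
    linarith [h]
  have e5 : c 5 = (32726978613/1024 : ℝ) := by
    have h := hc 5 (by norm_num)
    norm_num [Finset.sum_Icc_succ_top, Finset.Icc_self, Finset.sum_range_succ, hc0, e1, e2, e3, e4] at h
    linarith [h]
  have e6 : c 6 = (721545103202643/65536 : ℝ) := by
    have h := hc 6 (by norm_num)
    norm_num [Finset.sum_Icc_succ_top, Finset.Icc_self, Finset.sum_range_succ, hc0, e1, e2, e3, e4, e5] at h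
    linarith [h]
  have e7 : c 7 = (10962206492453523/2048 : ℝ) := by
    have h := hc 7 (by norm_num)
    norm_num [Finset.sum_Icc_succ_top, Finset.Icc_self, Finset.sum_range_succ, hc0, e1, e2, e3, e4, e5, e6] at h
    linarith [h]
  have e8 : c 8 = (29291923120372653108555/8388608 : ℝ) := by
    have h := hc 8 (by norm_num)
    norm_num [Finset.sum_Icc_succ_top, Finset.Icc_self, Finset.sum_range_succ, hc0, e1, e2, e3, e4, e5, e6, e7] at h
    linarith [h]
  have e9 : c 9 = (771733119787865125334775/262144 : ℝ) := by
    have h := hc 9 (by norm_num)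
    norm_num [Finset.sum_Icc_succ_top, Finset.Icc_self, Finset.sum_range_succ, hc0, e1, e2, e3, e4, e5, e6, e7, e8] at h
    linarith [h]
  intro n
  induction n using Nat.strong_induction_on with
  | _ n ih =>
  rcases Nat.lt_or_ge n 10 with hn | hn
  · -- base cases
    interval_cases n
    · -- n = 0
      refine ⟨by norm_num [hc0], ?_, ?_⟩
      · exact fun hh => absurd hh (by norm_num)
      · exact fun hh => absurd hh (by norm_num)
    · -- n = 1
      refine ⟨by norm_num [hc0, e1], ?_, ?_⟩
      · exact fun _ => ⟨by norm_num [Aa, hc0, e1], by norm_num [Aa, hc0, e1]⟩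
      · exact fun hh => absurd hh (by norm_num)
    · -- n = 2
      refine ⟨by norm_num [hc0, e1, e2], ?_, ?_⟩
      · exact fun _ => ⟨by norm_num [Aa, hc0, e1, e2], by norm_num [Aa, hc0, e1, e2]⟩
      · intro _
        norm_num [Finset.sum_Icc_succ_top, Finset.Icc_self, hc0, e1, e2]
    · -- n = 3
      refine ⟨by norm_num [hc0, e1, e2, e3], ?_, ?_⟩
      · exact fun _ => ⟨by norm_num [Aa, hc0, e1, e2, e3], by norm_num [Aa, hc0, e1, e2, e3]⟩
      · intro _
        norm_num [Finset.sum_Icc_succ_top, Finset.Icc_self, hc0, e1, e2, e3]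
    · -- n = 4
      refine ⟨by norm_num [hc0, e1, e2, e3, e4], ?_, ?_⟩
      · exact fun _ => ⟨by norm_num [Aa, hc0, e1, e2, e3, e4], by norm_num [Aa, hc0, e1, e2, e3, e4]⟩
      · intro _
        norm_num [Finset.sum_Icc_succ_top, Finset.Icc_self, hc0, e1, e2, e3, e4]
    · -- n = 5
      refine ⟨by norm_num [hc0, e1, e2, e3, e4, e5], ?_, ?_⟩
      · exact fun _ => ⟨by norm_num [Aa, hc0, e1, e2, e3, e4, e5], by norm_num [Aa, hc0, e1, e2, e3, e4, e5]⟩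
      · intro _
        norm_num [Finset.sum_Icc_succ_top, Finset.Icc_self, hc0, e1, e2, e3, e4, e5]
    · -- n = 6
      refine ⟨by norm_num [hc0, e1, e2, e3, e4, e5, e6], ?_, ?_⟩
      · exact fun _ => ⟨by norm_num [Aa, hc0, e1, e2, e3, e4, e5, e6], by norm_num [Aa, hc0, e1, e2, e3, e4, e5, e6]⟩
      · intro _
        norm_num [Finset.sum_Icc_succ_top, Finset.Icc_self, hc0, e1, e2, e3, e4, e5, e6]
    · -- n = 7
      refine ⟨by norm_num [hc0, e1, e2, e3, e4, e5, e6, e7], ?_, ?_⟩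
      · exact fun _ => ⟨by norm_num [Aa, hc0, e1, e2, e3, e4, e5, e6, e7], by norm_num [Aa, hc0, e1, e2, e3, e4, e5, e6, e7]⟩
      · intro _
        norm_num [Finset.sum_Icc_succ_top, Finset.Icc_self, hc0, e1, e2, e3, e4, e5, e6, e7]
    · -- n = 8
      refine ⟨by norm_num [hc0, e1, e2, e3, e4, e5, e6, e7, e8], ?_, ?_⟩
      · exact fun _ => ⟨by norm_num [Aa, hc0, e1, e2, e3, e4, e5, e6, e7, e8], by norm_num [Aa, hc0, e1, e2, e3, e4, e5, e6, e7, e8]⟩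
      · intro _
        norm_num [Finset.sum_Icc_succ_top, Finset.Icc_self, hc0, e1, e2, e3, e4, e5, e6, e7, e8]
    · -- n = 9
      refine ⟨by norm_num [hc0, e1, e2, e3, e4, e5, e6, e7, e8, e9], ?_, ?_⟩
      · exact fun _ => ⟨by norm_num [Aa, hc0, e1, e2, e3, e4, e5, e6, e7, e8, e9], by norm_num [Aa, hc0, e1, e2, e3, e4, e5, e6, e7, e8, e9]⟩
      · intro _
        norm_num [Finset.sum_Icc_succ_top, Finset.Icc_self, hc0, e1, e2, e3, e4, e5, e6, e7, e8, e9]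
  · -- inductive step, n ≥ 10
    have hn1 : 1 ≤ n := by omega
    have cpos : ∀ m, m < n → 0 < c m := fun m h => (ih m h).1
    have invL : ∀ m, 1 ≤ m → m < n → Aa m * c (m-1) ≤ c m :=
      fun m h1 h2 => ((ih m h2).2.1 h1).1
    have invU : ∀ m, 1 ≤ m → m < n → c m ≤ (1+1/((m:ℝ))^2) * (Aa m * c (m-1)) :=
      fun m h1 h2 => ((ih m h2).2.1 h1).2
    have convm : ∀ m, 2 ≤ m → m < n → (∑ k ∈ Finset.Icc 1 (m-1), c k * c (m-k)) ≤ 2 * c (m-1) :=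
      fun m h1 h2 => (ih m h2).2.2 h1
    have invU2 : ∀ m, 1 ≤ m → m < n → c m ≤ 2 * (Aa m * c (m-1)) := by
      intro m h1 h2
      refine (invU m h1 h2).trans ?_
      have h3 : (1:ℝ) ≤ (m:ℝ) := by exact_mod_cast h1
      have h5 : 0 < Aa m * c (m-1) := mul_pos (Aa_pos h1) (cpos (m-1) (by omega))
      have h4 : (1+1/((m:ℝ))^2) ≤ 2 := by
        have h6 : 1/((m:ℝ))^2 ≤ 1 := by
          rw [div_le_one (by positivity)]; nlinarith
        linarith
      nlinarith
    -- upper chain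
    have chainU : ∀ j, j < n → c j ≤ 4 * ∏ m ∈ Finset.Icc 1 j, Aa m := by
      have main : ∀ j, j < n →
          c j ≤ (∏ m ∈ Finset.Icc 1 j, (1+1/((m:ℝ))^2)) * ∏ m ∈ Finset.Icc 1 j, Aa m := by
        intro j
        induction j with
        | zero => intro _; simp [hc0]
        | succ j ihj =>
          intro hjn
          have hj : j < n := by omega
          have h1 := invU (j+1) (by omega) hjn
          simp only [Nat.add_sub_cancel] at h1
          have h2 := ihj hj
          rw [Finset.prod_Icc_succ_top (by omega : 1 ≤ j+1),
            Finset.prod_Icc_succ_top (by omega : 1 ≤ j+1)]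
          have hA : 0 < Aa (j+1) := Aa_pos (by omega)
          have hsq : (0:ℝ) < 1+1/(((j+1:ℕ)):ℝ)^2 := by positivity
          calc c (j+1) ≤ (1+1/(((j+1:ℕ)):ℝ)^2) * (Aa (j+1) * c j) := h1
            _ ≤ (1+1/(((j+1:ℕ)):ℝ)^2) * (Aa (j+1) *
                ((∏ m ∈ Finset.Icc 1 j, (1+1/((m:ℝ))^2)) * ∏ m ∈ Finset.Icc 1 j, Aa m)) := by
                have := mul_le_mul_of_nonneg_left h2 hA.le
                nlinarith [this, hsq]
            _ = (∏ m ∈ Finset.Icc 1 j, (1+1/((m:ℝ))^2)) * (1+1/(((j+1:ℕ)):ℝ)^2) *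
                ((∏ m ∈ Finset.Icc 1 j, Aa m) * Aa (j+1)) := by ring
      intro j hj
      have h2 := main j hj
      have h3 := prod_sq j
      have h4 : 0 ≤ ∏ m ∈ Finset.Icc 1 j, Aa m :=
        Finset.prod_nonneg (fun i hi => (Aa_pos (Finset.mem_Icc.mp hi).1).le)
      nlinarith [h2, h3, h4]
    -- lower chain
    have chainL : ∀ i j, 1 ≤ i → i ≤ j → j < n →
        c i * ∏ m ∈ Finset.Icc (i+1) j, Aa m ≤ c j := by
      intro i j h1 hij
      induction j, hij using Nat.le_induction with
      | base =>
        intro _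
        rw [Finset.Icc_eq_empty (by omega : ¬ i+1 ≤ i), Finset.prod_empty, mul_one]
      | succ j hij ihj =>
        intro hjn
        have hj : j < n := by omega
        rw [Finset.prod_Icc_succ_top (by omega : i+1 ≤ j+1), ← mul_assoc]
        have h2 := invL (j+1) (by omega) hjn
        simp only [Nat.add_sub_cancel] at h2
        calc c i * (∏ m ∈ Finset.Icc (i+1) j, Aa m) * Aa (j+1)
            ≤ c j * Aa (j+1) :=
              mul_le_mul_of_nonneg_right (ihj hj) (Aa_pos (by omega)).le
          _ ≤ c (j+1) := by rw [mul_comm]; exact h2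
    -- product comparison
    have prodcomp : ∀ k, 2 ≤ k → k ≤ n-2 →
        (∏ m ∈ Finset.Icc 1 k, Aa m) ≤ 15 * ∏ m ∈ Finset.Icc (n-k+1) (n-2), Aa m := by
      intro k h2 hk
      have e1 : Finset.Icc 1 k = Finset.Ico 1 (k+1) := by rw [Finset.Ico_add_one_right_eq_Icc]
      have e2 : Finset.Icc (n-k+1) (n-2) = Finset.Ico (n-k+1) (n-1) := by
        rw [show n-1 = (n-2)+1 by omega, Finset.Ico_add_one_right_eq_Icc]
      rw [e1, e2]
      rw [← Finset.prod_Ico_consecutive (fun m => Aa m) (by omega : 1 ≤ 3) (by omega : 3 ≤ k+1)]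
      have e3 : (∏ m ∈ Finset.Ico 1 3, Aa m) = 15 := by
        rw [show (3:ℕ) = 2+1 from rfl, Finset.prod_Ico_succ_top (by omega),
          show (2:ℕ) = 1+1 from rfl, Finset.prod_Ico_succ_top (by omega),
          Finset.Ico_self, Finset.prod_empty]
        norm_num [Aa]
      rw [e3]
      refine mul_le_mul_of_nonneg_left ?_ (by norm_num)
      rw [Finset.prod_Ico_eq_prod_range, Finset.prod_Ico_eq_prod_range]
      rw [show (n-1) - (n-k+1) = k+1-3 by omega]
      refine Finset.prod_le_prod (fun i _ => (Aa_pos (by omega)).le)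
        (fun i _ => Aa_mono (by omega) (by omega))
    have Dpos : 0 < Aa (n-1) := Aa_pos (by omega)
    -- interior bound
    have interior : ∀ k, 2 ≤ k → k ≤ n-2 → c k * c (n-k) ≤ 60 * c (n-1) / Aa (n-1) := by
      intro k h2 hk
      have hQpos : 0 < ∏ m ∈ Finset.Icc (n-k+1) (n-2), Aa m :=
        Finset.prod_pos (fun i hi => Aa_pos (by
          have := (Finset.mem_Icc.mp hi).1; omega))
      have esplit : (∏ m ∈ Finset.Icc (n-k+1) (n-1), Aa m)
          = (∏ m ∈ Finset.Icc (n-k+1) (n-2), Aa m) * Aa (n-1) := by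
        rw [show n-1 = (n-2)+1 by omega, Finset.prod_Icc_succ_top (by omega : n-k+1 ≤ (n-2)+1)]
      have h5 : c (n-k) * ((∏ m ∈ Finset.Icc (n-k+1) (n-2), Aa m) * Aa (n-1)) ≤ c (n-1) := by
        rw [← esplit]
        have := chainL (n-k) (n-1) (by omega) (by omega) (by omega)
        rwa [show n-k+1 = (n-k)+1 from rfl] at this
      have hcu := chainU k (by omega)
      have hpc := prodcomp k h2 hk
      have h6 : c k ≤ 60 * ∏ m ∈ Finset.Icc (n-k+1) (n-2), Aa m := by nlinarith [hcu, hpc]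
      have hck := cpos k (by omega)
      have hcnk := cpos (n-k) (by omega)
      rw [le_div_iff₀ Dpos]
      calc c k * c (n-k) * Aa (n-1)
          ≤ (60 * ∏ m ∈ Finset.Icc (n-k+1) (n-2), Aa m) * (c (n-k) * Aa (n-1)) := by
            nlinarith [mul_pos hcnk Dpos]
        _ = 60 * (c (n-k) * ((∏ m ∈ Finset.Icc (n-k+1) (n-2), Aa m) * Aa (n-1))) := by ring
        _ ≤ 60 * c (n-1) := by nlinarith [h5]
    have hcn1 := cpos (n-1) (by omega)
    -- conv at n
    have Tn_le : (∑ k ∈ Finset.Icc 1 (n-1), c k * c (n-k)) ≤ 2 * c (n-1) := by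
      have eIcc : Finset.Icc 1 (n-1) = Finset.Ico 1 n := by
        rw [show n = (n-1)+1 by omega, Finset.Ico_add_one_right_eq_Icc]
        congr 1 <;> omega
      rw [eIcc, Finset.sum_eq_sum_Ico_succ_bot (by omega : 1 < n)]
      rw [show n = (n-1)+1 by omega, Finset.sum_Ico_succ_top (by omega : 2 ≤ n-1)]
      rw [show (n-1)+1 - (n-1) = 1 by omega, show (n-1)+1-1 = n-1 by omega]
      have hmid : (∑ k ∈ Finset.Ico 2 (n-1), c k * c ((n-1)+1-k))
          ≤ ((n-3:ℕ):ℝ) * (60 * c (n-1) / Aa (n-1)) := by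
        have hb : ∀ k ∈ Finset.Ico 2 (n-1), c k * c ((n-1)+1-k) ≤ 60 * c (n-1) / Aa (n-1) := by
          intro k hk
          obtain ⟨hk1, hk2⟩ := Finset.mem_Ico.mp hk
          rw [show (n-1)+1-k = n-k by omega]
          exact interior k hk1 (by omega)
        calc (∑ k ∈ Finset.Ico 2 (n-1), c k * c ((n-1)+1-k))
            ≤ (Finset.Ico 2 (n-1)).card • (60 * c (n-1) / Aa (n-1)) :=
              Finset.sum_le_card_nsmul _ _ _ hb
          _ = ((n-3:ℕ):ℝ) * (60 * c (n-1) / Aa (n-1)) := by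
              rw [Nat.card_Ico, nsmul_eq_mul, show n-1-2 = n-3 by omega]
      have hA120 : 120 * ((n:ℝ)-3) ≤ Aa (n-1) := by
        have hx : (10:ℝ) ≤ (n:ℝ) := by exact_mod_cast hn
        have hcast : ((n-1:ℕ):ℝ) = (n:ℝ)-1 := by
          rw [Nat.cast_sub (by omega)]; norm_num
        unfold Aa; rw [hcast]; nlinarith
      have hkey : ((n-3:ℕ):ℝ) * (60 * c (n-1) / Aa (n-1)) ≤ (1/2) * c (n-1) := by
        have hcast : ((n-3:ℕ):ℝ) = (n:ℝ)-3 := by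
          rw [Nat.cast_sub (by omega)]; norm_num
        rw [hcast, show ((n:ℝ)-3) * (60 * c (n-1) / Aa (n-1))
            = ((n:ℝ)-3) * 60 * c (n-1) / Aa (n-1) by ring,
          div_le_iff₀ Dpos]
        nlinarith [hA120, hcn1]
      have hb1 : c 1 * c (n-1) = 3/4 * c (n-1) := by rw [e1]
      have hb2 : c (n-1) * c 1 = 3/4 * c (n-1) := by rw [e1]; ring
      linarith [hmid, hkey]
    -- now the recurrence at n
    have h := hc n hn1
    have coeff_eq : ∀ k : ℕ, 1 ≤ k → k ≤ n-1 →
        (7*(n:ℝ)-7*(k:ℝ)-6)*(7*(n:ℝ)-7*(k:ℝ)-4)/2 = 2 * Aa (n-k) := by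
      intro k hk1 hk2
      have hcast : ((n-k:ℕ):ℝ) = (n:ℝ)-(k:ℝ) := by
        rw [Nat.cast_sub (by omega)]
      unfold Aa; rw [hcast]; ring
    have SgeL : ∀ k, 1 ≤ k → k ≤ n-1 →
        2 * c k ≤ ∑ i ∈ Finset.range (k+1), c i * c (k-i) := by
      intro k h1 h2
      have hsub : ({0, k} : Finset ℕ) ⊆ Finset.range (k+1) := by
        intro i hi
        simp only [Finset.mem_insert, Finset.mem_singleton] at hi
        rcases hi with rfl | rfl <;> simp [Finset.mem_range] <;> omega
      have hs := Finset.sum_le_sum_of_subset_of_nonneg hsub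
        (fun i hi _ => (mul_pos (cpos i (by
            have := Finset.mem_range.mp hi; omega))
          (cpos (k-i) (by have := Finset.mem_range.mp hi; omega))).le)
      rw [Finset.sum_pair (by omega : (0:ℕ) ≠ k)] at hs
      simp only [Nat.sub_zero, Nat.sub_self, hc0, one_mul, mul_one] at hs
      linarith
    have SleU : ∀ k, 1 ≤ k → k ≤ n-1 →
        (∑ i ∈ Finset.range (k+1), c i * c (k-i)) ≤ 5 * c k := by
      intro k h1 h2
      rcases eq_or_lt_of_le h1 with heq | h1'
      · subst heq
        have := cpos 1 (by omega)
        norm_num [Finset.sum_range_succ, hc0]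
        linarith
      · have expand : (∑ i ∈ Finset.range (k+1), c i * c (k-i))
            = c k + (∑ i ∈ Finset.Icc 1 (k-1), c i * c (k-i)) + c k := by
          rw [Finset.range_eq_Ico, Finset.sum_eq_sum_Ico_succ_bot (by omega : 0 < k+1),
            Finset.sum_Ico_succ_top (by omega : 1 ≤ k)]
          have eIk : Finset.Ico 1 k = Finset.Icc 1 (k-1) := by
            rw [show k = (k-1)+1 by omega, Finset.Ico_add_one_right_eq_Icc, Nat.add_sub_cancel]
          rw [eIk]
          simp only [Nat.sub_zero, Nat.sub_self, hc0, one_mul, mul_one]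
          ring
        have hTk := convm k (by omega) (by omega)
        have hck := cpos k (by omega)
        have hckm1 := cpos (k-1) (by omega)
        have hL := invL k (by omega) (by omega)
        have hA34 := Aa_ge (show 1 ≤ k by omega)
        have hckm : c (k-1) ≤ (4/3) * c k := by nlinarith
        rw [expand]
        linarith
    have Spos : ∀ k, k ≤ n-1 → 0 ≤ ∑ i ∈ Finset.range (k+1), c i * c (k-i) := by
      intro k h2
      refine Finset.sum_nonneg (fun i hi => ?_)
      have := Finset.mem_range.mp hi
      exact (mul_pos (cpos i (by omega)) (cpos (k-i) (by omega))).le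
    -- termwise lower
    have sumL : (∑ k ∈ Finset.Icc 1 (n-1), c k * c (n-k)) ≤
        ∑ k ∈ Finset.Icc 1 (n-1),
          (7*(n:ℝ)-7*(k:ℝ)-6)*(7*(n:ℝ)-7*(k:ℝ)-4)/2 * c (n-k-1)
            * ∑ i ∈ Finset.range (k+1), c i * c (k-i) := by
      refine Finset.sum_le_sum (fun k hk => ?_)
      obtain ⟨h1, h2⟩ := Finset.mem_Icc.mp hk
      rw [coeff_eq k h1 h2]
      have hU2 := invU2 (n-k) (by omega) (by omega)
      have hSk := SgeL k h1 h2
      have hck := cpos k (by omega)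
      have hcnk := cpos (n-k) (by omega)
      have hcnk1 : 0 < c (n-k-1) := by
        have : c ((n-k)-1) = c (n-k-1) := rfl
        exact cpos (n-k-1) (by omega)
      have hA : 0 < Aa (n-k) := Aa_pos (by omega)
      have key1 : c k * c (n-k) ≤ c k * (2 * (Aa (n-k) * c (n-k-1))) := by
        have : c ((n-k)-1) = c (n-k-1) := rfl
        rw [this] at hU2
        exact mul_le_mul_of_nonneg_left hU2 hck.le
      nlinarith [mul_le_mul_of_nonneg_left hSk (mul_pos hA hcnk1).le,
        mul_pos (mul_pos hA hcnk1) hck]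
    -- termwise upper
    have sumU : (∑ k ∈ Finset.Icc 1 (n-1),
          (7*(n:ℝ)-7*(k:ℝ)-6)*(7*(n:ℝ)-7*(k:ℝ)-4)/2 * c (n-k-1)
            * ∑ i ∈ Finset.range (k+1), c i * c (k-i))
        ≤ 10 * ∑ k ∈ Finset.Icc 1 (n-1), c k * c (n-k) := by
      rw [Finset.mul_sum]
      refine Finset.sum_le_sum (fun k hk => ?_)
      obtain ⟨h1, h2⟩ := Finset.mem_Icc.mp hk
      rw [coeff_eq k h1 h2]
      have hL := invL (n-k) (by omega) (by omega)
      have hS5 := SleU k h1 h2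
      have hSnn := Spos k h2
      have hck := cpos k (by omega)
      have hcnk := cpos (n-k) (by omega)
      have hcnk1 : 0 < c (n-k-1) := cpos (n-k-1) (by omega)
      have hA : 0 < Aa (n-k) := Aa_pos (by omega)
      have key1 : Aa (n-k) * c (n-k-1) ≤ c (n-k) := hL
      nlinarith [mul_le_mul_of_nonneg_right key1 hSnn,
        mul_le_mul_of_nonneg_left hS5 hcnk.le]
    have Tnn : 0 ≤ ∑ k ∈ Finset.Icc 1 (n-1), c k * c (n-k) := by
      refine Finset.sum_nonneg (fun k hk => ?_)
      obtain ⟨h1, h2⟩ := Finset.mem_Icc.mp hk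
      exact (mul_pos (cpos k (by omega)) (cpos (n-k) (by omega))).le
    have hAa_def : (7*(n:ℝ)-6)*(7*(n:ℝ)-4)/4 = Aa n := rfl
    rw [hAa_def] at h
    have lowern : Aa n * c (n-1) ≤ c n := by linarith [h, sumL]
    have hposn : 0 < c n := lt_of_lt_of_le (mul_pos (Aa_pos hn1) hcn1) lowern
    have hAn : 10 * (n:ℝ)^2 ≤ Aa n := by
      have hx : (10:ℝ) ≤ (n:ℝ) := by exact_mod_cast hn
      unfold Aa; nlinarith
    have uppern : c n ≤ (1+1/((n:ℝ))^2) * (Aa n * c (n-1)) := by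
      have h10 : 10 * c (n-1) ≤ 1/((n:ℝ))^2 * (Aa n * c (n-1)) := by
        rw [one_div, inv_mul_eq_div, le_div_iff₀ (by positivity : (0:ℝ) < (n:ℝ)^2)]
        nlinarith [hAn, hcn1]
      nlinarith [h, sumU, Tn_le, Tnn, h10, mul_pos (Aa_pos hn1) hcn1]
    exact ⟨hposn, fun _ => ⟨lowern, uppern⟩, fun _ => Tn_le⟩

theorem c_pos (c : ℕ → ℝ)
    (hc0 : c 0 = 1)
    (hc : ∀ n : ℕ, 1 ≤ n → c n =
      (7 * (n : ℝ) - 6) * (7 * (n : ℝ) - 4) / 4 * c (n - 1)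
      + (1 / 2) * ∑ k ∈ Finset.Icc 1 (n - 1),
          (7 * (n : ℝ) - 7 * (k : ℝ) - 6) * (7 * (n : ℝ) - 7 * (k : ℝ) - 4) / 2
            * c (n - k - 1) * ∑ i ∈ Finset.range (k + 1), c i * c (k - i)
      - (1 / 2) * ∑ k ∈ Finset.Icc 1 (n - 1), c k * c (n - k)) :
    ∀ n : ℕ, 0 < c n := fun n => (master c hc0 hc n).1
end

section
/- Suppose n ≥ 5 and there exist A₁, A₂ > 0 with A₁ ≤ b_k ≤ A₂ for all 0 ≤ k ≤ n−1. Then |Q_n| ≤ B/n² where B = 0.6·A₂² + 0.0144·A₂³. -/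
private lemma d_pos (d : ℕ → ℝ) (hd0 : d 0 = 1)
    (hd : ∀ m : ℕ, 1 ≤ m → d m = (7 * (m : ℝ) - 6) * (7 * (m : ℝ) - 4) / 4 * d (m - 1)) :
    ∀ m, 0 < d m := by
  intro m
  induction m with
  | zero => rw [hd0]; norm_num
  | succ k ih =>
    rw [hd (k + 1) (by omega)]
    simp only [Nat.add_sub_cancel]
    have hk : (0:ℝ) ≤ (k : ℝ) := Nat.cast_nonneg k
    push_cast
    have h1 : (0:ℝ) < 7 * (k:ℝ) + 1 := by linarith
    have h2 : (0:ℝ) < 7 * (k:ℝ) + 3 := by linarith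
    nlinarith [mul_pos (mul_pos h1 h2) ih]

private lemma d_step (d : ℕ → ℝ) (hd0 : d 0 = 1)
    (hd : ∀ m : ℕ, 1 ≤ m → d m = (7 * (m : ℝ) - 6) * (7 * (m : ℝ) - 4) / 4 * d (m - 1))
    (a b : ℕ) (hab : a ≤ b) : d (a + 1) * d b ≤ d a * d (b + 1) := by
  have hp := d_pos d hd0 hd
  rw [hd (a + 1) (by omega), hd (b + 1) (by omega)]
  simp only [Nat.add_sub_cancel]
  have hab' : (a : ℝ) ≤ (b : ℝ) := Nat.cast_le.mpr hab
  have ha : (0:ℝ) ≤ (a : ℝ) := Nat.cast_nonneg a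
  push_cast
  have hR : (7*(a:ℝ)+1)*(7*(a:ℝ)+3) ≤ (7*(b:ℝ)+1)*(7*(b:ℝ)+3) := by nlinarith
  have key := mul_le_mul_of_nonneg_right hR (mul_pos (hp a) (hp b)).le
  nlinarith [key]

private lemma d_gen (d : ℕ → ℝ) (hd0 : d 0 = 1)
    (hd : ∀ m : ℕ, 1 ≤ m → d m = (7 * (m : ℝ) - 6) * (7 * (m : ℝ) - 4) / 4 * d (m - 1))
    (c : ℕ) : ∀ i : ℕ, c ≤ i → ∀ j : ℕ, i ≤ j → d i * d j ≤ d c * d (i + j - c) := by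
  intro i hci
  induction i, hci using Nat.le_induction with
  | base =>
    intro j hj
    have e : c + j - c = j := by omega
    rw [e]
  | succ i hi ih =>
    intro j hj
    have h1 : d (i + 1) * d j ≤ d i * d (j + 1) := d_step d hd0 hd i j (by omega)
    have h2 := ih (j + 1) (by omega)
    have e : i + (j + 1) - c = i + 1 + j - c := by omega
    rw [e] at h2
    linarith

private lemma d_gen' (d : ℕ → ℝ) (hd0 : d 0 = 1)
    (hd : ∀ m : ℕ, 1 ≤ m → d m = (7 * (m : ℝ) - 6) * (7 * (m : ℝ) - 4) / 4 * d (m - 1))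
    (c i j : ℕ) (hci : c ≤ i) (hcj : c ≤ j) : d i * d j ≤ d c * d (i + j - c) := by
  rcases le_total i j with h | h
  · exact d_gen d hd0 hd c i hci j h
  · have h2 := d_gen d hd0 hd c j hcj i h
    rw [mul_comm]
    have e : j + i - c = i + j - c := by omega
    rwa [e] at h2

set_option maxHeartbeats 2000000 in
theorem Qn_bound (d b T' T Qp Qm : ℕ → ℝ) (n : ℕ) (A₁ A₂ : ℝ)
    (hd0 : d 0 = 1)
    (hd : ∀ m : ℕ, 1 ≤ m → d m = (7 * (m : ℝ) - 6) * (7 * (m : ℝ) - 4) / 4 * d (m - 1))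
    (hT' : ∀ k : ℕ, T' k = ∑ i ∈ Finset.Icc 1 (k - 1), b i * b (k - i) * d i * d (k - i))
    (hT : ∀ k : ℕ, T k = 2 * d k * b k + T' k)
    (hQp : ∀ m : ℕ, Qp m = (1 / (2 * d m)) * ∑ k ∈ Finset.Icc 1 (m - 1),
      (7 * (m : ℝ) - 7 * (k : ℝ) - 6) * (7 * (m : ℝ) - 7 * (k : ℝ) - 4) / 2
        * b (m - k - 1) * d (m - k - 1) * T k)
    (hQm : ∀ m : ℕ, Qm m = T' m / (2 * d m))
    (hn : 5 ≤ n) (hA₁ : 0 < A₁) (hA₂ : 0 < A₂)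
    (hbk : ∀ k : ℕ, k ≤ n - 1 → A₁ ≤ b k ∧ b k ≤ A₂) :
    |Qp n - Qm n| ≤ (0.6 * A₂ ^ 2 + 0.0144 * A₂ ^ 3) / (n : ℝ) ^ 2 := by
  have hp := d_pos d hd0 hd
  have hx : (5:ℝ) ≤ (n:ℝ) := by exact_mod_cast hn
  have hx0 : (0:ℝ) < (n:ℝ) := by linarith
  have hb1 : ∀ k, k ≤ n - 1 → 0 < b k := fun k hk => lt_of_lt_of_le hA₁ (hbk k hk).1
  have hb2 : ∀ k, k ≤ n - 1 → b k ≤ A₂ := fun k hk => (hbk k hk).2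
  have hd1 : d 1 = 3/4 := by rw [hd 1 (by omega)]; norm_num [hd0]
  have hd2 : d 2 = 15 := by rw [hd 2 (by omega)]; norm_num [hd1]
  have hP2 : d (n-1) = (7*(n:ℝ)-13)*(7*(n:ℝ)-11)/4 * d (n-2) := by
    have h := hd (n-1) (by omega)
    have e : n - 1 - 1 = n - 2 := by omega
    rw [e] at h
    have ec : ((n-1:ℕ):ℝ) = (n:ℝ) - 1 := by
      rw [Nat.cast_sub (by omega)]; norm_num
    rw [ec] at h
    rw [h]; ring
  have hdn : d n = (7*(n:ℝ)-6)*(7*(n:ℝ)-4)*((7*(n:ℝ)-13)*(7*(n:ℝ)-11))/16 * d (n-2) := by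
    rw [hd n (by omega), hP2]; ring
  -- S2 bound
  have hS2 : (∑ k ∈ Finset.Icc 1 (n-1), d k * d (n-k))
      ≤ 2*(d 1 * d (n-1)) + ((n:ℝ)-3)*(d 2 * d (n-2)) := by
    have hset : Finset.Icc 1 (n-1) = insert 1 (insert (n-1) (Finset.Icc 2 (n-2))) := by
      ext k; simp only [Finset.mem_Icc, Finset.mem_insert]; omega
    rw [hset, Finset.sum_insert (by simp only [Finset.mem_insert, Finset.mem_Icc]; omega),
        Finset.sum_insert (by simp only [Finset.mem_Icc]; omega)]
    have t2 : d (n-1) * d (n-(n-1)) = d 1 * d (n-1) := by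
      have e : n-(n-1) = 1 := by omega
      rw [e]; ring
    have t3 : (∑ k ∈ Finset.Icc 2 (n-2), d k * d (n-k)) ≤ ((n:ℝ)-3)*(d 2 * d (n-2)) := by
      have hb := Finset.sum_le_card_nsmul (Finset.Icc 2 (n-2)) (fun k => d k * d (n-k))
          (d 2 * d (n-2)) (by
        intro k hk
        obtain ⟨h2, h3⟩ := Finset.mem_Icc.mp hk
        have hg := d_gen' d hd0 hd 2 k (n-k) h2 (by omega)
        have e : k + (n-k) - 2 = n - 2 := by omega
        rwa [e] at hg)
      have hcard : (Finset.Icc 2 (n-2)).card = n - 3 := by rw [Nat.card_Icc]; omega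
      rw [hcard, nsmul_eq_mul] at hb
      have ec : ((n-3:ℕ):ℝ) = (n:ℝ)-3 := by rw [Nat.cast_sub (by omega)]; norm_num
      rw [ec] at hb
      exact hb
    linarith [t3, t2.le, t2.ge]
  -- S3 bound
  have hS3 : (∑ k ∈ Finset.Icc 1 (n-1), d (n-k) * (∑ i ∈ Finset.Icc 1 (k-1), d i * d (k-i)))
      ≤ (n:ℝ)*((n:ℝ)*((9/16)*d (n-2))) := by
    have hterm : ∀ k ∈ Finset.Icc 1 (n-1),
        d (n-k) * (∑ i ∈ Finset.Icc 1 (k-1), d i * d (k-i)) ≤ (n:ℝ)*((9/16)*d (n-2)) := by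
      intro k hk
      obtain ⟨hk1, hk2⟩ := Finset.mem_Icc.mp hk
      rcases Nat.lt_or_ge k 2 with hk' | hk'
      · have e : k = 1 := by omega
        subst e
        simp only [Nat.sub_self, Finset.Icc_eq_empty_of_lt (by norm_num : (1:ℕ) > 0)]
        simp only [Finset.sum_empty, mul_zero]
        exact mul_nonneg hx0.le (by nlinarith [hp (n-2)])
      · have hin : (∑ i ∈ Finset.Icc 1 (k-1), d i * d (k-i)) ≤ ((k-1:ℕ):ℝ) * (d 1 * d (k-1)) := by
          have hb := Finset.sum_le_card_nsmul (Finset.Icc 1 (k-1)) (fun i => d i * d (k-i))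
              (d 1 * d (k-1)) (by
            intro i hi
            obtain ⟨hi1, hi2⟩ := Finset.mem_Icc.mp hi
            have hg := d_gen' d hd0 hd 1 i (k-i) hi1 (by omega)
            have e : i + (k-i) - 1 = k - 1 := by omega
            rwa [e] at hg)
          have hcard : (Finset.Icc 1 (k-1)).card = k - 1 := by rw [Nat.card_Icc]; omega
          rwa [hcard, nsmul_eq_mul] at hb
        have hB : d (k-1) * d (n-k) ≤ d 1 * d (n-2) := by
          have hg := d_gen' d hd0 hd 1 (k-1) (n-k) (by omega) (by omega)
          have e : (k-1) + (n-k) - 1 = n - 2 := by omega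
          rwa [e] at hg
        have hkn : ((k-1:ℕ):ℝ) ≤ (n:ℝ) := by
          have : ((k-1:ℕ):ℝ) ≤ (n:ℕ) := Nat.cast_le.mpr (by omega)
          exact_mod_cast this
        calc d (n-k) * (∑ i ∈ Finset.Icc 1 (k-1), d i * d (k-i))
            ≤ d (n-k) * (((k-1:ℕ):ℝ) * (d 1 * d (k-1))) :=
              mul_le_mul_of_nonneg_left hin (hp _).le
          _ = ((k-1:ℕ):ℝ) * d 1 * (d (k-1) * d (n-k)) := by ring
          _ ≤ ((k-1:ℕ):ℝ) * d 1 * (d 1 * d (n-2)) := by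
              apply mul_le_mul_of_nonneg_left hB
              exact mul_nonneg (Nat.cast_nonneg _) (hp 1).le
          _ ≤ (n:ℝ)*((9/16)*d (n-2)) := by
              rw [hd1]
              nlinarith [mul_le_mul_of_nonneg_right hkn (hp (n-2)).le, hp (n-2), Nat.cast_nonneg (α := ℝ) (k-1)]
    have hb := Finset.sum_le_card_nsmul (Finset.Icc 1 (n-1)) _ ((n:ℝ)*((9/16)*d (n-2))) hterm
    have hcard : (Finset.Icc 1 (n-1)).card = n - 1 := by rw [Nat.card_Icc]; omega
    rw [hcard, nsmul_eq_mul] at hb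
    have hkn : ((n-1:ℕ):ℝ) ≤ (n:ℝ) := by
      have : ((n-1:ℕ):ℝ) ≤ ((n:ℕ):ℝ) := Nat.cast_le.mpr (by omega)
      exact_mod_cast this
    have hnn : (0:ℝ) ≤ (n:ℝ)*((9/16)*d (n-2)) := mul_nonneg hx0.le (by nlinarith [hp (n-2)])
    linarith [hb, mul_le_mul_of_nonneg_right hkn hnn]
  -- numeric conversions
  have key2 : 6*((7*(n:ℝ)-13)*(7*(n:ℝ)-11))*(n:ℝ)^2 + 240*((n:ℝ)-3)*(n:ℝ)^2
      ≤ (3/10)*((7*(n:ℝ)-6)*(7*(n:ℝ)-4)*((7*(n:ℝ)-13)*(7*(n:ℝ)-11))) := by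
    nlinarith [sq_nonneg ((n:ℝ)-5), sq_nonneg (n:ℝ), mul_nonneg (mul_nonneg (sub_nonneg.mpr hx) (sub_nonneg.mpr hx)) (sub_nonneg.mpr hx), sq_nonneg ((n:ℝ)*((n:ℝ)-5)), mul_nonneg (sq_nonneg ((n:ℝ)-5)) (sub_nonneg.mpr hx)]
  have key3 : 9*(n:ℝ)^4 ≤ (9/625)*((7*(n:ℝ)-6)*(7*(n:ℝ)-4)*((7*(n:ℝ)-13)*(7*(n:ℝ)-11))) := by
    nlinarith [sq_nonneg ((n:ℝ)-5), sq_nonneg (n:ℝ), sq_nonneg ((n:ℝ)*((n:ℝ)-5)), mul_nonneg (sq_nonneg ((n:ℝ)-5)) (sub_nonneg.mpr hx), mul_nonneg (mul_nonneg (sub_nonneg.mpr hx) (sub_nonneg.mpr hx)) (sub_nonneg.mpr hx)]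
  have hS2c : (∑ k ∈ Finset.Icc 1 (n-1), d k * d (n-k)) * (n:ℝ)^2 ≤ (3/10) * d n := by
    have h0 := mul_le_mul_of_nonneg_right hS2 (sq_nonneg (n:ℝ))
    rw [hd1, hd2, hP2] at h0
    have h1 : (2*(3/4*((7*(n:ℝ)-13)*(7*(n:ℝ)-11)/4 * d (n-2))) + ((n:ℝ)-3)*(15*d (n-2)))*(n:ℝ)^2
        ≤ (3/10)*d n := by
      rw [hdn]
      linarith [mul_le_mul_of_nonneg_right key2 (hp (n-2)).le]
    linarith
  have hS3c : (∑ k ∈ Finset.Icc 1 (n-1), d (n-k) * (∑ i ∈ Finset.Icc 1 (k-1), d i * d (k-i))) * (n:ℝ)^2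
      ≤ (9/625) * d n := by
    have h0 := mul_le_mul_of_nonneg_right hS3 (sq_nonneg (n:ℝ))
    have h1 : ((n:ℝ)*((n:ℝ)*((9/16)*d (n-2))))*(n:ℝ)^2 ≤ (9/625)*d n := by
      rw [hdn]
      linarith [mul_le_mul_of_nonneg_right key3 (hp (n-2)).le]
    linarith
  -- bounds on T' k and T k
  have hT'bnd : ∀ k, k ≤ n - 1 →
      0 ≤ T' k ∧ T' k ≤ A₂^2 * ∑ i ∈ Finset.Icc 1 (k-1), d i * d (k-i) := by
    intro k h2
    rw [hT' k]
    constructor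
    · apply Finset.sum_nonneg
      intro i hi
      obtain ⟨hi1, hi2⟩ := Finset.mem_Icc.mp hi
      have e1 := hb1 i (by omega)
      have e3 := hb1 (k-i) (by omega)
      have p1 := hp i; have p2 := hp (k-i)
      positivity
    · rw [Finset.mul_sum]
      apply Finset.sum_le_sum
      intro i hi
      obtain ⟨hi1, hi2⟩ := Finset.mem_Icc.mp hi
      have e1 := hb1 i (by omega); have e2 := hb2 i (by omega)
      have e3 := hb1 (k-i) (by omega); have e4 := hb2 (k-i) (by omega)
      have p1 := hp i; have p2 := hp (k-i)
      have hbb : b i * b (k-i) ≤ A₂ * A₂ := mul_le_mul e2 e4 e3.le hA₂.le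
      nlinarith [mul_le_mul_of_nonneg_right hbb (mul_pos p1 p2).le]
  have hT'bndn : 0 ≤ T' n ∧ T' n ≤ A₂^2 * ∑ k ∈ Finset.Icc 1 (n-1), d k * d (n-k) := by
    rw [hT' n]
    constructor
    · apply Finset.sum_nonneg
      intro i hi
      obtain ⟨hi1, hi2⟩ := Finset.mem_Icc.mp hi
      have e1 := hb1 i (by omega)
      have e3 := hb1 (n-i) (by omega)
      have p1 := hp i; have p2 := hp (n-i)
      positivity
    · rw [Finset.mul_sum]
      apply Finset.sum_le_sum
      intro i hi
      obtain ⟨hi1, hi2⟩ := Finset.mem_Icc.mp hi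
      have e1 := hb1 i (by omega); have e2 := hb2 i (by omega)
      have e3 := hb1 (n-i) (by omega); have e4 := hb2 (n-i) (by omega)
      have p1 := hp i; have p2 := hp (n-i)
      have hbb : b i * b (n-i) ≤ A₂ * A₂ := mul_le_mul e2 e4 e3.le hA₂.le
      nlinarith [mul_le_mul_of_nonneg_right hbb (mul_pos p1 p2).le]
  have hTbnd : ∀ k, 1 ≤ k → k ≤ n - 1 →
      0 ≤ T k ∧ T k ≤ A₂*(2*d k) + A₂^2 * ∑ i ∈ Finset.Icc 1 (k-1), d i * d (k-i) := by
    intro k h1 h2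
    obtain ⟨u1, u2⟩ := hT'bnd k h2
    rw [hT k]
    have e1 := hb1 k h2
    have e2 := hb2 k h2
    have p1 := hp k
    constructor
    · nlinarith
    · nlinarith
  -- rewrite Qp n
  have hQpn : Qp n = (1/(2*d n)) * ∑ k ∈ Finset.Icc 1 (n-1), 2*(d (n-k) * (b (n-k-1) * T k)) := by
    rw [hQp n]
    congr 1
    apply Finset.sum_congr rfl
    intro k hk
    obtain ⟨hk1, hk2⟩ := Finset.mem_Icc.mp hk
    rw [hd (n-k) (by omega)]
    have ec : ((n-k:ℕ):ℝ) = (n:ℝ) - (k:ℝ) := Nat.cast_sub (by omega)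
    rw [ec]
    ring
  -- sum bound for Qp
  have hsum2 : (∑ k ∈ Finset.Icc 1 (n-1), 2*(d (n-k) * (b (n-k-1) * T k)))
      ≤ 4*A₂^2*(∑ k ∈ Finset.Icc 1 (n-1), d k * d (n-k))
        + 2*A₂^3*(∑ k ∈ Finset.Icc 1 (n-1), d (n-k) * (∑ i ∈ Finset.Icc 1 (k-1), d i * d (k-i))) := by
    have step : ∀ k ∈ Finset.Icc 1 (n-1), 2*(d (n-k) * (b (n-k-1) * T k))
        ≤ 4*A₂^2*(d k * d (n-k)) + 2*A₂^3*(d (n-k) * (∑ i ∈ Finset.Icc 1 (k-1), d i * d (k-i))) := by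
      intro k hk
      obtain ⟨hk1, hk2⟩ := Finset.mem_Icc.mp hk
      obtain ⟨u1, u2⟩ := hTbnd k hk1 hk2
      have e2 := hb2 (n-k-1) (by omega)
      have e1 := hb1 (n-k-1) (by omega)
      have hbt : b (n-k-1) * T k ≤ A₂ * (A₂*(2*d k) + A₂^2 * ∑ i ∈ Finset.Icc 1 (k-1), d i * d (k-i)) :=
        mul_le_mul e2 u2 u1 hA₂.le
      have h3 := mul_le_mul_of_nonneg_left hbt (hp (n-k)).le
      nlinarith [h3]
    calc (∑ k ∈ Finset.Icc 1 (n-1), 2*(d (n-k) * (b (n-k-1) * T k)))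
        ≤ ∑ k ∈ Finset.Icc 1 (n-1), (4*A₂^2*(d k * d (n-k))
            + 2*A₂^3*(d (n-k) * (∑ i ∈ Finset.Icc 1 (k-1), d i * d (k-i)))) :=
          Finset.sum_le_sum step
      _ = _ := by rw [Finset.sum_add_distrib, ← Finset.mul_sum, ← Finset.mul_sum]
  have hsumnn : 0 ≤ ∑ k ∈ Finset.Icc 1 (n-1), 2*(d (n-k) * (b (n-k-1) * T k)) := by
    apply Finset.sum_nonneg
    intro k hk
    obtain ⟨hk1, hk2⟩ := Finset.mem_Icc.mp hk
    obtain ⟨u1, _⟩ := hTbnd k hk1 hk2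
    have e1 := hb1 (n-k-1) (by omega)
    have p1 := hp (n-k)
    positivity
  have hdnpos := hp n
  -- final bounds
  have hQple : Qp n ≤ (0.6 * A₂ ^ 2 + 0.0144 * A₂ ^ 3) / (n : ℝ) ^ 2 := by
    rw [hQpn, one_div, inv_mul_eq_div, div_le_div_iff₀ (by positivity) (by positivity)]
    have m1 := mul_le_mul_of_nonneg_right hsum2 (sq_nonneg (n:ℝ))
    have m2 := mul_le_mul_of_nonneg_left hS2c (by positivity : (0:ℝ) ≤ 4*A₂^2)
    have m3 := mul_le_mul_of_nonneg_left hS3c (by positivity : (0:ℝ) ≤ 2*A₂^3)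
    nlinarith [m1, m2, m3]
  have hQp0 : 0 ≤ Qp n := by
    rw [hQpn]
    exact mul_nonneg (by positivity) hsumnn
  have hQmle : Qm n ≤ (0.6 * A₂ ^ 2 + 0.0144 * A₂ ^ 3) / (n : ℝ) ^ 2 := by
    rw [hQm n, div_le_div_iff₀ (by positivity) (by positivity)]
    have m1 := mul_le_mul_of_nonneg_right hT'bndn.2 (sq_nonneg (n:ℝ))
    have m2 := mul_le_mul_of_nonneg_left hS2c (by positivity : (0:ℝ) ≤ A₂^2)
    nlinarith [m1, m2, mul_pos (mul_pos hA₂ (mul_pos hA₂ hA₂)) hdnpos]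
  have hQm0 : 0 ≤ Qm n := by
    rw [hQm n]
    exact div_nonneg hT'bndn.1 (by positivity)
  rw [abs_le]
  constructor
  · linarith
  · linarith
end

section
/- Under the hypotheses A₁ ≤ b_k ≤ A₂ for 0 ≤ k ≤ n−1 with A₁ > 0, the bound 0 < T'_k ≤ 0.24 · A₂² · d_k / k² holds for all 2 ≤ k ≤ n−1, where T'_k = Σ_{i=1}^{k-1} b_i b_{k-i} d_i d_{k-i}. -/
theorem Tprime_bound (d b T' : ℕ → ℝ) (n : ℕ) (A₁ A₂ : ℝ)
    (hd0 : d 0 = 1)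
    (hd : ∀ m : ℕ, 1 ≤ m → d m = (7 * (m : ℝ) - 6) * (7 * (m : ℝ) - 4) / 4 * d (m - 1))
    (hT' : ∀ k : ℕ, T' k = ∑ i ∈ Finset.Icc 1 (k - 1), b i * b (k - i) * d i * d (k - i))
    (hA₁ : 0 < A₁)
    (hbk : ∀ k : ℕ, k ≤ n - 1 → A₁ ≤ b k ∧ b k ≤ A₂) :
    ∀ k : ℕ, 2 ≤ k → k ≤ n - 1 →
      0 < T' k ∧ T' k ≤ 0.24 * A₂ ^ 2 * d k / (k : ℝ) ^ 2 := by
  -- positivity of d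
  have dpos : ∀ m : ℕ, 0 < d m := by
    intro m
    induction m with
    | zero => simp [hd0]
    | succ m ih =>
      rw [hd (m + 1) (by omega)]
      simp only [Nat.add_sub_cancel]
      have hm : (0 : ℝ) ≤ (m : ℝ) := Nat.cast_nonneg m
      push_cast
      have h1 : (0:ℝ) < 7 * (m:ℝ) + 1 := by linarith
      have h2 : (0:ℝ) < 7 * (m:ℝ) + 3 := by linarith
      nlinarith [mul_pos (mul_pos h1 h2) ih]
  -- single step of log-convexity
  have step : ∀ i j : ℕ, 1 ≤ i → i ≤ j + 1 → d i * d j ≤ d (i - 1) * d (j + 1) := by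
    intro i j hi hij
    rw [hd i hi, hd (j + 1) (by omega)]
    simp only [Nat.add_sub_cancel]
    have h1 : (0 : ℝ) < d (i - 1) := dpos _
    have h2 : (0 : ℝ) < d j := dpos _
    have hci : (i : ℝ) ≤ (j : ℝ) + 1 := by exact_mod_cast hij
    have hci1 : (1 : ℝ) ≤ (i : ℝ) := by exact_mod_cast hi
    have rle : (7 * (i : ℝ) - 6) * (7 * (i : ℝ) - 4) / 4
        ≤ (7 * ((j : ℝ) + 1) - 6) * (7 * ((j : ℝ) + 1) - 4) / 4 := by
      nlinarith [mul_nonneg (sub_nonneg.2 hci) (by nlinarith : (0:ℝ) ≤ 49 * ((i:ℝ) + (j:ℝ) + 1) - 70)]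
    push_cast
    nlinarith [mul_le_mul_of_nonneg_right rle (mul_pos h1 h2).le]
  -- iterated convexity: shift mass to index 2
  have dconv2 : ∀ t j : ℕ, 2 + t ≤ j → d (2 + t) * d j ≤ d 2 * d (t + j) := by
    intro t
    induction t with
    | zero => intro j _; simp
    | succ t ih =>
      intro j hj
      have h1 : d (2 + (t + 1)) * d j ≤ d (2 + t) * d (j + 1) := by
        have := step (2 + (t + 1)) j (by omega) (by omega)
        simpa using this
      have h2 := ih (j + 1) (by omega)
      calc d (2 + (t + 1)) * d j ≤ d (2 + t) * d (j + 1) := h1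
        _ ≤ d 2 * d (t + (j + 1)) := h2
        _ = d 2 * d (t + 1 + j) := by ring_nf
  have dconv : ∀ i j : ℕ, 2 ≤ i → i ≤ j → d i * d j ≤ d 2 * d (i + j - 2) := by
    intro i j h2i hij
    have h := dconv2 (i - 2) j (by omega)
    have e1 : 2 + (i - 2) = i := by omega
    have e2 : i - 2 + j = i + j - 2 := by omega
    rw [e1, e2] at h
    exact h
  have hd1 : d 1 = 3 / 4 := by
    rw [hd 1 le_rfl]; norm_num [hd0]
  have hd2 : d 2 = 15 := by
    rw [hd 2 (by omega)]; norm_num [hd1]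
  intro k hk2 hkn
  -- bounds on b over the relevant range
  have hbrange : ∀ i : ℕ, i ≤ k - 1 → A₁ ≤ b i ∧ b i ≤ A₂ := by
    intro i hi
    exact hbk i (by omega)
  have hA2 : 0 < A₂ := lt_of_lt_of_le hA₁ (le_trans (hbrange 1 (by omega)).1 (hbrange 1 (by omega)).2)
  -- positivity of T' k
  have hpos : 0 < T' k := by
    rw [hT' k]
    apply Finset.sum_pos
    · intro i hi
      rw [Finset.mem_Icc] at hi
      have hbi := hbrange i (by omega)
      have hbki := hbrange (k - i) (by omega)
      have hp1 : 0 < b i := lt_of_lt_of_le hA₁ hbi.1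
      have hp2 : 0 < b (k - i) := lt_of_lt_of_le hA₁ hbki.1
      exact mul_pos (mul_pos (mul_pos hp1 hp2) (dpos i)) (dpos (k - i))
    · exact ⟨1, by rw [Finset.mem_Icc]; omega⟩
  refine ⟨hpos, ?_⟩
  -- bound each term by A₂^2 * d i * d (k-i)
  have hterm : ∀ i ∈ Finset.Icc 1 (k - 1),
      b i * b (k - i) * d i * d (k - i) ≤ A₂ ^ 2 * (d i * d (k - i)) := by
    intro i hi
    rw [Finset.mem_Icc] at hi
    have hbi := hbrange i (by omega)
    have hbki := hbrange (k - i) (by omega)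
    have hbb : b i * b (k - i) ≤ A₂ ^ 2 := by
      have h1 : 0 ≤ b (k - i) := le_of_lt (lt_of_lt_of_le hA₁ hbki.1)
      have h2 : 0 ≤ A₂ := hA2.le
      calc b i * b (k - i) ≤ A₂ * A₂ := mul_le_mul hbi.2 hbki.2 h1 h2
        _ = A₂ ^ 2 := by ring
    calc b i * b (k - i) * d i * d (k - i) = (b i * b (k - i)) * (d i * d (k - i)) := by ring
      _ ≤ A₂ ^ 2 * (d i * d (k - i)) :=
        mul_le_mul_of_nonneg_right hbb (mul_pos (dpos i) (dpos (k - i))).le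
  have hsum : T' k ≤ A₂ ^ 2 * ∑ i ∈ Finset.Icc 1 (k - 1), d i * d (k - i) := by
    rw [hT' k, Finset.mul_sum]
    exact Finset.sum_le_sum hterm
  -- now bound S := ∑ d i * d (k - i)
  rcases eq_or_lt_of_le hk2 with hk2' | hk3
  · -- k = 2
    subst hk2'
    have : (Finset.Icc 1 1 : Finset ℕ) = {1} := rfl
    rw [hT' 2]
    norm_num [this, hd1]
    have hb1 := hbrange 1 (by omega)
    have hb0 : 0 ≤ b 1 := le_of_lt (lt_of_lt_of_le hA₁ hb1.1)
    have hbb : b 1 * b 1 ≤ A₂ ^ 2 := by nlinarith [hb1.2]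
    rw [hd 2 (by omega)]
    norm_num [hd1]
    nlinarith [hbb]
  · -- k ≥ 3
    have hk3' : 3 ≤ k := hk3
    have hsplit : Finset.Icc 1 (k - 1) =
        insert 1 (insert (k - 1) (Finset.Icc 2 (k - 2))) := by
      ext x
      simp only [Finset.mem_Icc, Finset.mem_insert]
      omega
    have h1notin : (1 : ℕ) ∉ insert (k - 1) (Finset.Icc 2 (k - 2)) := by
      simp only [Finset.mem_insert, Finset.mem_Icc]
      omega
    have hk1notin : (k - 1 : ℕ) ∉ Finset.Icc 2 (k - 2) := by
      simp only [Finset.mem_Icc]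
      omega
    have hmid : ∀ i ∈ Finset.Icc 2 (k - 2), d i * d (k - i) ≤ d 2 * d (k - 2) := by
      intro i hi
      rw [Finset.mem_Icc] at hi
      rcases le_or_gt i (k - i) with h | h
      · have := dconv i (k - i) (by omega) h
        have e : i + (k - i) - 2 = k - 2 := by omega
        rwa [e] at this
      · have := dconv (k - i) i (by omega) (le_of_lt h)
        have e : k - i + i - 2 = k - 2 := by omega
        rw [e] at this
        linarith [this, mul_comm (d (k - i)) (d i)]
    have hScard : (Finset.Icc 2 (k - 2)).card = k - 3 := by
      rw [Nat.card_Icc]; omega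
    have hmidsum : ∑ i ∈ Finset.Icc 2 (k - 2), d i * d (k - i)
        ≤ ((k : ℝ) - 3) * (d 2 * d (k - 2)) := by
      have := Finset.sum_le_card_nsmul (Finset.Icc 2 (k - 2))
        (fun i => d i * d (k - i)) (d 2 * d (k - 2)) hmid
      rw [hScard] at this
      have hc : ((k - 3 : ℕ) : ℝ) = (k : ℝ) - 3 := by
        have : (3 : ℕ) ≤ k := hk3'
        push_cast [Nat.cast_sub this]
        ring
      rw [nsmul_eq_mul, hc] at this
      exact this
    have hS : ∑ i ∈ Finset.Icc 1 (k - 1), d i * d (k - i)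
        ≤ 2 * d 1 * d (k - 1) + ((k : ℝ) - 3) * (d 2 * d (k - 2)) := by
      rw [hsplit, Finset.sum_insert h1notin, Finset.sum_insert hk1notin]
      have e1 : k - (k - 1) = 1 := by omega
      rw [e1]
      have := hmidsum
      nlinarith [this, dpos 1, dpos (k - 1)]
    -- express d k and d (k-1) via d (k-2)
    have hkR : (3 : ℝ) ≤ (k : ℝ) := by exact_mod_cast hk3'
    have hdk : d k = (7 * (k : ℝ) - 6) * (7 * (k : ℝ) - 4) / 4 * d (k - 1) := hd k (by omega)
    have hdk1 : d (k - 1) = (7 * ((k : ℝ) - 1) - 6) * (7 * ((k : ℝ) - 1) - 4) / 4 * d (k - 2) := by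
      have h := hd (k - 1) (by omega)
      have e : k - 1 - 1 = k - 2 := by omega
      have hc : ((k - 1 : ℕ) : ℝ) = (k : ℝ) - 1 := by
        push_cast [Nat.cast_sub (by omega : 1 ≤ k)]; ring
      rw [e, hc] at h
      exact h
    have hD : 0 < d (k - 2) := dpos _
    have hK2 : (0 : ℝ) < (k : ℝ) ^ 2 := by positivity
    -- core polynomial inequality
    have hcore : 2 * d 1 * d (k - 1) + ((k : ℝ) - 3) * (d 2 * d (k - 2))
        ≤ 0.24 * d k / (k : ℝ) ^ 2 := by
      rw [le_div_iff₀ hK2, hd1, hd2, hdk, hdk1]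
      have h024 : (0.24 : ℝ) = 24 / 100 := by norm_num
      rw [h024]
      have hx : (0 : ℝ) ≤ (k : ℝ) - 3 := by linarith
      have hpoly : (2 * (3 / 4) * ((7 * ((k:ℝ) - 1) - 6) * (7 * ((k:ℝ) - 1) - 4) / 4)
          + ((k:ℝ) - 3) * 15) * (k:ℝ) ^ 2
          ≤ 24 / 100 * ((7 * (k:ℝ) - 6) * (7 * (k:ℝ) - 4) / 4
            * ((7 * ((k:ℝ) - 1) - 6) * (7 * ((k:ℝ) - 1) - 4) / 4)) := by
        linarith [hx, pow_nonneg hx 2, pow_nonneg hx 3, pow_nonneg hx 4]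
      nlinarith [mul_le_mul_of_nonneg_right hpoly hD.le, hD.le]
    calc T' k ≤ A₂ ^ 2 * ∑ i ∈ Finset.Icc 1 (k - 1), d i * d (k - i) := hsum
      _ ≤ A₂ ^ 2 * (2 * d 1 * d (k - 1) + ((k : ℝ) - 3) * (d 2 * d (k - 2))) :=
        mul_le_mul_of_nonneg_left hS (sq_nonneg A₂)
      _ ≤ A₂ ^ 2 * (0.24 * d k / (k : ℝ) ^ 2) :=
        mul_le_mul_of_nonneg_left hcore (sq_nonneg A₂)
      _ = 0.24 * A₂ ^ 2 * d k / (k : ℝ) ^ 2 := by ring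
end

section
/- Under the hypotheses A₁ ≤ b_k ≤ A₂ for 0 ≤ k ≤ n−1 with A₁ > 0, one has 0 < T_k ≤ α d_k for 1 ≤ k ≤ n−1, where α = 2A₂ + 0.06·A₂² and T_k = 2 d_k b_k + Σ_{i=1}^{k-1} b_i b_{k-i} d_i d_{k-i}. -/
theorem T_bound (d b T : ℕ → ℝ) (n : ℕ) (A₁ A₂ : ℝ)
    (hd0 : d 0 = 1)
    (hd : ∀ m : ℕ, 1 ≤ m → d m = (7 * (m : ℝ) - 6) * (7 * (m : ℝ) - 4) / 4 * d (m - 1))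
    (hT : ∀ k : ℕ, T k = 2 * d k * b k + ∑ i ∈ Finset.Icc 1 (k - 1),
      b i * b (k - i) * d i * d (k - i))
    (hA₁ : 0 < A₁)
    (hbk : ∀ k : ℕ, k ≤ n - 1 → A₁ ≤ b k ∧ b k ≤ A₂) :
    ∀ k : ℕ, 1 ≤ k → k ≤ n - 1 →
      0 < T k ∧ T k ≤ (2 * A₂ + 0.06 * A₂ ^ 2) * d k := by
  -- positivity of d
  have hdpos : ∀ m : ℕ, 0 < d m := by
    intro m
    induction m with
    | zero => rw [hd0]; norm_num
    | succ m ih =>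
      rw [hd (m + 1) (by omega)]
      simp only [Nat.add_sub_cancel]
      have hm : (0 : ℝ) ≤ (m : ℝ) := Nat.cast_nonneg m
      push_cast
      have h1 : (0 : ℝ) < 7 * ((m : ℝ) + 1) - 6 := by nlinarith
      have h2 : (0 : ℝ) < 7 * ((m : ℝ) + 1) - 4 := by nlinarith
      positivity
  -- log-convexity step
  have hstep : ∀ i j : ℕ, 1 ≤ i → i ≤ j + 1 → d i * d j ≤ d (i - 1) * d (j + 1) := by
    intro i j hi hij
    rw [hd i hi, hd (j + 1) (by omega)]
    simp only [Nat.add_sub_cancel]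
    have hij' : (i : ℝ) ≤ (j : ℝ) + 1 := by exact_mod_cast hij
    have hi' : (1 : ℝ) ≤ (i : ℝ) := by exact_mod_cast hi
    have hD : 0 < d (i - 1) * d j := mul_pos (hdpos (i - 1)) (hdpos j)
    have hc : (7 * (i : ℝ) - 6) * (7 * (i : ℝ) - 4) / 4 ≤
        (7 * ((j : ℝ) + 1) - 6) * (7 * ((j : ℝ) + 1) - 4) / 4 := by
      nlinarith [mul_nonneg (sub_nonneg.mpr hij')
        (show (0 : ℝ) ≤ 49 * (((j : ℝ) + 1) + (i : ℝ)) - 70 by nlinarith)]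
    push_cast
    calc (7 * (i : ℝ) - 6) * (7 * (i : ℝ) - 4) / 4 * d (i - 1) * d j
        = ((7 * (i : ℝ) - 6) * (7 * (i : ℝ) - 4) / 4) * (d (i - 1) * d j) := by ring
      _ ≤ ((7 * ((j : ℝ) + 1) - 6) * (7 * ((j : ℝ) + 1) - 4) / 4) * (d (i - 1) * d j) :=
          mul_le_mul_of_nonneg_right hc (le_of_lt hD)
      _ = d (i - 1) * ((7 * ((j : ℝ) + 1) - 6) * (7 * ((j : ℝ) + 1) - 4) / 4 * d j) := by ring
  -- monotone pairing lemma
  have hmono : ∀ i j : ℕ, 1 ≤ i → i ≤ j → d i * d j ≤ d 1 * d (i + j - 1) := by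
    intro i
    induction i with
    | zero => exact fun j h _ => absurd h (by omega)
    | succ i ih =>
      intro j h1 h2
      rcases Nat.eq_zero_or_pos i with h0 | hi
      · subst h0
        have : 0 + 1 + j - 1 = j := by omega
        rw [this]
      · have s := hstep (i + 1) j (by omega) (by omega)
        simp only [Nat.add_sub_cancel] at s
        have t := ih (j + 1) hi (by omega)
        have heq : i + (j + 1) - 1 = (i + 1) + j - 1 := by omega
        rw [heq] at t
        exact s.trans t
  have hpair : ∀ k i : ℕ, 1 ≤ i → i ≤ k - 1 → d i * d (k - i) ≤ d 1 * d (k - 1) := by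
    intro k i hi hik
    have hk2 : 2 ≤ k := by omega
    rcases le_total i (k - i) with h | h
    · have t := hmono i (k - i) hi h
      rwa [show i + (k - i) - 1 = k - 1 by omega] at t
    · have t := hmono (k - i) i (by omega) h
      rw [show (k - i) + i - 1 = k - 1 by omega] at t
      linarith [mul_comm (d i) (d (k - i)), t]
  intro k hk1 hkn
  have hbkk := hbk k hkn
  have hbkpos : 0 < b k := lt_of_lt_of_le hA₁ hbkk.1
  have hA₂ : 0 < A₂ := lt_of_lt_of_le hbkpos hbkk.2
  have hdk := hd k hk1
  have hDk1 := hdpos (k - 1)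
  have hd1 : d 1 = 3 / 4 := by
    have := hd 1 le_rfl
    simp only [Nat.sub_self, hd0] at this
    rw [this]; norm_num
  -- nonnegativity / positivity of the sum terms
  have htermpos : ∀ i ∈ Finset.Icc 1 (k - 1),
      0 ≤ b i * b (k - i) * d i * d (k - i) := by
    intro i hi
    rw [Finset.mem_Icc] at hi
    have h1 : i ≤ n - 1 := by omega
    have h2 : k - i ≤ n - 1 := by omega
    have hb1 : 0 < b i := lt_of_lt_of_le hA₁ (hbk i h1).1
    have hb2 : 0 < b (k - i) := lt_of_lt_of_le hA₁ (hbk (k - i) h2).1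
    exact le_of_lt (mul_pos (mul_pos (mul_pos hb1 hb2) (hdpos i)) (hdpos (k - i)))
  have hsum_nonneg : 0 ≤ ∑ i ∈ Finset.Icc 1 (k - 1),
      b i * b (k - i) * d i * d (k - i) := Finset.sum_nonneg htermpos
  constructor
  · rw [hT k]
    have : 0 < 2 * d k * b k := by
      have := hdpos k; nlinarith
    linarith
  · -- each term bounded
    have hterm : ∀ i ∈ Finset.Icc 1 (k - 1),
        b i * b (k - i) * d i * d (k - i) ≤ A₂ ^ 2 * (d 1 * d (k - 1)) := by
      intro i hi
      rw [Finset.mem_Icc] at hi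
      have h1 : i ≤ n - 1 := by omega
      have h2 : k - i ≤ n - 1 := by omega
      have hb1 := hbk i h1
      have hb2 := hbk (k - i) h2
      have hb1p : 0 < b i := lt_of_lt_of_le hA₁ hb1.1
      have hb2p : 0 < b (k - i) := lt_of_lt_of_le hA₁ hb2.1
      have hdp := hpair k i hi.1 hi.2
      calc b i * b (k - i) * d i * d (k - i)
          = (b i * b (k - i)) * (d i * d (k - i)) := by ring
        _ ≤ (A₂ * A₂) * (d 1 * d (k - 1)) := by
            apply mul_le_mul
            · exact mul_le_mul hb1.2 hb2.2 (le_of_lt hb2p) (le_of_lt hA₂)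
            · exact hdp
            · exact le_of_lt (mul_pos (hdpos i) (hdpos (k - i)))
            · positivity
        _ = A₂ ^ 2 * (d 1 * d (k - 1)) := by ring
    have hsum : ∑ i ∈ Finset.Icc 1 (k - 1), b i * b (k - i) * d i * d (k - i)
        ≤ ((k - 1 : ℕ) : ℝ) * (A₂ ^ 2 * (d 1 * d (k - 1))) := by
      calc ∑ i ∈ Finset.Icc 1 (k - 1), b i * b (k - i) * d i * d (k - i)
          ≤ ∑ _i ∈ Finset.Icc 1 (k - 1), A₂ ^ 2 * (d 1 * d (k - 1)) :=
            Finset.sum_le_sum hterm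
        _ = ((Finset.Icc 1 (k - 1)).card : ℝ) * (A₂ ^ 2 * (d 1 * d (k - 1))) := by
            rw [Finset.sum_const, nsmul_eq_mul]
        _ = ((k - 1 : ℕ) : ℝ) * (A₂ ^ 2 * (d 1 * d (k - 1))) := by
            rw [Nat.card_Icc]; norm_num
    have hcast : ((k - 1 : ℕ) : ℝ) = (k : ℝ) - 1 := by
      have := Nat.cast_sub hk1 (R := ℝ); simpa using this
    have hk' : (1 : ℝ) ≤ (k : ℝ) := by exact_mod_cast hk1
    have key : ((k : ℝ) - 1) * (3 / 4) ≤
        0.06 * ((7 * (k : ℝ) - 6) * (7 * (k : ℝ) - 4) / 4) := by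
      nlinarith [sq_nonneg ((k : ℝ) - 60 / 49)]
    have pos : (0 : ℝ) ≤ A₂ ^ 2 * d (k - 1) := by positivity
    have key2 : ((k : ℝ) - 1) * (A₂ ^ 2 * (d 1 * d (k - 1))) ≤ 0.06 * A₂ ^ 2 * d k := by
      rw [hd1, hdk]
      have h := mul_le_mul_of_nonneg_right key pos
      nlinarith [h]
    have h1 : 2 * d k * b k ≤ 2 * d k * A₂ :=
      mul_le_mul_of_nonneg_left hbkk.2 (by have := hdpos k; linarith)
    calc T k = 2 * d k * b k + ∑ i ∈ Finset.Icc 1 (k - 1),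
          b i * b (k - i) * d i * d (k - i) := hT k
      _ ≤ 2 * d k * A₂ + ((k - 1 : ℕ) : ℝ) * (A₂ ^ 2 * (d 1 * d (k - 1))) :=
          add_le_add h1 hsum
      _ ≤ 2 * d k * A₂ + 0.06 * A₂ ^ 2 * d k := by rw [hcast]; linarith [key2]
      _ = (2 * A₂ + 0.06 * A₂ ^ 2) * d k := by ring
end

section
/- For n ≥ 5, under the hypotheses A₁ ≤ b_k ≤ A₂ (0 ≤ k ≤ n−1, A₁ > 0), the positive part satisfies 0 < Q_n⁺ ≤ 0.24·α·A₂/n² with α = 2A₂ + 0.06·A₂², and the negative part satisfies 0 < Q_n⁻ ≤ 0.12·A₂²/n². -/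
/-!
The ratio `d (m + 1) / d m = (7m + 1)(7m + 3)/4` increases with `m`, so `i ↦ d i * d (k - i)`
decreases from the ends of `[1, k - 1]` towards its middle and
`S k := ∑_{i=1}^{k-1} d i * d (k - i) ≤ 2 d₁ d_{k-1} + (k - 3) d₂ d_{k-2}`.
Unfolding two steps of the recursion turns this into a polynomial inequality, which gives
`S k ≤ 0.24 d k / k²` for `k ≥ 5`, hence `S k ≤ 0.06 d k` for every `k`.
Now `T' k` is `S k` weighted by `b`, so `T' k ≤ A₂² S k` and `T k ≤ (2A₂ + 0.06A₂²) d k`;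
the weight of `T k` in `Q⁺_n` is `2 d (n - k) b (n - k - 1)`, so both `Q⁺_n` and `Q⁻_n` are
bounded by multiples of `S n / d n`.
-/

open Finset

def convSum (f : ℕ → ℝ) (k : ℕ) : ℝ := ∑ i ∈ Icc 1 (k - 1), f i * f (k - i)

section LogConvex

variable {d r : ℕ → ℝ}

lemma mul_succ_le_succ_mul_of_monotone (hr : Monotone r) (hd : ∀ m, d (m + 1) = r m * d m)
    (h0 : ∀ m, 0 ≤ d m) {i l : ℕ} (hil : i ≤ l) : d (i + 1) * d l ≤ d i * d (l + 1) :=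
  calc d (i + 1) * d l = r i * (d i * d l) := by rw [hd]; ring
    _ ≤ r l * (d i * d l) := by gcongr; exacts [mul_nonneg (h0 i) (h0 l), hr hil]
    _ = d i * d (l + 1) := by rw [hd]; ring

lemma mul_sub_le_mul_sub_of_monotone (hr : Monotone r) (hd : ∀ m, d (m + 1) = r m * d m)
    (h0 : ∀ m, 0 ≤ d m) {j i k : ℕ} (hji : j ≤ i) (hik : i + j ≤ k) :
    d i * d (k - i) ≤ d j * d (k - j) := by
  have half : ∀ i, j ≤ i → 2 * i ≤ k → d i * d (k - i) ≤ d j * d (k - j) := by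
    intro i hji
    induction i, hji using Nat.le_induction with
    | base => exact fun _ => le_rfl
    | succ i _ ih =>
      intro hi
      have hsub : k - i = k - (i + 1) + 1 := by omega
      calc d (i + 1) * d (k - (i + 1)) ≤ d i * d (k - i) := by
            rw [hsub]; exact mul_succ_le_succ_mul_of_monotone hr hd h0 (by omega)
        _ ≤ d j * d (k - j) := ih (by omega)
  rcases le_total (2 * i) k with hi | hi
  · exact half i hji hi
  · have := half (k - i) (by omega) (by omega)
    rwa [Nat.sub_sub_self (by omega), mul_comm] at this

lemma convSum_le_of_monotone (hr : Monotone r) (hd : ∀ m, d (m + 1) = r m * d m)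
    (h0 : ∀ m, 0 ≤ d m) {k : ℕ} (hk : 3 ≤ k) :
    convSum d k ≤ 2 * (d 1 * d (k - 1)) + (k - 3) * (d 2 * d (k - 2)) := by
  have hIcc : Icc 1 (k - 1) = insert 1 (insert (k - 1) (Icc 2 (k - 2))) := by
    ext x; simp only [mem_Icc, mem_insert]; omega
  have hmid : ∑ i ∈ Icc 2 (k - 2), d i * d (k - i) ≤ (k - 3) * (d 2 * d (k - 2)) := by
    have hcard : ((Icc 2 (k - 2)).card : ℝ) = k - 3 := by
      rw [Nat.card_Icc, Nat.cast_sub (by omega)]; push_cast [Nat.cast_sub (by omega : 2 ≤ k)]; ring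
    rw [← hcard, ← nsmul_eq_mul]
    exact sum_le_card_nsmul _ _ _ fun i hi =>
      mul_sub_le_mul_sub_of_monotone hr hd h0 (mem_Icc.1 hi).1 (by have := mem_Icc.1 hi; omega)
  rw [convSum, hIcc, sum_insert (by simp only [mem_insert, mem_Icc]; omega),
    sum_insert (by simp only [mem_Icc]; omega), Nat.sub_sub_self (by omega : 1 ≤ k)]
  linarith [mul_comm (d (k - 1)) (d 1)]

end LogConvex

section ConvSum

variable {f g : ℕ → ℝ} {k : ℕ}

lemma convSum_nonneg (hf : ∀ i ∈ Icc 1 (k - 1), 0 ≤ f i) : 0 ≤ convSum f k :=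
  sum_nonneg fun i hi => mul_nonneg (hf i hi) (hf (k - i) (by simp only [mem_Icc] at *; omega))

lemma convSum_pos (hk : 2 ≤ k) (hf : ∀ i ∈ Icc 1 (k - 1), 0 < f i) : 0 < convSum f k :=
  sum_pos (fun i hi => mul_pos (hf i hi) (hf (k - i) (by simp only [mem_Icc] at *; omega)))
    ⟨1, mem_Icc.2 ⟨le_rfl, by omega⟩⟩

lemma convSum_le_sq_mul {c : ℝ} (hf : ∀ i ∈ Icc 1 (k - 1), f i ∈ Set.Icc 0 (c * g i)) :
    convSum f k ≤ c ^ 2 * convSum g k := by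
  rw [convSum, convSum, mul_sum]
  refine sum_le_sum fun i hi => ?_
  have hi' := hf i hi
  have hki := hf (k - i) (by simp only [mem_Icc] at *; omega)
  calc f i * f (k - i) ≤ c * g i * (c * g (k - i)) :=
        mul_le_mul hi'.2 hki.2 hki.1 (hi'.1.trans hi'.2)
    _ = c ^ 2 * (g i * g (k - i)) := by ring

lemma convSum_mul (b d : ℕ → ℝ) (k : ℕ) :
    convSum (b * d) k = ∑ i ∈ Icc 1 (k - 1), b i * b (k - i) * d i * d (k - i) :=
  sum_congr rfl fun _ _ => by simp only [Pi.mul_apply]; ring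

end ConvSum

noncomputable def dSeq : ℕ → ℝ
  | 0 => 1
  | m + 1 => (7 * m + 1) * (7 * m + 3) / 4 * dSeq m

lemma dSeq_succ (m : ℕ) : dSeq (m + 1) = (7 * m + 1) * (7 * m + 3) / 4 * dSeq m := rfl

lemma dSeq_pos (m : ℕ) : 0 < dSeq m := by
  induction m with
  | zero => norm_num [dSeq]
  | succ m ih => rw [dSeq_succ]; positivity

lemma eq_dSeq {d : ℕ → ℝ} (hd0 : d 0 = 1)
    (hd : ∀ m : ℕ, 1 ≤ m → d m = (7 * (m : ℝ) - 6) * (7 * (m : ℝ) - 4) / 4 * d (m - 1)) :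
    d = dSeq := by
  funext m
  induction m with
  | zero => exact hd0
  | succ m ih =>
    rw [hd (m + 1) m.succ_pos, Nat.add_sub_cancel, ih, dSeq_succ]
    push_cast
    ring

lemma monotone_dSeq_ratio : Monotone fun m : ℕ => (7 * (m : ℝ) + 1) * (7 * m + 3) / 4 := by
  intro a b hab
  have : (a : ℝ) ≤ b := by exact_mod_cast hab
  dsimp only
  gcongr

-- `x = n - 2`; the left side is `2 d₁ d_{n-1} + (n - 3) d₂ d_{n-2}` divided by `d_{n-2}`.
lemma dSeq_ratio_bound {x : ℝ} (hx : 3 ≤ x) :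
    3 / 2 * ((7 * x + 1) * (7 * x + 3) / 4) + 15 * (x - 1)
      ≤ 0.24 / (x + 2) ^ 2 *
          ((7 * x + 8) * (7 * x + 10) / 4 * ((7 * x + 1) * (7 * x + 3) / 4)) := by
  rw [div_mul_eq_mul_div (0.24 : ℝ), le_div_iff₀ (by positivity)]
  nlinarith [mul_nonneg (mul_nonneg (sub_nonneg.2 hx) (sub_nonneg.2 hx)) (sub_nonneg.2 hx),
    mul_nonneg (sub_nonneg.2 hx) (sub_nonneg.2 hx), sq_nonneg (x - 3)]

lemma convSum_dSeq_le_of_five_le {n : ℕ} (hn : 5 ≤ n) :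
    convSum dSeq n ≤ 0.24 / (n : ℝ) ^ 2 * dSeq n := by
  obtain ⟨m, rfl⟩ : ∃ m, n = m + 2 := ⟨n - 2, by omega⟩
  have hm : (3 : ℝ) ≤ m := by exact_mod_cast (by omega : 3 ≤ m)
  have hd1 : dSeq 1 = 3 / 4 := by norm_num [dSeq]
  have hd2 : dSeq 2 = 15 := by norm_num [dSeq]
  calc convSum dSeq (m + 2)
      ≤ 2 * (dSeq 1 * dSeq (m + 2 - 1)) + ((m + 2 : ℕ) - 3) * (dSeq 2 * dSeq (m + 2 - 2)) :=
        convSum_le_of_monotone monotone_dSeq_ratio dSeq_succ (fun m => (dSeq_pos m).le)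
          (by omega)
    _ = (3 / 2 * ((7 * m + 1) * (7 * m + 3) / 4) + 15 * (m - 1)) * dSeq m := by
        rw [hd1, hd2, show m + 2 - 1 = m + 1 by omega, Nat.add_sub_cancel, dSeq_succ]
        push_cast; ring
    _ ≤ 0.24 / ((m : ℝ) + 2) ^ 2 *
          ((7 * m + 8) * (7 * m + 10) / 4 * ((7 * m + 1) * (7 * m + 3) / 4)) * dSeq m := by
        gcongr
        · exact (dSeq_pos m).le
        · exact dSeq_ratio_bound hm
    _ = 0.24 / ((m + 2 : ℕ) : ℝ) ^ 2 * dSeq (m + 2) := by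
        rw [dSeq_succ, dSeq_succ]; push_cast; ring

lemma convSum_dSeq_le (k : ℕ) : convSum dSeq k ≤ 0.06 * dSeq k := by
  rcases le_or_gt 5 k with hk | hk
  · refine (convSum_dSeq_le_of_five_le hk).trans (mul_le_mul_of_nonneg_right ?_ (dSeq_pos k).le)
    have : (25 : ℝ) ≤ (k : ℝ) ^ 2 := by
      have : (5 : ℝ) ≤ k := by exact_mod_cast hk
      nlinarith
    rw [div_le_iff₀ (by positivity)]
    nlinarith
  · interval_cases k <;> norm_num [convSum, dSeq, sum_Icc_succ_top]

lemma mul_dSeq_mem_Ioc {b : ℕ → ℝ} {A : ℝ} {i : ℕ} (hb : b i ∈ Set.Ioc 0 A) :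
    (b * dSeq) i ∈ Set.Ioc 0 (A * dSeq i) :=
  ⟨mul_pos hb.1 (dSeq_pos i), mul_le_mul_of_nonneg_right hb.2 (dSeq_pos i).le⟩

lemma two_mul_dSeq_mul_add_convSum_mem_Ioc {b : ℕ → ℝ} {A : ℝ} {k : ℕ}
    (hb : ∀ i ≤ k, b i ∈ Set.Ioc 0 A) :
    2 * dSeq k * b k + convSum (b * dSeq) k ∈ Set.Ioc 0 ((2 * A + 0.06 * A ^ 2) * dSeq k) := by
  have hbd : ∀ i ∈ Icc 1 (k - 1), (b * dSeq) i ∈ Set.Icc 0 (A * dSeq i) := fun i hi =>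
    Set.Ioc_subset_Icc_self (mul_dSeq_mem_Ioc (hb i (by simp only [mem_Icc] at hi; omega)))
  have hdk := dSeq_pos k
  have hconv := (convSum_le_sq_mul hbd).trans
    (mul_le_mul_of_nonneg_left (convSum_dSeq_le k) (sq_nonneg A))
  constructor
  · exact add_pos_of_pos_of_nonneg (by have := (hb k le_rfl).1; positivity)
      (convSum_nonneg fun i hi => (hbd i hi).1)
  · nlinarith [mul_le_mul_of_nonneg_left (hb k le_rfl).2 hdk.le]

lemma sum_mul_mem_Ioc_mul_convSum {d b T : ℕ → ℝ} {A α : ℝ} {n : ℕ} (hn : 2 ≤ n)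
    (hd : ∀ i, 0 < d i) (hb : ∀ k ∈ Icc 1 (n - 1), b (n - k - 1) ∈ Set.Ioc 0 A)
    (hT : ∀ k ∈ Icc 1 (n - 1), T k ∈ Set.Ioc 0 (α * d k)) :
    ∑ k ∈ Icc 1 (n - 1), b (n - k - 1) * d (n - k) * T k ∈ Set.Ioc 0 (A * α * convSum d n) := by
  constructor
  · exact sum_pos (fun k hk => mul_pos (mul_pos (hb k hk).1 (hd _)) (hT k hk).1)
      ⟨1, mem_Icc.2 ⟨le_rfl, by omega⟩⟩
  · rw [convSum, mul_sum]
    refine sum_le_sum fun k hk => ?_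
    obtain ⟨hb0, hbA⟩ := hb k hk
    obtain ⟨hT0, hTα⟩ := hT k hk
    have hdk := hd (n - k)
    have hA := hb0.le.trans hbA
    calc b (n - k - 1) * d (n - k) * T k ≤ A * d (n - k) * (α * d k) := by gcongr
      _ = A * α * (d k * d (n - k)) := by ring

lemma Qp_sum_eq (b T : ℕ → ℝ) (n : ℕ) :
    1 / (2 * dSeq n) * ∑ k ∈ Icc 1 (n - 1),
      (7 * (n : ℝ) - 7 * (k : ℝ) - 6) * (7 * (n : ℝ) - 7 * (k : ℝ) - 4) / 2
        * b (n - k - 1) * dSeq (n - k - 1) * T k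
      = (∑ k ∈ Icc 1 (n - 1), b (n - k - 1) * dSeq (n - k) * T k) / dSeq n := by
  have hterm : ∀ k ∈ Icc 1 (n - 1),
      (7 * (n : ℝ) - 7 * (k : ℝ) - 6) * (7 * (n : ℝ) - 7 * (k : ℝ) - 4) / 2
        * b (n - k - 1) * dSeq (n - k - 1) * T k = 2 * (b (n - k - 1) * dSeq (n - k) * T k) := by
    intro k hk
    rw [mem_Icc] at hk
    rw [show n - k = n - k - 1 + 1 by omega, dSeq_succ, Nat.cast_sub (by omega : 1 ≤ n - k),
      Nat.cast_sub (by omega : k ≤ n)]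
    push_cast
    ring
  rw [sum_congr rfl hterm, ← mul_sum]
  field_simp [(dSeq_pos n).ne']

theorem Qp_Qm_bounds (d b T' T Qp Qm : ℕ → ℝ) (n : ℕ) (A₁ A₂ : ℝ)
    (hd0 : d 0 = 1)
    (hd : ∀ m : ℕ, 1 ≤ m → d m = (7 * (m : ℝ) - 6) * (7 * (m : ℝ) - 4) / 4 * d (m - 1))
    (hT' : ∀ k : ℕ, T' k = ∑ i ∈ Finset.Icc 1 (k - 1), b i * b (k - i) * d i * d (k - i))
    (hT : ∀ k : ℕ, T k = 2 * d k * b k + T' k)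
    (hQp : ∀ m : ℕ, Qp m = (1 / (2 * d m)) * ∑ k ∈ Finset.Icc 1 (m - 1),
      (7 * (m : ℝ) - 7 * (k : ℝ) - 6) * (7 * (m : ℝ) - 7 * (k : ℝ) - 4) / 2
        * b (m - k - 1) * d (m - k - 1) * T k)
    (hQm : ∀ m : ℕ, Qm m = T' m / (2 * d m))
    (hn : 5 ≤ n) (hA₁ : 0 < A₁)
    (hbk : ∀ k : ℕ, k ≤ n - 1 → A₁ ≤ b k ∧ b k ≤ A₂) :
    (0 < Qp n ∧ Qp n ≤ 0.24 * (2 * A₂ + 0.06 * A₂ ^ 2) * A₂ / (n : ℝ) ^ 2) ∧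
    (0 < Qm n ∧ Qm n ≤ 0.12 * A₂ ^ 2 / (n : ℝ) ^ 2) := by
  obtain rfl : d = dSeq := eq_dSeq hd0 hd
  have hb : ∀ k < n, b k ∈ Set.Ioc 0 A₂ := fun k hk =>
    ⟨hA₁.trans_le (hbk k (by omega)).1, (hbk k (by omega)).2⟩
  have hA₂ : 0 < A₂ := (hb 0 (by omega)).1.trans_le (hb 0 (by omega)).2
  have hT'_eq : ∀ k, T' k = convSum (b * dSeq) k := fun k => by rw [hT', convSum_mul]
  have hTk : ∀ k ∈ Icc 1 (n - 1), T k ∈ Set.Ioc 0 ((2 * A₂ + 0.06 * A₂ ^ 2) * dSeq k) :=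
    fun k hk => by
      rw [hT, hT'_eq]
      exact two_mul_dSeq_mul_add_convSum_mem_Ioc fun i hi =>
        hb i (by simp only [mem_Icc] at hk; omega)
  obtain ⟨hsum_pos, hsum_le⟩ := sum_mul_mem_Ioc_mul_convSum (by omega) dSeq_pos
    (fun k hk => hb _ (by simp only [mem_Icc] at hk; omega)) hTk
  have hS := convSum_dSeq_le_of_five_le hn
  have hdn := dSeq_pos n
  have hbd : ∀ i ∈ Icc 1 (n - 1), (b * dSeq) i ∈ Set.Ioc 0 (A₂ * dSeq i) :=
    fun i hi => mul_dSeq_mem_Ioc (hb i (by simp only [mem_Icc] at hi; omega))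
  rw [hQp, Qp_sum_eq, hQm, hT'_eq]
  refine ⟨⟨div_pos hsum_pos hdn, ?_⟩, div_pos (convSum_pos (by omega) fun i hi => (hbd i hi).1)
    (by positivity), ?_⟩
  · rw [div_le_iff₀ hdn]
    calc _ ≤ A₂ * (2 * A₂ + 0.06 * A₂ ^ 2) * convSum dSeq n := hsum_le
      _ ≤ A₂ * (2 * A₂ + 0.06 * A₂ ^ 2) * (0.24 / (n : ℝ) ^ 2 * dSeq n) := by gcongr
      _ = _ := by ring
  · rw [div_le_iff₀ (by positivity)]
    calc _ ≤ A₂ ^ 2 * convSum dSeq n :=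
          convSum_le_sq_mul fun i hi => Set.Ioc_subset_Icc_self (hbd i hi)
      _ ≤ A₂ ^ 2 * (0.24 / (n : ℝ) ^ 2 * dSeq n) := by gcongr
      _ = _ := by ring
end

section
/- For all k ≥ 8, the sequence b_k = c_k/d_k satisfies 1 + B/k ≤ b_k ≤ 1.324 − B/k with B = 1.0787. -/
set_option maxHeartbeats 1600000

namespace BTaux

theorem numeric_u (N x : ℝ) (hN : 9 ≤ N) (hx : 0 < x) :
    (1/2) * (1.324 ^ 3 * 4 * (2 * ((3/4) * (4 * x / ((7*N-6)*(7*N-4))))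
        + N * (15 * (16 * x / (((7*N-6)*(7*N-4)) * ((7*N-13)*(7*N-11))))))
      + 1.324 ^ 3 * 2 * (3/4) * ((4 * x / ((7*N-6)*(7*N-4)))
        + N ^ 2 * ((3/4) * (16 * x / (((7*N-6)*(7*N-4)) * ((7*N-13)*(7*N-11)))))))
      ≤ 1.0787 / (N * (N - 1)) * x := by
  have hP : (0:ℝ) < (7*N-6)*(7*N-4) := by nlinarith
  have hQ : (0:ℝ) < (7*N-13)*(7*N-11) := by nlinarith
  have hNN : (0:ℝ) < N * (N - 1) := by nlinarith
  rw [show (1.0787:ℝ)/(N*(N-1))*x = 1.0787*x/(N*(N-1)) by ring, le_div_iff₀ hNN]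
  have key : ((1/2) * (1.324 ^ 3 * 4 * (2 * ((3/4) * (4 * x / ((7*N-6)*(7*N-4))))
        + N * (15 * (16 * x / (((7*N-6)*(7*N-4)) * ((7*N-13)*(7*N-11))))))
      + 1.324 ^ 3 * 2 * (3/4) * ((4 * x / ((7*N-6)*(7*N-4)))
        + N ^ 2 * ((3/4) * (16 * x / (((7*N-6)*(7*N-4)) * ((7*N-13)*(7*N-11)))))))) * (N * (N-1))
      = ((1.324^3 * (15 * ((7*N-13)*(7*N-11)) + 480 * N + 9 * N^2)) * (N * (N-1)))
        * x / (((7*N-6)*(7*N-4)) * ((7*N-13)*(7*N-11))) := by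
    have h1 : (7*N-6:ℝ) ≠ 0 := by intro h; linarith
    have h2 : (7*N-4:ℝ) ≠ 0 := by intro h; linarith
    have h3 : (7*N-13:ℝ) ≠ 0 := by intro h; linarith
    have h4 : (7*N-11:ℝ) ≠ 0 := by intro h; linarith
    field_simp
    ring
  rw [key, div_le_iff₀ (by positivity)]
  nlinarith [hx.le, sq_nonneg (N-9),
    mul_nonneg (mul_nonneg (sq_nonneg (N-9)) (sq_nonneg (N-9))) hx.le,
    mul_nonneg (mul_nonneg (sq_nonneg (N-9)) (by linarith : (0:ℝ) ≤ N-9)) hx.le,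
    mul_nonneg (sq_nonneg (N-9)) hx.le, mul_nonneg (by linarith : (0:ℝ) ≤ N-9) hx.le]

theorem numeric_l (N x : ℝ) (hN : 9 ≤ N) (hx : 0 < x) :
    (1/2) * (1.324 ^ 2 * (2 * ((3/4) * (4 * x / ((7*N-6)*(7*N-4))))
        + N * (15 * (16 * x / (((7*N-6)*(7*N-4)) * ((7*N-13)*(7*N-11)))))))
      ≤ 1.0787 / (N * (N - 1)) * x := by
  have hP : (0:ℝ) < (7*N-6)*(7*N-4) := by nlinarith
  have hQ : (0:ℝ) < (7*N-13)*(7*N-11) := by nlinarith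
  have hNN : (0:ℝ) < N * (N - 1) := by nlinarith
  rw [show (1.0787:ℝ)/(N*(N-1))*x = 1.0787*x/(N*(N-1)) by ring, le_div_iff₀ hNN]
  have key : ((1/2) * (1.324 ^ 2 * (2 * ((3/4) * (4 * x / ((7*N-6)*(7*N-4))))
        + N * (15 * (16 * x / (((7*N-6)*(7*N-4)) * ((7*N-13)*(7*N-11)))))))) * (N * (N-1))
      = ((1.324^2 / 2 * (6 * ((7*N-13)*(7*N-11)) + 240 * N)) * (N * (N-1)))
        * x / (((7*N-6)*(7*N-4)) * ((7*N-13)*(7*N-11))) := by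
    have h1 : (7*N-6:ℝ) ≠ 0 := by intro h; linarith
    have h2 : (7*N-4:ℝ) ≠ 0 := by intro h; linarith
    have h3 : (7*N-13:ℝ) ≠ 0 := by intro h; linarith
    have h4 : (7*N-11:ℝ) ≠ 0 := by intro h; linarith
    field_simp
    ring
  rw [key, div_le_iff₀ (by positivity)]
  nlinarith [hx.le, sq_nonneg (N-9),
    mul_nonneg (mul_nonneg (sq_nonneg (N-9)) (sq_nonneg (N-9))) hx.le,
    mul_nonneg (mul_nonneg (sq_nonneg (N-9)) (by linarith : (0:ℝ) ≤ N-9)) hx.le,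
    mul_nonneg (sq_nonneg (N-9)) hx.le, mul_nonneg (by linarith : (0:ℝ) ≤ N-9) hx.le]

section
variable (c d : ℕ → ℝ) (hd0 : d 0 = 1)
    (hd : ∀ n : ℕ, 1 ≤ n → d n = (7 * (n : ℝ) - 6) * (7 * (n : ℝ) - 4) / 4 * d (n - 1))
include hd0 hd

set_option linter.unusedSectionVars false

theorem dsucc : ∀ n : ℕ, d (n + 1) = (7 * (n : ℝ) + 1) * (7 * (n : ℝ) + 3) / 4 * d n := by
  intro n
  have h := hd (n + 1) (by omega)
  simpa [Nat.add_sub_cancel] using by push_cast at h ⊢; linarith [h]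

theorem dpos' : ∀ n : ℕ, 0 < d n := by
  intro n
  induction n with
  | zero => rw [hd0]; norm_num
  | succ n ih =>
    rw [dsucc d hd0 hd n]
    have : (0:ℝ) ≤ (n:ℝ) := Nat.cast_nonneg n
    positivity

theorem dexch' : ∀ a b : ℕ, b ≤ a → d a * d (b + 1) ≤ d (a + 1) * d b := by
  intro a b hba
  rw [dsucc d hd0 hd a, dsucc d hd0 hd b]
  have hb' : (b:ℝ) ≤ (a:ℝ) := Nat.cast_le.mpr hba
  have pa := (dpos' d hd0 hd a).le
  have pb := (dpos' d hd0 hd b).le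
  nlinarith [mul_nonneg pa pb, mul_le_mul_of_nonneg_right
    (show (7*(b:ℝ)+1)*(7*(b:ℝ)+3) ≤ (7*(a:ℝ)+1)*(7*(a:ℝ)+3) by nlinarith)
    (mul_nonneg pa pb)]

theorem dedge_aux (m : ℕ) : ∀ t a b : ℕ, a = m + t → a ≤ b → d a * d b ≤ d m * d (t + b) := by
  intro t
  induction t with
  | zero => intro a b ha hab; subst ha; simp
  | succ t ih =>
    intro a b ha hab
    have h1 : d a * d b ≤ d (m + t) * d (b + 1) := by
      have h := dexch' d hd0 hd b (m + t) (by omega)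
      have : a = (m + t) + 1 := by omega
      rw [this]; linarith [h]
    have h2 := ih (m + t) (b + 1) rfl (by omega)
    have h3 : t + (b + 1) = t + 1 + b := by omega
    rw [h3] at h2
    linarith

theorem dedge' : ∀ m a b : ℕ, m ≤ a → m ≤ b → d a * d b ≤ d m * d (a + b - m) := by
  intro m a b hma hmb
  rcases le_total a b with h | h
  · have := dedge_aux d hd0 hd m (a - m) a b (by omega) h
    have e : (a - m) + b = a + b - m := by omega
    rwa [e] at this
  · have := dedge_aux d hd0 hd m (b - m) b a (by omega) h
    have e : (b - m) + a = a + b - m := by omega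
    rw [e] at this; linarith [this, mul_comm (d a) (d b)]

theorem sum_d_inner' (k : ℕ) (hk : 1 ≤ k) :
    ∑ i ∈ Finset.range (k + 1), d i * d (k - i) ≤ 2 * d k + (k : ℝ) * (d 1 * d (k - 1)) := by
  have hsplit : Finset.range (k + 1) = insert 0 (insert k (Finset.Icc 1 (k - 1))) := by
    ext x; simp [Finset.mem_range, Finset.mem_Icc, Finset.mem_insert]; omega
  rw [hsplit, Finset.sum_insert (by simp [Finset.mem_Icc]; omega),
    Finset.sum_insert (by simp [Finset.mem_Icc]; omega)]
  have h1 : ∑ i ∈ Finset.Icc 1 (k - 1), d i * d (k - i)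
      ≤ ∑ i ∈ Finset.Icc 1 (k - 1), d 1 * d (k - 1) := by
    apply Finset.sum_le_sum
    intro i hi
    simp [Finset.mem_Icc] at hi
    have := dedge' d hd0 hd 1 i (k - i) (by omega) (by omega)
    have e : i + (k - i) - 1 = k - 1 := by omega
    rwa [e] at this
  rw [Finset.sum_const, Nat.card_Icc, nsmul_eq_mul] at h1
  have hcard : ((k - 1 + 1 - 1 : ℕ) : ℝ) ≤ (k : ℝ) := by exact_mod_cast (by omega : (k-1+1-1:ℕ) ≤ k)
  have hd1pos := (dpos' d hd0 hd 1).le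
  have hdk1pos := (dpos' d hd0 hd (k - 1)).le
  have e0 : d (k - 0) = d k := by norm_num
  have ek : d (k - k) = 1 := by rw [Nat.sub_self, hd0]
  rw [e0, ek, hd0]
  nlinarith [mul_nonneg hd1pos hdk1pos, mul_le_mul_of_nonneg_right hcard (mul_nonneg hd1pos hdk1pos)]

theorem sum_d_outer'' (n : ℕ) (hn : 9 ≤ n) :
    ∑ k ∈ Finset.Icc 1 (n - 1), d k * d (n - k)
      ≤ 2 * (d 1 * d (n - 1)) + (n : ℝ) * (d 2 * d (n - 2)) := by
  have hsplit : Finset.Icc 1 (n - 1) = insert 1 (insert (n - 1) (Finset.Icc 2 (n - 2))) := by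
    ext x; simp [Finset.mem_Icc, Finset.mem_insert]; omega
  rw [hsplit, Finset.sum_insert (by simp [Finset.mem_Icc]; omega),
    Finset.sum_insert (by simp [Finset.mem_Icc]; omega)]
  have h1 : ∑ k ∈ Finset.Icc 2 (n - 2), d k * d (n - k)
      ≤ ∑ k ∈ Finset.Icc 2 (n - 2), d 2 * d (n - 2) := by
    apply Finset.sum_le_sum
    intro k hk
    simp [Finset.mem_Icc] at hk
    have := dedge' d hd0 hd 2 k (n - k) (by omega) (by omega)
    have e : k + (n - k) - 2 = n - 2 := by omega
    rwa [e] at this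
  rw [Finset.sum_const, Nat.card_Icc, nsmul_eq_mul] at h1
  have hcard : ((n - 2 + 1 - 2 : ℕ) : ℝ) ≤ (n : ℝ) := by exact_mod_cast (by omega : (n-2+1-2:ℕ) ≤ n)
  have hp := mul_nonneg (dpos' d hd0 hd 2).le (dpos' d hd0 hd (n - 2)).le
  have e1 : d (n - (n - 1)) = d 1 := by congr 1; omega
  rw [e1]
  nlinarith [mul_le_mul_of_nonneg_right hcard hp, mul_comm (d (n-1)) (d 1)]

theorem sum_d_outer3 (n : ℕ) (hn : 9 ≤ n) :
    ∑ k ∈ Finset.Icc 1 (n - 1), (k : ℝ) * (d (n - k) * d (k - 1))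
      ≤ d (n - 1) + (n : ℝ) ^ 2 * (d 1 * d (n - 2)) := by
  have hsplit : Finset.Icc 1 (n - 1) = insert 1 (Finset.Icc 2 (n - 1)) := by
    ext x; simp [Finset.mem_Icc, Finset.mem_insert]; omega
  rw [hsplit, Finset.sum_insert (by simp [Finset.mem_Icc])]
  have h1 : ∑ k ∈ Finset.Icc 2 (n - 1), (k : ℝ) * (d (n - k) * d (k - 1))
      ≤ ∑ k ∈ Finset.Icc 2 (n - 1), (n : ℝ) * (d 1 * d (n - 2)) := by
    apply Finset.sum_le_sum
    intro k hk
    simp [Finset.mem_Icc] at hk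
    have h2 := dedge' d hd0 hd 1 (n - k) (k - 1) (by omega) (by omega)
    have e : (n - k) + (k - 1) - 1 = n - 2 := by omega
    rw [e] at h2
    have hkn : (k : ℝ) ≤ (n : ℝ) := by exact_mod_cast (by omega : k ≤ n)
    have hk0 : (0:ℝ) ≤ (k : ℝ) := Nat.cast_nonneg k
    have hp := mul_nonneg (dpos' d hd0 hd (n - k)).le (dpos' d hd0 hd (k - 1)).le
    have hq := mul_nonneg (dpos' d hd0 hd 1).le (dpos' d hd0 hd (n - 2)).le
    nlinarith
  rw [Finset.sum_const, Nat.card_Icc, nsmul_eq_mul] at h1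
  have hcard : ((n - 1 + 1 - 2 : ℕ) : ℝ) ≤ (n : ℝ) := by exact_mod_cast (by omega : (n-1+1-2:ℕ) ≤ n)
  have hp := mul_nonneg (dpos' d hd0 hd 1).le (dpos' d hd0 hd (n - 2)).le
  have hn0 : (0:ℝ) ≤ (n : ℝ) := Nat.cast_nonneg n
  have e1 : d (1 - 1) = 1 := by rw [Nat.sub_self, hd0]
  rw [e1]
  have hnn := mul_nonneg hn0 hp
  have h2 : ∑ k ∈ Finset.Icc 2 (n - 1), (k : ℝ) * (d (n - k) * d (k - 1))
      ≤ (n : ℝ) ^ 2 * (d 1 * d (n - 2)) := by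
    calc ∑ k ∈ Finset.Icc 2 (n - 1), (k : ℝ) * (d (n - k) * d (k - 1))
        ≤ ↑(n - 1 + 1 - 2) * ((n : ℝ) * (d 1 * d (n - 2))) := h1
      _ ≤ (n : ℝ) * ((n : ℝ) * (d 1 * d (n - 2))) := mul_le_mul_of_nonneg_right hcard hnn
      _ = (n : ℝ) ^ 2 * (d 1 * d (n - 2)) := by ring
  push_cast
  linarith

theorem key (hc : ∀ n : ℕ, 1 ≤ n → c n =
      (7 * (n : ℝ) - 6) * (7 * (n : ℝ) - 4) / 4 * c (n - 1)
      + (1 / 2) * ∑ k ∈ Finset.Icc 1 (n - 1),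
          (7 * (n : ℝ) - 7 * (k : ℝ) - 6) * (7 * (n : ℝ) - 7 * (k : ℝ) - 4) / 2
            * c (n - k - 1) * ∑ i ∈ Finset.range (k + 1), c i * c (k - i)
      - (1 / 2) * ∑ k ∈ Finset.Icc 1 (n - 1), c k * c (n - k))
    (n : ℕ) (hn : 9 ≤ n)
    (Hlow : ∀ m, m < n → d m ≤ c m) (Hhigh : ∀ m, m < n → c m ≤ 1.324 * d m) :
    (7 * (n : ℝ) - 6) * (7 * (n : ℝ) - 4) / 4 * c (n - 1)
        - 1.0787 / ((n : ℝ) * ((n : ℝ) - 1)) * d n ≤ c n ∧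
      c n ≤ (7 * (n : ℝ) - 6) * (7 * (n : ℝ) - 4) / 4 * c (n - 1)
        + 1.0787 / ((n : ℝ) * ((n : ℝ) - 1)) * d n := by
  have hN : (9 : ℝ) ≤ (n : ℝ) := by exact_mod_cast hn
  have hcn := hc n (by omega)
  have hcpos : ∀ m, m < n → 0 < c m := fun m hm => lt_of_lt_of_le (dpos' d hd0 hd m) (Hlow m hm)
  -- bound on middle sum, per term
  have hM : ∀ k ∈ Finset.Icc 1 (n - 1),
      (7 * (n : ℝ) - 7 * (k : ℝ) - 6) * (7 * (n : ℝ) - 7 * (k : ℝ) - 4) / 2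
        * c (n - k - 1) * ∑ i ∈ Finset.range (k + 1), c i * c (k - i)
      ≤ 1.324 ^ 3 * 2 * (d (n - k) * (2 * d k + (k : ℝ) * (d 1 * d (k - 1)))) := by
    intro k hk
    simp only [Finset.mem_Icc] at hk
    have hK : (k : ℝ) ≤ (n : ℝ) - 1 := by
      have : (k : ℝ) ≤ ((n - 1 : ℕ) : ℝ) := Nat.cast_le.mpr hk.2
      rwa [Nat.cast_sub (by omega), Nat.cast_one] at this
    have hK1 : (1 : ℝ) ≤ (k : ℝ) := by exact_mod_cast hk.1
    -- coefficient identity: A/4 * d (n-k-1) = d (n-k)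
    have hcoe : (7 * (n : ℝ) - 7 * (k : ℝ) - 6) * (7 * (n : ℝ) - 7 * (k : ℝ) - 4) / 4
        * d (n - k - 1) = d (n - k) := by
      have h := hd (n - k) (by omega)
      rw [Nat.cast_sub (by omega)] at h
      rw [h]; ring
    have hA : (0 : ℝ) ≤ (7 * (n : ℝ) - 7 * (k : ℝ) - 6) * (7 * (n : ℝ) - 7 * (k : ℝ) - 4) := by
      nlinarith
    -- inner sum bound
    have hinner : ∑ i ∈ Finset.range (k + 1), c i * c (k - i)
        ≤ 1.324 ^ 2 * ∑ i ∈ Finset.range (k + 1), d i * d (k - i) := by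
      rw [Finset.mul_sum]
      apply Finset.sum_le_sum
      intro i hi
      simp only [Finset.mem_range] at hi
      have hi1 : i < n := by omega
      have hi2 : k - i < n := by omega
      have h1 := Hhigh i hi1
      have h2 := Hhigh (k - i) hi2
      have p1 := (hcpos (k - i) hi2).le
      have p2 := (dpos' d hd0 hd i).le
      have p3 := (dpos' d hd0 hd (k - i)).le
      calc c i * c (k - i) ≤ (1.324 * d i) * (1.324 * d (k - i)) := by
            apply mul_le_mul h1 h2 p1 (by norm_num; nlinarith)
        _ = 1.324 ^ 2 * (d i * d (k - i)) := by ring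
    have hinner2 : ∑ i ∈ Finset.range (k + 1), c i * c (k - i)
        ≤ 1.324 ^ 2 * (2 * d k + (k : ℝ) * (d 1 * d (k - 1))) := by
      calc ∑ i ∈ Finset.range (k + 1), c i * c (k - i)
          ≤ 1.324 ^ 2 * ∑ i ∈ Finset.range (k + 1), d i * d (k - i) := hinner
        _ ≤ 1.324 ^ 2 * (2 * d k + (k : ℝ) * (d 1 * d (k - 1))) := by
            have := sum_d_inner' d hd0 hd k hk.1
            nlinarith
    have hc1 : c (n - k - 1) ≤ 1.324 * d (n - k - 1) := Hhigh _ (by omega)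
    have hp1 := (hcpos (n - k - 1) (by omega)).le
    have hp2 := (dpos' d hd0 hd (n - k - 1)).le
    have hinpos : 0 ≤ ∑ i ∈ Finset.range (k + 1), c i * c (k - i) := by
      apply Finset.sum_nonneg
      intro i hi
      simp only [Finset.mem_range] at hi
      exact mul_nonneg (hcpos i (by omega)).le (hcpos (k - i) (by omega)).le
    have hin2pos : 0 ≤ 2 * d k + (k : ℝ) * (d 1 * d (k - 1)) := by
      have := dpos' d hd0 hd k
      have := dpos' d hd0 hd 1
      have := dpos' d hd0 hd (k - 1)
      nlinarith
    calc (7 * (n : ℝ) - 7 * (k : ℝ) - 6) * (7 * (n : ℝ) - 7 * (k : ℝ) - 4) / 2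
          * c (n - k - 1) * ∑ i ∈ Finset.range (k + 1), c i * c (k - i)
        ≤ (7 * (n : ℝ) - 7 * (k : ℝ) - 6) * (7 * (n : ℝ) - 7 * (k : ℝ) - 4) / 2
          * (1.324 * d (n - k - 1)) * (1.324 ^ 2 * (2 * d k + (k : ℝ) * (d 1 * d (k - 1)))) := by
          apply mul_le_mul
          · apply mul_le_mul_of_nonneg_left hc1 (by nlinarith)
          · exact hinner2
          · exact hinpos
          · positivity
      _ = 1.324 ^ 3 * 2 * (((7 * (n : ℝ) - 7 * (k : ℝ) - 6) * (7 * (n : ℝ) - 7 * (k : ℝ) - 4) / 4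
            * d (n - k - 1)) * (2 * d k + (k : ℝ) * (d 1 * d (k - 1)))) := by ring
      _ = 1.324 ^ 3 * 2 * (d (n - k) * (2 * d k + (k : ℝ) * (d 1 * d (k - 1)))) := by rw [hcoe]
  -- sum of middle terms
  set N := (n : ℝ) with hNdef
  have hdnpos := dpos' d hd0 hd n
  have hMsum1 : ∑ k ∈ Finset.Icc 1 (n - 1),
      (7 * N - 7 * (k : ℝ) - 6) * (7 * N - 7 * (k : ℝ) - 4) / 2
        * c (n - k - 1) * ∑ i ∈ Finset.range (k + 1), c i * c (k - i)
      ≤ ∑ k ∈ Finset.Icc 1 (n - 1),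
        1.324 ^ 3 * 2 * (d (n - k) * (2 * d k + (k : ℝ) * (d 1 * d (k - 1)))) :=
    Finset.sum_le_sum hM
  have hMsum2 : ∑ k ∈ Finset.Icc 1 (n - 1),
        1.324 ^ 3 * 2 * (d (n - k) * (2 * d k + (k : ℝ) * (d 1 * d (k - 1))))
      = 1.324 ^ 3 * 4 * ∑ k ∈ Finset.Icc 1 (n - 1), d k * d (n - k)
        + 1.324 ^ 3 * 2 * d 1 * ∑ k ∈ Finset.Icc 1 (n - 1), (k : ℝ) * (d (n - k) * d (k - 1)) := by
    rw [Finset.mul_sum, Finset.mul_sum, ← Finset.sum_add_distrib]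
    apply Finset.sum_congr rfl
    intro k _
    ring
  have hS := sum_d_outer'' d hd0 hd n hn
  have hS' := sum_d_outer3 d hd0 hd n hn
  have hd1pos := dpos' d hd0 hd 1
  have hMub : ∑ k ∈ Finset.Icc 1 (n - 1),
      (7 * N - 7 * (k : ℝ) - 6) * (7 * N - 7 * (k : ℝ) - 4) / 2
        * c (n - k - 1) * ∑ i ∈ Finset.range (k + 1), c i * c (k - i)
      ≤ 1.324 ^ 3 * 4 * (2 * (d 1 * d (n - 1)) + N * (d 2 * d (n - 2)))
        + 1.324 ^ 3 * 2 * d 1 * (d (n - 1) + N ^ 2 * (d 1 * d (n - 2))) := by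
    rw [hMsum2] at hMsum1
    have c1 : (0:ℝ) ≤ 1.324 ^ 3 * 4 := by norm_num
    have c2 : (0:ℝ) ≤ 1.324 ^ 3 * 2 * d 1 := by positivity
    nlinarith [mul_le_mul_of_nonneg_left hS c1, mul_le_mul_of_nonneg_left hS' c2]
  have hMpos : 0 ≤ ∑ k ∈ Finset.Icc 1 (n - 1),
      (7 * N - 7 * (k : ℝ) - 6) * (7 * N - 7 * (k : ℝ) - 4) / 2
        * c (n - k - 1) * ∑ i ∈ Finset.range (k + 1), c i * c (k - i) := by
    apply Finset.sum_nonneg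
    intro k hk
    simp only [Finset.mem_Icc] at hk
    have hK : (k : ℝ) ≤ N - 1 := by
      have : (k : ℝ) ≤ ((n - 1 : ℕ) : ℝ) := Nat.cast_le.mpr hk.2
      rwa [Nat.cast_sub (by omega), Nat.cast_one] at this
    have hA : (0 : ℝ) ≤ (7 * N - 7 * (k : ℝ) - 6) * (7 * N - 7 * (k : ℝ) - 4) := by nlinarith
    have hin : 0 ≤ ∑ i ∈ Finset.range (k + 1), c i * c (k - i) := by
      apply Finset.sum_nonneg
      intro i hi
      simp only [Finset.mem_range] at hi
      exact mul_nonneg (hcpos i (by omega)).le (hcpos (k - i) (by omega)).le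
    have := (hcpos (n - k - 1) (by omega)).le
    positivity
  -- subtracted sum bounds
  have hS2pos : 0 ≤ ∑ k ∈ Finset.Icc 1 (n - 1), c k * c (n - k) := by
    apply Finset.sum_nonneg
    intro k hk
    simp only [Finset.mem_Icc] at hk
    exact mul_nonneg (hcpos k (by omega)).le (hcpos (n - k) (by omega)).le
  have hS2ub : ∑ k ∈ Finset.Icc 1 (n - 1), c k * c (n - k)
      ≤ 1.324 ^ 2 * (2 * (d 1 * d (n - 1)) + N * (d 2 * d (n - 2))) := by
    have step : ∑ k ∈ Finset.Icc 1 (n - 1), c k * c (n - k)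
        ≤ 1.324 ^ 2 * ∑ k ∈ Finset.Icc 1 (n - 1), d k * d (n - k) := by
      rw [Finset.mul_sum]
      apply Finset.sum_le_sum
      intro k hk
      simp only [Finset.mem_Icc] at hk
      have h1 := Hhigh k (by omega)
      have h2 := Hhigh (n - k) (by omega)
      have p1 := (hcpos (n - k) (by omega)).le
      have p2 := (dpos' d hd0 hd k).le
      have p3 := (dpos' d hd0 hd (n - k)).le
      calc c k * c (n - k) ≤ (1.324 * d k) * (1.324 * d (n - k)) :=
            mul_le_mul h1 h2 p1 (by nlinarith)
        _ = 1.324 ^ 2 * (d k * d (n - k)) := by ring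
    nlinarith
  -- explicit d values
  have hd1v : d 1 = 3 / 4 := by
    have h := hd 1 (by norm_num)
    norm_num [hd0] at h
    linarith
  have hd2v : d 2 = 15 := by
    have h := hd 2 (by norm_num)
    norm_num [hd1v] at h
    linarith
  have hP : (0:ℝ) < (7 * N - 6) * (7 * N - 4) := by nlinarith
  have hQ : (0:ℝ) < (7 * N - 13) * (7 * N - 11) := by nlinarith
  have hdn1 : d (n - 1) = 4 * d n / ((7 * N - 6) * (7 * N - 4)) := by
    have h := hd n (by omega)
    rw [h, ← hNdef]
    field_simp
    rw [mul_assoc, mul_div_cancel_right₀ _ hP.ne']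
  have hdn2 : d (n - 2) = 16 * d n / (((7 * N - 6) * (7 * N - 4)) * ((7 * N - 13) * (7 * N - 11))) := by
    have h := hd (n - 1) (by omega)
    rw [Nat.cast_sub (by omega), Nat.cast_one] at h
    have e : (n - 1 - 1 : ℕ) = n - 2 := by omega
    rw [e] at h
    have hco : (7 * (N - 1) - 6) * (7 * (N - 1) - 4) = (7 * N - 13) * (7 * N - 11) := by ring
    rw [hco] at h
    rw [hdn1] at h
    rw [eq_div_iff (mul_pos hP hQ).ne']
    rw [div_eq_iff hP.ne'] at h
    linear_combination -4 * h
  -- numeric bounds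
  have hnum_u := numeric_u N (d n) hN hdnpos
  have hnum_l := numeric_l N (d n) hN hdnpos
  have hUeq : 1.324 ^ 3 * 4 * (2 * (d 1 * d (n - 1)) + N * (d 2 * d (n - 2)))
        + 1.324 ^ 3 * 2 * d 1 * (d (n - 1) + N ^ 2 * (d 1 * d (n - 2)))
      = 2 * ((1/2) * (1.324 ^ 3 * 4 * (2 * ((3/4) * (4 * d n / ((7*N-6)*(7*N-4))))
        + N * (15 * (16 * d n / (((7*N-6)*(7*N-4)) * ((7*N-13)*(7*N-11))))))
      + 1.324 ^ 3 * 2 * (3/4) * ((4 * d n / ((7*N-6)*(7*N-4)))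
        + N ^ 2 * ((3/4) * (16 * d n / (((7*N-6)*(7*N-4)) * ((7*N-13)*(7*N-11)))))))) := by
    rw [hd1v, hd2v, hdn1, hdn2]
    ring
  have hLeq : 1.324 ^ 2 * (2 * (d 1 * d (n - 1)) + N * (d 2 * d (n - 2)))
      = 2 * ((1/2) * (1.324 ^ 2 * (2 * ((3/4) * (4 * d n / ((7*N-6)*(7*N-4))))
        + N * (15 * (16 * d n / (((7*N-6)*(7*N-4)) * ((7*N-13)*(7*N-11)))))))) := by
    rw [hd1v, hd2v, hdn1, hdn2]
    ring
  constructor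
  · rw [hcn]
    have := hS2ub
    rw [hLeq] at this
    linarith
  · rw [hcn]
    have := hMub
    rw [hUeq] at this
    linarith

end

end BTaux

theorem b_tail_bounds (c d b : ℕ → ℝ)
    (hc0 : c 0 = 1)
    (hc : ∀ n : ℕ, 1 ≤ n → c n =
      (7 * (n : ℝ) - 6) * (7 * (n : ℝ) - 4) / 4 * c (n - 1)
      + (1 / 2) * ∑ k ∈ Finset.Icc 1 (n - 1),
          (7 * (n : ℝ) - 7 * (k : ℝ) - 6) * (7 * (n : ℝ) - 7 * (k : ℝ) - 4) / 2
            * c (n - k - 1) * ∑ i ∈ Finset.range (k + 1), c i * c (k - i)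
      - (1 / 2) * ∑ k ∈ Finset.Icc 1 (n - 1), c k * c (n - k))
    (hd0 : d 0 = 1)
    (hd : ∀ n : ℕ, 1 ≤ n → d n = (7 * (n : ℝ) - 6) * (7 * (n : ℝ) - 4) / 4 * d (n - 1))
    (hb : ∀ n : ℕ, b n = c n / d n) :
    ∀ k : ℕ, 8 ≤ k → 1 + 1.0787 / (k : ℝ) ≤ b k ∧ b k ≤ 1.324 - 1.0787 / (k : ℝ) := by
  have hdpos := BTaux.dpos' d hd0 hd
  have hcv1 := hc 1 (by norm_num)
  norm_num [hc0] at hcv1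
  have hcv2 := hc 2 (by norm_num)
  norm_num [show (Finset.Icc 1 1 : Finset ℕ) = {1} by decide, Finset.sum_range_succ, hc0, hcv1] at hcv2
  have hcv3 := hc 3 (by norm_num)
  norm_num [show (Finset.Icc 1 2 : Finset ℕ) = {1,2} by decide, Finset.sum_range_succ, hc0, hcv1, hcv2] at hcv3
  have hcv4 := hc 4 (by norm_num)
  norm_num [show (Finset.Icc 1 3 : Finset ℕ) = {1,2,3} by decide, Finset.sum_range_succ, hc0, hcv1, hcv2, hcv3] at hcv4
  have hcv5 := hc 5 (by norm_num)
  norm_num [show (Finset.Icc 1 4 : Finset ℕ) = {1,2,3,4} by decide, Finset.sum_range_succ, hc0, hcv1, hcv2, hcv3, hcv4] at hcv5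
  have hcv6 := hc 6 (by norm_num)
  norm_num [show (Finset.Icc 1 5 : Finset ℕ) = {1,2,3,4,5} by decide, Finset.sum_range_succ, hc0, hcv1, hcv2, hcv3, hcv4, hcv5] at hcv6
  have hcv7 := hc 7 (by norm_num)
  norm_num [show (Finset.Icc 1 6 : Finset ℕ) = {1,2,3,4,5,6} by decide, Finset.sum_range_succ, hc0, hcv1, hcv2, hcv3, hcv4, hcv5, hcv6] at hcv7
  have hcv8 := hc 8 (by norm_num)
  norm_num [show (Finset.Icc 1 7 : Finset ℕ) = {1,2,3,4,5,6,7} by decide, Finset.sum_range_succ, hc0, hcv1, hcv2, hcv3, hcv4, hcv5, hcv6, hcv7] at hcv8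
  have hdv1 := hd 1 (by norm_num)
  norm_num [hd0] at hdv1
  have hdv2 := hd 2 (by norm_num)
  norm_num [hdv1] at hdv2
  have hdv3 := hd 3 (by norm_num)
  norm_num [hdv2] at hdv3
  have hdv4 := hd 4 (by norm_num)
  norm_num [hdv3] at hdv4
  have hdv5 := hd 5 (by norm_num)
  norm_num [hdv4] at hdv5
  have hdv6 := hd 6 (by norm_num)
  norm_num [hdv5] at hdv6
  have hdv7 := hd 7 (by norm_num)
  norm_num [hdv6] at hdv7
  have hdv8 := hd 8 (by norm_num)
  norm_num [hdv7] at hdv8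
  have main : ∀ n : ℕ, ((d n ≤ c n ∧ c n ≤ 1.324 * d n) ∧
      (8 ≤ n → 1 + 1.0787 / (n : ℝ) ≤ b n ∧ b n ≤ 1.324 - 1.0787 / (n : ℝ))) := by
    intro n
    induction n using Nat.strong_induction_on with
    | _ n IH =>
      by_cases hn9 : 9 ≤ n
      · have Hlow : ∀ m, m < n → d m ≤ c m := fun m hm => (IH m hm).1.1
        have Hhigh : ∀ m, m < n → c m ≤ 1.324 * d m := fun m hm => (IH m hm).1.2
        have hkey := BTaux.key c d hd0 hd hc n hn9 Hlow Hhigh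
        have hprev := (IH (n - 1) (by omega)).2 (by omega)
        have hcast : ((n - 1 : ℕ) : ℝ) = (n : ℝ) - 1 := by
          rw [Nat.cast_sub (by omega), Nat.cast_one]
        rw [hcast] at hprev
        have hN : (9 : ℝ) ≤ (n : ℝ) := by exact_mod_cast hn9
        have hdn := hdpos n
        have hdn1 := hdpos (n - 1)
        have hrd : (7 * (n : ℝ) - 6) * (7 * (n : ℝ) - 4) / 4 * d (n - 1) = d n :=
          (hd n (by omega)).symm
        have hcn1 : c (n - 1) = b (n - 1) * d (n - 1) := by
          rw [hb (n - 1)]; field_simp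
        have hrc : (7 * (n : ℝ) - 6) * (7 * (n : ℝ) - 4) / 4 * c (n - 1) = b (n - 1) * d n := by
          rw [hcn1, ← hrd]; ring
        rw [hrc] at hkey
        have hdiv : 1.0787 / ((n : ℝ) - 1) - 1.0787 / ((n : ℝ) * ((n : ℝ) - 1))
            = 1.0787 / (n : ℝ) := by
          have h1 : (0:ℝ) < (n:ℝ) - 1 := by linarith
          have h2 : (0:ℝ) < (n:ℝ) := by linarith
          rw [div_sub_div _ _ h1.ne' (by positivity : ((n:ℝ) * ((n:ℝ) - 1)) ≠ 0),
            div_eq_div_iff (by positivity : (((n:ℝ)-1) * ((n:ℝ) * ((n:ℝ)-1))) ≠ 0) h2.ne']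
          ring
        have hdiv' : (1.0787 / ((n:ℝ) - 1)) * d n - (1.0787 / ((n:ℝ) * ((n:ℝ) - 1))) * d n
            = (1.0787 / (n:ℝ)) * d n := by rw [← sub_mul, hdiv]
        have hlow2 : (1 + 1.0787 / (n : ℝ)) * d n ≤ c n := by
          have h1 := mul_le_mul_of_nonneg_right hprev.1 hdn.le
          have h2 := hkey.1
          nlinarith [hdiv']
        have hhigh2 : c n ≤ (1.324 - 1.0787 / (n : ℝ)) * d n := by
          have h1 := mul_le_mul_of_nonneg_right hprev.2 hdn.le
          have h2 := hkey.2
          nlinarith [hdiv']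
        have hBpos : (0:ℝ) < 1.0787 / (n : ℝ) := by positivity
        have hblow : 1 + 1.0787 / (n : ℝ) ≤ b n := by
          rw [hb n, le_div_iff₀ hdn]
          exact hlow2
        have hbhigh : b n ≤ 1.324 - 1.0787 / (n : ℝ) := by
          rw [hb n, div_le_iff₀ hdn]
          exact hhigh2
        refine ⟨⟨?_, ?_⟩, fun _ => ⟨hblow, hbhigh⟩⟩
        · nlinarith [mul_nonneg hBpos.le hdn.le]
        · nlinarith [mul_nonneg hBpos.le hdn.le]
      · interval_cases n
        · exact ⟨⟨by rw [hc0, hd0], by rw [hc0, hd0]; norm_num⟩, fun h8 => absurd h8 (by norm_num)⟩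
        · exact ⟨⟨by rw [hcv1, hdv1], by rw [hcv1, hdv1]; norm_num⟩, fun h8 => absurd h8 (by norm_num)⟩
        · exact ⟨⟨by rw [hcv2, hdv2]; norm_num, by rw [hcv2, hdv2]; norm_num⟩, fun h8 => absurd h8 (by norm_num)⟩
        · exact ⟨⟨by rw [hcv3, hdv3]; norm_num, by rw [hcv3, hdv3]; norm_num⟩, fun h8 => absurd h8 (by norm_num)⟩
        · exact ⟨⟨by rw [hcv4, hdv4]; norm_num, by rw [hcv4, hdv4]; norm_num⟩, fun h8 => absurd h8 (by norm_num)⟩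
        · exact ⟨⟨by rw [hcv5, hdv5]; norm_num, by rw [hcv5, hdv5]; norm_num⟩, fun h8 => absurd h8 (by norm_num)⟩
        · exact ⟨⟨by rw [hcv6, hdv6]; norm_num, by rw [hcv6, hdv6]; norm_num⟩, fun h8 => absurd h8 (by norm_num)⟩
        · exact ⟨⟨by rw [hcv7, hdv7]; norm_num, by rw [hcv7, hdv7]; norm_num⟩, fun h8 => absurd h8 (by norm_num)⟩
        · exact ⟨⟨by rw [hcv8, hdv8]; norm_num, by rw [hcv8, hdv8]; norm_num⟩, fun _ => by
            constructor
            · rw [hb 8, hcv8, hdv8, le_div_iff₀ (by norm_num)]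
              norm_num
            · rw [hb 8, hcv8, hdv8, div_le_iff₀ (by norm_num)]
              norm_num⟩
  intro k hk
  rcases Nat.exists_eq_add_of_le hk with ⟨m, rfl⟩
  exact (main (8 + m)).2 (by omega)
end

section
/- The sequence b_n = c_n/d_n converges, and its limit b satisfies 1 ≤ b ≤ 1.324; in particular b ≠ 0. -/
open Finset
set_option maxHeartbeats 3000000

noncomputable def aA (n : ℕ) : ℝ := (7 * (n : ℝ) - 6) * (7 * (n : ℝ) - 4) / 4

lemma aA_pos {n : ℕ} (h : 1 ≤ n) : 0 < aA n := by
  have h1 : (1 : ℝ) ≤ (n : ℝ) := by exact_mod_cast h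
  unfold aA; nlinarith

lemma aA_mono {m m' : ℕ} (h1 : 1 ≤ m) (h : m ≤ m') : aA m ≤ aA m' := by
  have h1' : (1 : ℝ) ≤ (m : ℝ) := by exact_mod_cast h1
  have h' : (m : ℝ) ≤ (m' : ℝ) := by exact_mod_cast h
  unfold aA; nlinarith

section dlem
variable {d : ℕ → ℝ} (hd0 : d 0 = 1) (hds : ∀ n : ℕ, d (n + 1) = aA (n + 1) * d n)

include hd0 hds in
lemma d_pos_s14 : ∀ n, 0 < d n := by
  intro n
  induction n with
  | zero => rw [hd0]; norm_num
  | succ k ih => rw [hds k]; exact mul_pos (aA_pos (by omega)) ih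

include hd0 hds in
lemma d_shift (t : ℕ) : ∀ i j : ℕ, d (t + i) * d (t + j) ≤ d t * d (t + i + j) := by
  intro i
  induction i with
  | zero => intro j; simp [mul_comm]
  | succ k ih =>
    intro j
    have e1 : t + (k + 1) = (t + k) + 1 := by omega
    have e2 : t + (k + 1) + j = (t + k + j) + 1 := by omega
    rw [e1, hds (t + k)]
    rw [show t + k + 1 + j = (t + k + j) + 1 from by omega, hds (t + k + j)]
    have hposd : 0 < d (t + j) := d_pos_s14 hd0 hds _
    have h1 : aA (t + k + 1) * d (t + k) * d (t + j)
        ≤ aA (t + k + 1) * (d t * d (t + k + j)) := by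
      have := ih j
      have ha := aA_pos (n := t + k + 1) (by omega)
      nlinarith
    have h2 : aA (t + k + 1) ≤ aA (t + k + j + 1) := aA_mono (by omega) (by omega)
    have hdd : 0 ≤ d t * d (t + k + j) :=
      le_of_lt (mul_pos (d_pos_s14 hd0 hds _) (d_pos_s14 hd0 hds _))
    calc aA (t + k + 1) * d (t + k) * d (t + j)
        ≤ aA (t + k + 1) * (d t * d (t + k + j)) := h1
      _ ≤ aA (t + k + j + 1) * (d t * d (t + k + j)) := by nlinarith
      _ = d t * (aA (t + k + j + 1) * d (t + k + j)) := by ring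

include hd0 hds in
lemma d_pair {k n t : ℕ} (h1 : t ≤ k) (h2 : k ≤ n - t) (h3 : 2 * t ≤ n) :
    d k * d (n - k) ≤ d t * d (n - t) := by
  have e1 : k = t + (k - t) := by omega
  have e2 : n - k = t + (n - t - k) := by omega
  have e3 : n - t = t + (k - t) + (n - t - k) := by omega
  calc d k * d (n - k) = d (t + (k - t)) * d (t + (n - t - k)) := by rw [← e1, ← e2]
    _ ≤ d t * d (t + (k - t) + (n - t - k)) := d_shift hd0 hds t _ _
    _ = d t * d (n - t) := by rw [← e3]

end dlem

theorem b_converges (c d : ℕ → ℝ)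
    (hc0 : c 0 = 1)
    (hc : ∀ n : ℕ, 1 ≤ n → c n =
      (7 * (n : ℝ) - 6) * (7 * (n : ℝ) - 4) / 4 * c (n - 1)
      + (1 / 2) * ∑ k ∈ Finset.Icc 1 (n - 1),
          (7 * (n : ℝ) - 7 * (k : ℝ) - 6) * (7 * (n : ℝ) - 7 * (k : ℝ) - 4) / 2
            * c (n - k - 1) * ∑ i ∈ Finset.range (k + 1), c i * c (k - i)
      - (1 / 2) * ∑ k ∈ Finset.Icc 1 (n - 1), c k * c (n - k))
    (hd0 : d 0 = 1)
    (hd : ∀ n : ℕ, 1 ≤ n → d n = (7 * (n : ℝ) - 6) * (7 * (n : ℝ) - 4) / 4 * d (n - 1)) :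
    ∃ b : ℝ, Filter.Tendsto (fun n => c n / d n) Filter.atTop (nhds b) ∧
      1 ≤ b ∧ b ≤ 1.324 ∧ b ≠ 0 := by
  have hds : ∀ n : ℕ, d (n + 1) = aA (n + 1) * d n := by
    intro n
    have h := hd (n + 1) (by omega)
    simpa [aA] using h
  have hcs : ∀ n : ℕ, c (n + 1) = aA (n + 1) * c n
      + (1 / 2) * ∑ k ∈ Finset.Icc 1 n,
          (2 * aA (n + 1 - k)) * c (n - k) * ∑ i ∈ Finset.range (k + 1), c i * c (k - i)
      - (1 / 2) * ∑ k ∈ Finset.Icc 1 n, c k * c (n + 1 - k) := by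
    intro n
    have h := hc (n + 1) (by omega)
    simp only [Nat.add_sub_cancel] at h
    have hA : (7 * ((n + 1 : ℕ) : ℝ) - 6) * (7 * ((n + 1 : ℕ) : ℝ) - 4) / 4 = aA (n + 1) := by
      unfold aA; ring
    have hsum : ∑ k ∈ Finset.Icc 1 n,
          (7 * ((n + 1 : ℕ) : ℝ) - 7 * (k : ℝ) - 6) * (7 * ((n + 1 : ℕ) : ℝ) - 7 * (k : ℝ) - 4) / 2
            * c (n + 1 - k - 1) * ∑ i ∈ Finset.range (k + 1), c i * c (k - i)
        = ∑ k ∈ Finset.Icc 1 n,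
          (2 * aA (n + 1 - k)) * c (n - k) * ∑ i ∈ Finset.range (k + 1), c i * c (k - i) := by
      apply Finset.sum_congr rfl
      intro k hk
      rw [Finset.mem_Icc] at hk
      rw [show n + 1 - k - 1 = n - k from by omega]
      have hcast : ((n + 1 - k : ℕ) : ℝ) = ((n : ℝ) + 1) - (k : ℝ) := by
        rw [Nat.cast_sub (by omega : k ≤ n + 1)]; push_cast; ring
      have hco : (7 * ((n + 1 : ℕ) : ℝ) - 7 * (k : ℝ) - 6) * (7 * ((n + 1 : ℕ) : ℝ) - 7 * (k : ℝ) - 4) / 2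
          = 2 * aA (n + 1 - k) := by
        unfold aA; rw [hcast]; push_cast; ring
      rw [hco]
    rw [h, hsum, hA]
  -- numeric values
  have hd1 : d 1 = 3 / 4 := by
    have h := hds 0; rw [hd0, mul_one] at h; norm_num [aA] at h; exact h
  have hd2 : d 2 = 15 := by
    have h := hds 1; rw [hd1] at h; norm_num [aA] at h; exact h
  have hd3 : d 3 = 3825 / 4 := by
    have h := hds 2; rw [hd2] at h; norm_num [aA] at h; exact h
  have hd4 : d 4 = 126225 := by
    have h := hds 3; rw [hd3] at h; norm_num [aA] at h; exact h
  have hc1 : c 1 = 3 / 4 := by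
    have h := hcs 0
    norm_num [aA, hc0] at h
    exact h
  have hc2 : c 2 = 507 / 32 := by
    have h := hcs 1
    rw [show Finset.Icc 1 1 = {1} from rfl] at h
    norm_num [Finset.sum_range_succ, aA, hc0, hc1] at h
    exact h
  have hc3 : c 3 = 33435 / 32 := by
    have h := hcs 2
    rw [show Finset.Icc 1 2 = {1, 2} from rfl] at h
    norm_num [Finset.sum_range_succ, aA, hc0, hc1, hc2] at h
    exact h
  have hc4 : c 4 = 287936775 / 2048 := by
    have h := hcs 3
    rw [show Finset.Icc 1 3 = {1, 2, 3} from rfl] at h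
    norm_num [Finset.sum_range_succ, aA, hc0, hc1, hc2, hc3] at h
    exact h
  have hdpos : ∀ n, 0 < d n := by
    intro n
    induction n with
    | zero => rw [hd0]; norm_num
    | succ k ih => rw [hds k]; exact mul_pos (aA_pos (by omega)) ih
  -- convolution lower bound
  have conv_ge : ∀ k : ℕ, 1 ≤ k → (∀ m, m ≤ k → 0 ≤ c m) →
      2 * c k ≤ ∑ i ∈ Finset.range (k + 1), c i * c (k - i) := by
    intro k hk hnn
    have hsub : ({0, k} : Finset ℕ) ⊆ Finset.range (k + 1) := by
      intro x hx
      simp only [Finset.mem_insert, Finset.mem_singleton] at hx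
      rcases hx with rfl | rfl <;> simp [Finset.mem_range] <;> omega
    have h2 : ∑ i ∈ ({0, k} : Finset ℕ), c i * c (k - i) = 2 * c k := by
      rw [Finset.sum_pair (by omega : 0 ≠ k)]
      simp [hc0, Nat.sub_self]
      ring
    rw [← h2]
    apply Finset.sum_le_sum_of_subset_of_nonneg hsub
    intro i hi _
    rw [Finset.mem_range] at hi
    exact mul_nonneg (hnn i (by omega)) (hnn (k - i) (by omega))
  -- convolution upper bound
  have conv_le : ∀ k : ℕ, (∀ m, m ≤ k → 0 ≤ c m ∧ c m ≤ (331/250) * d m) →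
      ∑ i ∈ Finset.range (k + 1), c i * c (k - i) ≤ (331/250)^2 * (163/80) * d k := by
    intro k hb
    have step1 : ∑ i ∈ Finset.range (k + 1), c i * c (k - i)
        ≤ (331/250)^2 * ∑ i ∈ Finset.range (k + 1), d i * d (k - i) := by
      rw [Finset.mul_sum]
      apply Finset.sum_le_sum
      intro i hi
      rw [Finset.mem_range] at hi
      obtain ⟨h1, h2⟩ := hb i (by omega)
      obtain ⟨h3, h4⟩ := hb (k - i) (by omega)
      have := hdpos i
      have := hdpos (k - i)
      nlinarith
    have step2 : ∑ i ∈ Finset.range (k + 1), d i * d (k - i) ≤ (163/80) * d k := by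
      match k with
      | 0 => simp [hd0]; norm_num
      | 1 =>
        rw [Finset.sum_range_succ, Finset.sum_range_succ, Finset.sum_range_zero]
        norm_num [hd0, hd1]
      | (m + 2) =>
        have hset : Finset.range (m + 2 + 1)
            = insert 0 (insert (m + 2) (Finset.Icc 1 (m + 1))) := by
          ext x
          simp only [Finset.mem_range, Finset.mem_insert, Finset.mem_Icc]
          omega
        rw [hset, Finset.sum_insert, Finset.sum_insert]
        rotate_left
        · simp
        · simp only [Finset.mem_insert, Finset.mem_Icc]
          push_neg
          omega
        have hmid : ∑ i ∈ Finset.Icc 1 (m + 1), d i * d (m + 2 - i)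
            ≤ ((m : ℝ) + 1) * (d 1 * d (m + 1)) := by
          have hcard : (Finset.Icc 1 (m + 1)).card = m + 1 := by
            rw [Nat.card_Icc]; omega
          have := Finset.sum_le_card_nsmul (Finset.Icc 1 (m + 1))
              (fun i => d i * d (m + 2 - i)) (d 1 * d (m + 1)) ?_
          · rw [hcard] at this
            calc ∑ i ∈ Finset.Icc 1 (m + 1), d i * d (m + 2 - i)
                ≤ (m + 1) • (d 1 * d (m + 1)) := this
              _ = ((m : ℝ) + 1) * (d 1 * d (m + 1)) := by
                  rw [nsmul_eq_mul]; push_cast; ring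
          · intro i hi
            rw [Finset.mem_Icc] at hi
            have := d_pair hd0 hds (k := i) (n := m + 2) (t := 1)
              (by omega) (by omega) (by omega)
            simpa using this
        have hstep : d (m + 2) = aA (m + 2) * d (m + 1) := hds (m + 1)
        have hd1p := hdpos (m + 1)
        have hkey : ((m : ℝ) + 1) * (d 1 * d (m + 1)) ≤ (3/80) * d (m + 2) := by
          rw [hstep, hd1]
          have hx : (0 : ℝ) ≤ (m : ℝ) := Nat.cast_nonneg m
          unfold aA
          push_cast
          nlinarith [mul_nonneg (mul_nonneg hx hx) hd1p.le, mul_nonneg hx hd1p.le]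
        simp only [Nat.sub_zero, Nat.sub_self, hd0, mul_one, one_mul]
        linarith [hmid, hkey]
    calc ∑ i ∈ Finset.range (k + 1), c i * c (k - i)
        ≤ (331/250)^2 * ∑ i ∈ Finset.range (k + 1), d i * d (k - i) := step1
      _ ≤ (331/250)^2 * ((163/80) * d k) := by nlinarith [step2]
      _ = (331/250)^2 * (163/80) * d k := by ring
  -- key sum estimate
  have keyfact : ∀ N : ℕ, 4 ≤ N → (∀ m, m ≤ N → 0 ≤ c m ∧ c m ≤ (331/250) * d m) →
      ∑ k ∈ Finset.Icc 1 N, (2 * aA (N + 1 - k)) * c (N - k) * ∑ i ∈ Finset.range (k + 1), c i * c (k - i)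
        ≤ (8/5) * aA (N + 1) * d N / ((N : ℝ) * ((N : ℝ) + 1)) := by
    intro N hN hb
    have stepA : ∑ k ∈ Finset.Icc 1 N, (2 * aA (N + 1 - k)) * c (N - k) * ∑ i ∈ Finset.range (k + 1), c i * c (k - i)
        ≤ 2 * (331/250)^3 * (163/80) * ∑ k ∈ Finset.Icc 1 N, d (N + 1 - k) * d k := by
      rw [Finset.mul_sum]
      apply Finset.sum_le_sum
      intro k hk
      rw [Finset.mem_Icc] at hk
      have hconv := conv_le k (fun m hm => hb m (by omega))
      have hconvnn : 0 ≤ ∑ i ∈ Finset.range (k + 1), c i * c (k - i) := by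
        apply Finset.sum_nonneg
        intro i hi
        rw [Finset.mem_range] at hi
        exact mul_nonneg (hb i (by omega)).1 (hb (k - i) (by omega)).1
      obtain ⟨hcnn, hcub⟩ := hb (N - k) (by omega)
      have haApos : 0 < aA (N + 1 - k) := aA_pos (by omega)
      have hdrel : aA (N + 1 - k) * d (N - k) = d (N + 1 - k) := by
        have := hds (N - k)
        rw [show N - k + 1 = N + 1 - k from by omega] at this
        linarith
      have hdknn := (hdpos k).le
      have hdNknn := (hdpos (N - k)).le
      calc (2 * aA (N + 1 - k)) * c (N - k) * ∑ i ∈ Finset.range (k + 1), c i * c (k - i)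
          ≤ (2 * aA (N + 1 - k)) * ((331/250) * d (N - k)) * ((331/250)^2 * (163/80) * d k) := by
            apply mul_le_mul
            · apply mul_le_mul_of_nonneg_left hcub (by positivity)
            · exact hconv
            · exact hconvnn
            · positivity
        _ = 2 * (331/250)^3 * (163/80) * ((aA (N + 1 - k) * d (N - k)) * d k) := by ring
        _ = 2 * (331/250)^3 * (163/80) * (d (N + 1 - k) * d k) := by rw [hdrel]
    have stepB : ∑ k ∈ Finset.Icc 1 N, d (N + 1 - k) * d k
        ≤ 2 * (d 1 * d N) + ((N : ℝ) - 2) * (d 2 * d (N - 1)) := by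
      have hset : Finset.Icc 1 N = insert 1 (insert N (Finset.Icc 2 (N - 1))) := by
        ext x
        simp only [Finset.mem_insert, Finset.mem_Icc]
        omega
      rw [hset, Finset.sum_insert, Finset.sum_insert]
      rotate_left
      · simp only [Finset.mem_Icc]; push_neg; omega
      · simp only [Finset.mem_insert, Finset.mem_Icc]; push_neg; omega
      have h1 : d (N + 1 - 1) * d 1 = d 1 * d N := by
        rw [show N + 1 - 1 = N from by omega]; ring
      have h2 : d (N + 1 - N) * d N = d 1 * d N := by
        rw [show N + 1 - N = 1 from by omega]
      have hmid : ∑ k ∈ Finset.Icc 2 (N - 1), d (N + 1 - k) * d k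
          ≤ ((N : ℝ) - 2) * (d 2 * d (N - 1)) := by
        have hcard : (Finset.Icc 2 (N - 1)).card = N - 2 := by
          rw [Nat.card_Icc]; omega
        have hterm : ∀ k ∈ Finset.Icc 2 (N - 1), d (N + 1 - k) * d k ≤ d 2 * d (N - 1) := by
          intro k hk
          rw [Finset.mem_Icc] at hk
          have := d_pair hd0 hds (k := k) (n := N + 1) (t := 2)
            (by omega) (by omega) (by omega)
          rw [show N + 1 - 2 = N - 1 from by omega] at this
          nlinarith [this]
        have := Finset.sum_le_card_nsmul _ _ _ hterm
        rw [hcard] at this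
        calc ∑ k ∈ Finset.Icc 2 (N - 1), d (N + 1 - k) * d k
            ≤ (N - 2) • (d 2 * d (N - 1)) := this
          _ = ((N : ℝ) - 2) * (d 2 * d (N - 1)) := by
              rw [nsmul_eq_mul, Nat.cast_sub (by omega)]; norm_num
      rw [h1, h2]
      linarith
    have stepC : 2 * (331/250)^3 * (163/80) * (2 * (d 1 * d N) + ((N : ℝ) - 2) * (d 2 * d (N - 1)))
        ≤ (8/5) * aA (N + 1) * d N / ((N : ℝ) * ((N : ℝ) + 1)) := by
      obtain ⟨M, rfl⟩ : ∃ M, N = M + 1 := ⟨N - 1, by omega⟩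
      have hM : 3 ≤ M := by omega
      have hx : (4 : ℝ) ≤ (M : ℝ) + 1 := by
        have : (3 : ℝ) ≤ (M : ℝ) := by exact_mod_cast hM
        linarith
      have hdM := hdpos M
      have hdrel : d (M + 1) = aA (M + 1) * d M := hds M
      simp only [Nat.add_sub_cancel]
      rw [hd1, hd2, hdrel]
      rw [le_div_iff₀ (by positivity : (0:ℝ) < ((M + 1 : ℕ) : ℝ) * (((M + 1 : ℕ) : ℝ) + 1))]
      have hy : (0 : ℝ) ≤ (M : ℝ) - 3 := by
        have : (3 : ℝ) ≤ (M : ℝ) := by exact_mod_cast hM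
        linarith
      unfold aA
      push_cast
      linarith [mul_nonneg hy hdM.le,
        mul_nonneg (mul_nonneg hy hy) hdM.le,
        mul_nonneg (mul_nonneg (mul_nonneg hy hy) hy) hdM.le,
        mul_nonneg (mul_nonneg (mul_nonneg (mul_nonneg hy hy) hy) hy) hdM.le,
        hdM.le, hy]
    calc ∑ k ∈ Finset.Icc 1 N, (2 * aA (N + 1 - k)) * c (N - k) * ∑ i ∈ Finset.range (k + 1), c i * c (k - i)
        ≤ 2 * (331/250)^3 * (163/80) * ∑ k ∈ Finset.Icc 1 N, d (N + 1 - k) * d k := stepA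
      _ ≤ 2 * (331/250)^3 * (163/80) * (2 * (d 1 * d N) + ((N : ℝ) - 2) * (d 2 * d (N - 1))) := by
          have hco : (0:ℝ) ≤ 2 * (331/250)^3 * (163/80) := by norm_num
          exact mul_le_mul_of_nonneg_left stepB hco
      _ ≤ (8/5) * aA (N + 1) * d N / ((N : ℝ) * ((N : ℝ) + 1)) := stepC
  -- upper-bound sequence facts
  have UBle : ∀ n : ℕ, 331/250 - (4/5) / (max (n:ℝ) 4) ≤ 331/250 := by
    intro n
    have h1 : (0:ℝ) < max (n:ℝ) 4 := lt_of_lt_of_le (by norm_num) (le_max_right _ _)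
    have h2 : (0:ℝ) < (4/5) / max (n:ℝ) 4 := by positivity
    linarith
  have UBsmall : ∀ n : ℕ, n ≤ 4 → 331/250 - (4/5) / (max (n:ℝ) 4) = (281/250 : ℝ) := by
    intro n h
    rw [max_eq_right (by exact_mod_cast h : (n:ℝ) ≤ 4)]
    norm_num
  -- main induction
  have MAIN : ∀ n : ℕ, (0 ≤ c n ∧ d n ≤ c n ∧ c n ≤ (331/250 - (4/5) / (max (n:ℝ) 4)) * d n)
      ∧ (aA (n+1) * c n ≤ c (n+1) ∧ c (n+1) ≤ 4 * aA (n+1) * c n) := by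
    intro n
    induction n using Nat.strong_induction_on with
    | _ n IH =>
    have part1 : 0 ≤ c n ∧ d n ≤ c n ∧ c n ≤ (331/250 - (4/5) / (max (n:ℝ) 4)) * d n := by
      by_cases hn5 : n ≤ 4
      · interval_cases n <;> rw [UBsmall _ (by omega)] <;>
          norm_num [hc0, hd0, hc1, hd1, hc2, hd2, hc3, hd3, hc4, hd4]
      · obtain ⟨N, rfl⟩ : ∃ N, n = N + 1 := ⟨n - 1, by omega⟩
        have hN : 4 ≤ N := by omega
        have IHN := IH N (by omega)
        have hlow : aA (N+1) * c N ≤ c (N+1) := IHN.2.1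
        have hcNlow : d N ≤ c N := IHN.1.2.1
        have haA : 0 < aA (N+1) := aA_pos (by omega)
        have hdN := hdpos N
        have hlow2 : d (N+1) ≤ c (N+1) := by
          rw [hds N]
          nlinarith
        refine ⟨le_trans (hdpos (N+1)).le hlow2, hlow2, ?_⟩
        have hb : ∀ m, m ≤ N → 0 ≤ c m ∧ c m ≤ (331/250) * d m := by
          intro m hm
          have IHm := IH m (by omega)
          refine ⟨IHm.1.1, le_trans IHm.1.2.2 ?_⟩
          exact mul_le_mul_of_nonneg_right (UBle m) (hdpos m).le
        have hk := keyfact N hN hb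
        have hrec := hcs N
        have hS2 : 0 ≤ ∑ k ∈ Finset.Icc 1 N, c k * c (N + 1 - k) := by
          apply Finset.sum_nonneg
          intro k hk'
          rw [Finset.mem_Icc] at hk'
          exact mul_nonneg (hb k hk'.2).1 (hb (N+1-k) (by omega)).1
        have hx4 : (4:ℝ) ≤ (N:ℝ) := by exact_mod_cast hN
        have hup : c (N+1) ≤ aA (N+1) * c N
            + (1/2) * ∑ k ∈ Finset.Icc 1 N, (2 * aA (N + 1 - k)) * c (N - k) * ∑ i ∈ Finset.range (k + 1), c i * c (k - i) := by
          rw [hrec]; linarith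
        set x : ℝ := (N : ℝ) with hxdef
        have hxpos : (0:ℝ) < x := by linarith
        have hcNub : c N ≤ (331/250 - (4/5)/x) * d N := by
          have := IHN.1.2.2
          rwa [max_eq_left (by linarith : (4:ℝ) ≤ x)] at this
        have t1 : aA (N+1) * c N ≤ aA (N+1) * ((331/250 - (4/5)/x) * d N) :=
          mul_le_mul_of_nonneg_left hcNub haA.le
        have harith : aA (N+1) * ((331/250 - (4/5)/x) * d N)
            + (1/2) * ((8/5) * aA (N+1) * d N / (x * (x + 1)))
            = (331/250 - (4/5)/(x+1)) * (aA (N+1) * d N) := by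
          field_simp
          ring
        have hgoalrw : (331/250 - (4/5) / (max ((N+1 : ℕ):ℝ) 4)) * d (N+1)
            = (331/250 - (4/5)/(x+1)) * (aA (N+1) * d N) := by
          rw [hds N, max_eq_left (by push_cast; linarith : (4:ℝ) ≤ ((N+1 : ℕ):ℝ))]
          push_cast
          ring
        rw [hgoalrw]
        calc c (N+1) ≤ aA (N+1) * c N
            + (1/2) * ∑ k ∈ Finset.Icc 1 N, (2 * aA (N + 1 - k)) * c (N - k) * ∑ i ∈ Finset.range (k + 1), c i * c (k - i) := hup
          _ ≤ aA (N+1) * ((331/250 - (4/5)/x) * d N)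
            + (1/2) * ((8/5) * aA (N+1) * d N / (x * (x + 1))) := by linarith
          _ = (331/250 - (4/5)/(x+1)) * (aA (N+1) * d N) := harith
    have part2 : aA (n+1) * c n ≤ c (n+1) ∧ c (n+1) ≤ 4 * aA (n+1) * c n := by
      by_cases hn4 : n ≤ 3
      · interval_cases n <;>
          norm_num [aA, hc0, hc1, hc2, hc3, hc4] <;> norm_num [hcs]
      · have hn4' : 4 ≤ n := by omega
        have hb : ∀ m, m ≤ n → 0 ≤ c m ∧ c m ≤ (331/250) * d m := by
          intro m hm
          rcases Nat.lt_or_ge m n with h | h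
          · have IHm := IH m h
            exact ⟨IHm.1.1, le_trans IHm.1.2.2
              (mul_le_mul_of_nonneg_right (UBle m) (hdpos m).le)⟩
          · have : m = n := by omega
            subst this
            exact ⟨part1.1, le_trans part1.2.2
              (mul_le_mul_of_nonneg_right (UBle m) (hdpos m).le)⟩
        have hk := keyfact n hn4' hb
        have hrec := hcs n
        have haA : 0 < aA (n+1) := aA_pos (by omega)
        have hS1geS2 : ∑ k ∈ Finset.Icc 1 n, c k * c (n + 1 - k)
            ≤ ∑ k ∈ Finset.Icc 1 n, (2 * aA (n + 1 - k)) * c (n - k) * ∑ i ∈ Finset.range (k + 1), c i * c (k - i) := by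
          apply Finset.sum_le_sum
          intro k hk'
          rw [Finset.mem_Icc] at hk'
          have hmono4 := (IH (n - k) (by omega)).2.2
          rw [show n - k + 1 = n + 1 - k from by omega] at hmono4
          have hconvge := conv_ge k hk'.1 (fun m hm' => (hb m (le_trans hm' hk'.2)).1)
          have hck : 0 ≤ c k := (hb k hk'.2).1
          have hcnk : 0 ≤ c (n - k) := (hb (n - k) (by omega)).1
          have haAk : 0 < aA (n + 1 - k) := aA_pos (by omega)
          calc c k * c (n + 1 - k) ≤ c k * (4 * aA (n + 1 - k) * c (n - k)) :=
                mul_le_mul_of_nonneg_left hmono4 hck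
            _ = (2 * aA (n + 1 - k)) * c (n - k) * (2 * c k) := by ring
            _ ≤ (2 * aA (n + 1 - k)) * c (n - k) * ∑ i ∈ Finset.range (k + 1), c i * c (k - i) := by
                apply mul_le_mul_of_nonneg_left hconvge
                positivity
        constructor
        · rw [hrec]; linarith
        · have hS2 : 0 ≤ ∑ k ∈ Finset.Icc 1 n, c k * c (n + 1 - k) := by
            apply Finset.sum_nonneg
            intro k hk'
            rw [Finset.mem_Icc] at hk'
            exact mul_nonneg (hb k hk'.2).1 (hb (n+1-k) (by omega)).1
          have hx4 : (4:ℝ) ≤ (n:ℝ) := by exact_mod_cast hn4'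
          set x : ℝ := (n : ℝ) with hxdef
          have h20 : (20:ℝ) ≤ x * (x + 1) := by nlinarith
          have hdc : d n ≤ c n := part1.2.1
          have hdn := hdpos n
          have hAcn : 0 ≤ aA (n+1) * c n := mul_nonneg haA.le part1.1
          have hAdn : 0 ≤ aA (n+1) * d n := mul_nonneg haA.le hdn.le
          have hsmall : (8/5) * aA (n+1) * d n / (x * (x + 1)) ≤ aA (n+1) * c n := by
            rw [div_le_iff₀ (by positivity)]
            nlinarith [mul_le_mul_of_nonneg_left hdc haA.le]
          rw [hrec]
          linarith
    exact ⟨part1, part2⟩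
  -- assembly
  have hmono : Monotone (fun n => c n / d n) := by
    apply monotone_nat_of_le_succ
    intro n
    have h := (MAIN n).2.1
    have hdn := hdpos n
    have hdn1 := hdpos (n+1)
    rw [div_le_div_iff₀ hdn hdn1, hds n]
    calc c n * (aA (n+1) * d n) = (aA (n+1) * c n) * d n := by ring
      _ ≤ c (n+1) * d n := mul_le_mul_of_nonneg_right h hdn.le
  have hub : ∀ n : ℕ, c n / d n ≤ 331/250 := by
    intro n
    rw [div_le_iff₀ (hdpos n)]
    exact le_trans (MAIN n).1.2.2 (mul_le_mul_of_nonneg_right (UBle n) (hdpos n).le)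
  have hbdd : BddAbove (Set.range fun n => c n / d n) := by
    refine ⟨331/250, ?_⟩
    rintro y ⟨n, rfl⟩
    exact hub n
  have hone : 1 ≤ ⨆ n, c n / d n := by
    have h0 : c 0 / d 0 = 1 := by rw [hc0, hd0]; norm_num
    have := le_ciSup hbdd 0
    rw [h0] at this
    exact this
  exact ⟨⨆ n, c n / d n, tendsto_atTop_ciSup hmono hbdd, hone,
    le_trans (ciSup_le hub) (by norm_num), (lt_of_lt_of_le zero_lt_one hone).ne'⟩
end

section
/- The coefficients c_n of the asymptotic expansion satisfy c_n ~ Γ(2n+1) · (49/16)^n · n^{-13/14} · b√π/(Γ(1/7)Γ(3/7)) as n → ∞, where b = lim b_n ∈ [1, 1.324]. -/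
/-!
Writing `d n = (49/4)^n Γ(n + 1/7) Γ(n + 3/7) / (Γ(1/7) Γ(3/7))`, the hypothesis says `c n ~ b d n`.
Legendre's duplication formula gives `Γ(2n + 1) = 4^n Γ(n + 1/2) Γ(n + 1) / √π`, so the claim reduces
to `Γ(n + 1/7) Γ(n + 3/7) ~ Γ(n + 1/2) Γ(n + 1) n^(-13/14)`, which follows from three instances of
Wendel's limit `Γ(n + 1 + s) ~ Γ(n + 1) n^s`, itself a restatement of Euler's limit formula.
-/

open Real Filter Topology

namespace Real

lemma Gamma_mul_prod_range_add {s : ℝ} (hs : Gamma s ≠ 0) (n : ℕ) :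
    Gamma s * ∏ j ∈ Finset.range n, (s + j) = Gamma (s + n) := by
  induction n with
  | zero => simp
  | succ n ih =>
    have hsn : s + n ≠ 0 := fun h => hs ((Gamma_eq_zero_iff s).2 ⟨n, by linarith⟩)
    rw [Finset.prod_range_succ, ← mul_assoc, ih, Nat.cast_succ, ← add_assoc, Gamma_add_one hsn]
    ring

lemma tendsto_Gamma_nat_add_one_add_div {s : ℝ} (hs : Gamma s ≠ 0) :
    Tendsto (fun n : ℕ => Gamma (n + 1 + s) / (Gamma (n + 1) * (n : ℝ) ^ s)) atTop (𝓝 1) := by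
  have h := (tendsto_const_nhds (x := Gamma s)).div (GammaSeq_tendsto_Gamma s) hs
  rw [div_self hs] at h
  refine h.congr fun n => ?_
  rw [Pi.div_apply, GammaSeq, div_div_eq_mul_div, Gamma_mul_prod_range_add hs,
    Gamma_nat_eq_factorial]
  push_cast
  ring_nf

lemma tendsto_Gamma_mul_Gamma_div_Gamma {a b c : ℝ} (ha : Gamma a ≠ 0) (hb : Gamma b ≠ 0)
    (hc : Gamma c ≠ 0) :
    Tendsto (fun n : ℕ => Gamma (n + 1 + a) * Gamma (n + 1 + b) /
      (Gamma (n + 1 + c) * Gamma (n + 1) * (n : ℝ) ^ (a + b - c))) atTop (𝓝 1) := by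
  have h := ((tendsto_Gamma_nat_add_one_add_div ha).mul
    (tendsto_Gamma_nat_add_one_add_div hb)).div (tendsto_Gamma_nat_add_one_add_div hc) one_ne_zero
  rw [mul_one, div_one] at h
  refine h.congr' ?_
  filter_upwards [eventually_gt_atTop 0] with n hn
  have hn' : (0 : ℝ) < n := Nat.cast_pos.2 hn
  have hGc : Gamma (n + 1 + c) ≠ 0 := fun h0 => by
    obtain ⟨m, hm⟩ := (Gamma_eq_zero_iff _).1 h0
    exact hc ((Gamma_eq_zero_iff c).2 ⟨m + n + 1, by push_cast; linarith⟩)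
  have hGn : Gamma (n + 1) ≠ 0 := by positivity
  rw [Pi.div_apply, rpow_sub hn', rpow_add hn']
  field_simp

lemma Gamma_ne_zero_of_neg_one_lt {s : ℝ} (hs : -1 < s) (h0 : s ≠ 0) : Gamma s ≠ 0 := by
  have h : Gamma (s + 1) ≠ 0 := (Gamma_pos_of_pos (by linarith)).ne'
  rw [Gamma_add_one h0] at h
  exact right_ne_zero_of_mul h

lemma Gamma_two_mul_add_one (x : ℝ) :
    Gamma (2 * x + 1) = (4 : ℝ) ^ x * Gamma (x + 1 / 2) * Gamma (x + 1) / √π := by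
  have h := Gamma_mul_Gamma_add_half (x + 1 / 2)
  rw [show x + 1 / 2 + 1 / 2 = x + 1 by ring, show 2 * (x + 1 / 2) = 2 * x + 1 by ring,
    show 1 - (2 * x + 1) = -(2 * x) by ring, rpow_neg zero_le_two, rpow_mul zero_le_two,
    show (2 : ℝ) ^ (2 : ℝ) = 4 by norm_num] at h
  have : (0 : ℝ) < 4 ^ x := by positivity
  rw [mul_assoc (4 ^ x), h]
  field_simp

end Real

theorem c_asymptotics_general (c : ℕ → ℝ) (b : ℝ)
    (hb : Filter.Tendsto
      (fun n : ℕ => c n / ((49 / 4 : ℝ) ^ n * Real.Gamma ((n : ℝ) + 1 / 7)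
        * Real.Gamma ((n : ℝ) + 3 / 7) / (Real.Gamma (1 / 7) * Real.Gamma (3 / 7))))
      Filter.atTop (nhds b))
    (hb1 : 1 ≤ b) :
    Filter.Tendsto
      (fun n : ℕ => c n /
        (Real.Gamma (2 * (n : ℝ) + 1) * (49 / 16 : ℝ) ^ n * (n : ℝ) ^ (-(13 / 14) : ℝ)
          * (b * Real.sqrt Real.pi / (Real.Gamma (1 / 7) * Real.Gamma (3 / 7)))))
      Filter.atTop (nhds 1) := by
  have hGamma : Tendsto (fun n : ℕ => Gamma (n + 1 / 7) * Gamma (n + 3 / 7) /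
      (Gamma (n + 1 / 2) * Gamma (n + 1) * (n : ℝ) ^ (-(13 / 14) : ℝ))) atTop (𝓝 1) := by
    convert tendsto_Gamma_mul_Gamma_div_Gamma (a := -6 / 7) (b := -4 / 7) (c := -1 / 2)
      (Gamma_ne_zero_of_neg_one_lt (by norm_num) (by norm_num))
      (Gamma_ne_zero_of_neg_one_lt (by norm_num) (by norm_num))
      (Gamma_ne_zero_of_neg_one_lt (by norm_num) (by norm_num)) using 5 <;> ring_nf
  have hb0 : b ≠ 0 := (zero_lt_one.trans_le hb1).ne'
  have hlim := hb.mul (hGamma.div_const b)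
  rw [mul_one_div_cancel hb0] at hlim
  refine hlim.congr' ?_
  filter_upwards [eventually_gt_atTop 0] with n hn
  have h49 : (49 / 4 : ℝ) ^ n = (49 / 16) ^ n * 4 ^ n := by rw [← mul_pow]; norm_num
  rw [Gamma_two_mul_add_one, rpow_natCast, h49]
  field_simp

theorem c_asymptotics (c : ℕ → ℝ) (b : ℝ)
    (hc0 : c 0 = 1)
    (hc : ∀ n : ℕ, 1 ≤ n → c n =
      (7 * (n : ℝ) - 6) * (7 * (n : ℝ) - 4) / 4 * c (n - 1)
      + (1 / 2) * ∑ k ∈ Finset.Icc 1 (n - 1),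
          (7 * (n : ℝ) - 7 * (k : ℝ) - 6) * (7 * (n : ℝ) - 7 * (k : ℝ) - 4) / 2
            * c (n - k - 1) * ∑ i ∈ Finset.range (k + 1), c i * c (k - i)
      - (1 / 2) * ∑ k ∈ Finset.Icc 1 (n - 1), c k * c (n - k))
    (hb : Filter.Tendsto
      (fun n : ℕ => c n / ((49 / 4 : ℝ) ^ n * Real.Gamma ((n : ℝ) + 1 / 7)
        * Real.Gamma ((n : ℝ) + 3 / 7) / (Real.Gamma (1 / 7) * Real.Gamma (3 / 7))))
      Filter.atTop (nhds b))
    (hb1 : 1 ≤ b) (hb2 : b ≤ 1.324) :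
    Filter.Tendsto
      (fun n : ℕ => c n /
        (Real.Gamma (2 * (n : ℝ) + 1) * (49 / 16 : ℝ) ^ n * (n : ℝ) ^ (-(13 / 14) : ℝ)
          * (b * Real.sqrt Real.pi / (Real.Gamma (1 / 7) * Real.Gamma (3 / 7)))))
      Filter.atTop (nhds 1) :=
  c_asymptotics_general c b hb hb1
end

section
/- The substitution v(t) = t^{-1/2}(1 + u(x)) with x = (4/7) t^{7/4} transforms the equation 2v″(t) − t + 1/v(t)² = 0 into u″(x) = u + (1/(7x)) u′ − (12/(49x²)) u − (3u² + 2u³)/(2(1+u)²) − 12/(49x²). -/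
/-!
Put `s = (7x/4)^{1/7}`, so that `t = s⁴`, `x = 4s⁷/7`, `u = s² v(s⁴) - 1` and `ds/dx = 1/(4s⁶)`.
Two applications of the chain rule give `u' = v/(2s⁵) + v'/s` and
`u'' = v''/s⁴ + v'/(4s⁸) - 5v/(8s¹²)`. Substituting `v'' = (t - 1/v²)/2` from the equation for `v`,
both sides of the claimed equation become `1/2 + v'/(4s⁸) - 5v/(8s¹²) - 1/(2s⁴v²)`.
-/

noncomputable def scaledSeventhRoot (x : ℝ) : ℝ := (7 * x / 4) ^ ((7 : ℝ)⁻¹)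

namespace scaledSeventhRoot

variable {x : ℝ}

lemma pos (hx : 0 < x) : 0 < scaledSeventhRoot x :=
  Real.rpow_pos_of_pos (by positivity) _

lemma pow_seven (hx : 0 ≤ x) : scaledSeventhRoot x ^ 7 = 7 * x / 4 :=
  Real.rpow_inv_natCast_pow (by positivity) (by norm_num)

lemma pow_eq_rpow (hx : 0 ≤ x) (n : ℕ) :
    scaledSeventhRoot x ^ n = (7 * x / 4) ^ ((n : ℝ) / 7) := by
  rw [scaledSeventhRoot, ← Real.rpow_natCast, ← Real.rpow_mul (by positivity)]
  ring_nf

lemma hasDerivAt (hx : 0 < x) :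
    HasDerivAt scaledSeventhRoot (1 / (4 * scaledSeventhRoot x ^ 6)) x := by
  have hs : 0 < 7 * x / 4 := by positivity
  have hlin : HasDerivAt (fun y : ℝ => 7 * y / 4) (7 / 4) x := by
    simpa using ((hasDerivAt_id x).const_mul 7).div_const 4
  refine ((Real.hasDerivAt_rpow_const (p := (7 : ℝ)⁻¹) (Or.inl hs.ne')).comp x hlin).congr_deriv ?_
  have hc := (pos hx).ne'
  have hexp : (7 * x / 4) ^ ((7 : ℝ)⁻¹ - 1) = scaledSeventhRoot x / scaledSeventhRoot x ^ 7 := by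
    rw [Real.rpow_sub hs, Real.rpow_one, pow_seven hx.le, scaledSeventhRoot]
  rw [hexp]
  field_simp

lemma hasDerivAt_comp {F : ℝ → ℝ} {F' : ℝ} (hx : 0 < x)
    (hF : HasDerivAt F F' (scaledSeventhRoot x)) :
    HasDerivAt (fun y => F (scaledSeventhRoot y)) (F' / (4 * scaledSeventhRoot x ^ 6)) x :=
  (hF.comp x (hasDerivAt hx)).congr_deriv (by ring)

end scaledSeventhRoot

section

variable {v : ℝ → ℝ} {s : ℝ}

lemma hasDerivAt_comp_pow_four (hv : DifferentiableAt ℝ v (s ^ 4)) :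
    HasDerivAt (fun s => v (s ^ 4)) (4 * s ^ 3 * deriv v (s ^ 4)) s := by
  have hpow : HasDerivAt (fun y : ℝ => y ^ 4) (4 * s ^ 3) s := by simpa using hasDerivAt_pow 4 s
  exact (hv.hasDerivAt.comp (h := fun y : ℝ => y ^ 4) s hpow).congr_deriv (by ring)

lemma hasDerivAt_sq_mul_comp_pow_four_sub_one (hv : DifferentiableAt ℝ v (s ^ 4)) :
    HasDerivAt (fun s => s ^ 2 * v (s ^ 4) - 1)
      (2 * s * v (s ^ 4) + 4 * s ^ 5 * deriv v (s ^ 4)) s := by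
  refine (((hasDerivAt_pow 2 s).mul (hasDerivAt_comp_pow_four hv)).sub_const 1).congr_deriv ?_
  push_cast
  ring

lemma hasDerivAt_comp_pow_four_div (hs : s ≠ 0) (hv : DifferentiableAt ℝ v (s ^ 4))
    (hv' : DifferentiableAt ℝ (deriv v) (s ^ 4)) :
    HasDerivAt (fun s => v (s ^ 4) / (2 * s ^ 5) + deriv v (s ^ 4) / s)
      (4 * s ^ 2 * deriv (deriv v) (s ^ 4) + deriv v (s ^ 4) / s ^ 2
        - 5 * v (s ^ 4) / (2 * s ^ 6)) s := by
  have h₁ := (hasDerivAt_comp_pow_four hv).div ((hasDerivAt_pow 5 s).const_mul 2) (by positivity)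
  have h₂ := (hasDerivAt_comp_pow_four hv').div (hasDerivAt_id s) hs
  refine (h₁.add h₂).congr_deriv ?_
  simp only [id]
  push_cast
  field_simp
  ring

end

def IsNormalizingSubstitution (u v : ℝ → ℝ) : Prop :=
  ∀ x, 0 < x → u x = scaledSeventhRoot x ^ 2 * v (scaledSeventhRoot x ^ 4) - 1

namespace IsNormalizingSubstitution

variable {u v : ℝ → ℝ} {x : ℝ}

lemma of_rpow
    (hu : ∀ x : ℝ, 0 < x →
      u x = ((7 * x / 4) ^ ((4 : ℝ) / 7)) ^ ((1 : ℝ) / 2) * v ((7 * x / 4) ^ ((4 : ℝ) / 7)) - 1) :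
    IsNormalizingSubstitution u v := by
  intro x hx
  rw [hu x hx, scaledSeventhRoot.pow_eq_rpow hx.le, scaledSeventhRoot.pow_eq_rpow hx.le,
    ← Real.rpow_mul (by positivity)]
  norm_num

lemma hasDerivAt (h : IsNormalizingSubstitution u v)
    (hv : ∀ t, 0 < t → DifferentiableAt ℝ v t) (hx : 0 < x) :
    HasDerivAt u (v (scaledSeventhRoot x ^ 4) / (2 * scaledSeventhRoot x ^ 5)
      + deriv v (scaledSeventhRoot x ^ 4) / scaledSeventhRoot x) x := by
  have hs := scaledSeventhRoot.pos hx
  have hg := scaledSeventhRoot.hasDerivAt_comp hx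
    (hasDerivAt_sq_mul_comp_pow_four_sub_one (hv _ (by positivity)))
  refine (hg.congr_of_eventuallyEq ?_).congr_deriv ?_
  · filter_upwards [eventually_gt_nhds hx] with y hy using h y hy
  · field_simp
    ring

lemma hasDerivAt_deriv (h : IsNormalizingSubstitution u v)
    (hv : ∀ t, 0 < t → DifferentiableAt ℝ v t)
    (hv' : ∀ t, 0 < t → DifferentiableAt ℝ (deriv v) t) (hx : 0 < x) :
    HasDerivAt (deriv u) (deriv (deriv v) (scaledSeventhRoot x ^ 4) / scaledSeventhRoot x ^ 4
      + deriv v (scaledSeventhRoot x ^ 4) / (4 * scaledSeventhRoot x ^ 8)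
      - 5 * v (scaledSeventhRoot x ^ 4) / (8 * scaledSeventhRoot x ^ 12)) x := by
  have hs := scaledSeventhRoot.pos hx
  have hg := scaledSeventhRoot.hasDerivAt_comp hx
    (hasDerivAt_comp_pow_four_div hs.ne' (hv _ (by positivity)) (hv' _ (by positivity)))
  refine (hg.congr_of_eventuallyEq ?_).congr_deriv ?_
  · filter_upwards [eventually_gt_nhds hx] with y hy using (h.hasDerivAt hv hy).deriv
  · field_simp
    ring

end IsNormalizingSubstitution

theorem normalizing_substitution_general (v u : ℝ → ℝ)
    (hv1 : ∀ t : ℝ, 0 < t → DifferentiableAt ℝ v t)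
    (hv2 : ∀ t : ℝ, 0 < t → DifferentiableAt ℝ (deriv v) t)
    (hvne : ∀ t : ℝ, 0 < t → v t ≠ 0)
    (hveq : ∀ t : ℝ, 0 < t → 2 * deriv (deriv v) t - t + 1 / (v t) ^ 2 = 0)
    (hu : ∀ x : ℝ, 0 < x →
      u x = ((7 * x / 4) ^ ((4 : ℝ) / 7)) ^ ((1 : ℝ) / 2) * v ((7 * x / 4) ^ ((4 : ℝ) / 7)) - 1) :
    ∀ x : ℝ, 0 < x →
      deriv (deriv u) x = u x + 1 / (7 * x) * deriv u x - 12 / (49 * x ^ 2) * u x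
        - (3 * u x ^ 2 + 2 * u x ^ 3) / (2 * (1 + u x) ^ 2) - 12 / (49 * x ^ 2) := by
  intro x hx
  have h := IsNormalizingSubstitution.of_rpow hu
  rw [(h.hasDerivAt_deriv hv1 hv2 hx).deriv, (h.hasDerivAt hv1 hx).deriv, h x hx]
  have hx_eq : x = 4 * scaledSeventhRoot x ^ 7 / 7 := by
    linarith [scaledSeventhRoot.pow_seven hx.le]
  have hs := scaledSeventhRoot.pos hx
  generalize scaledSeventhRoot x = s at hs hx_eq ⊢
  have hv_ne := hvne (s ^ 4) (by positivity)
  have hv'' : deriv (deriv v) (s ^ 4) = (s ^ 4 - 1 / v (s ^ 4) ^ 2) / 2 := by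
    linarith [hveq (s ^ 4) (by positivity)]
  subst hx_eq
  rw [hv'']
  field_simp
  ring

theorem normalizing_substitution (v u : ℝ → ℝ)
    (hv1 : ∀ t : ℝ, 0 < t → DifferentiableAt ℝ v t)
    (hv2 : ∀ t : ℝ, 0 < t → DifferentiableAt ℝ (deriv v) t)
    (hvne : ∀ t : ℝ, 0 < t → v t ≠ 0)
    (hveq : ∀ t : ℝ, 0 < t → 2 * deriv (deriv v) t - t + 1 / (v t) ^ 2 = 0)
    (hu : ∀ x : ℝ, 0 < x →
      u x = ((7 * x / 4) ^ ((4 : ℝ) / 7)) ^ ((1 : ℝ) / 2) * v ((7 * x / 4) ^ ((4 : ℝ) / 7)) - 1)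
    (hune : ∀ x : ℝ, 0 < x → 1 + u x ≠ 0) :
    ∀ x : ℝ, 0 < x →
      deriv (deriv u) x = u x + 1 / (7 * x) * deriv u x - 12 / (49 * x ^ 2) * u x
        - (3 * u x ^ 2 + 2 * u x ^ 3) / (2 * (1 + u x) ^ 2) - 12 / (49 * x ^ 2) :=
  normalizing_substitution_general v u hv1 hv2 hvne hveq hu
end

section
/- Given that U₀(p) = Σ_{n≥1} (u_{2n}/Γ(2n)) p^{2n−1} is an odd convergent power series near p = 0, and that its derivatives at 0 satisfy U₀^{(r)}(0) = (Γ(r + 15/14)/(2πi)) (S₁ + S₂ e^{−i(r+15/14)π} + O(1/r)) for all r, then evaluating at even r forces S₂ = −S₁ e^{(15/14)iπ}. -/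
open Complex in
theorem stokes_relation (S₁ S₂ : ℂ) (Y ε : ℕ → ℂ)
    (hε : ∃ C : ℝ, ∀ r : ℕ, 1 ≤ r → ‖ε r‖ ≤ C / r)
    (hY : ∀ r : ℕ, Y r = Complex.Gamma ((r : ℂ) + 15 / 14) / (2 * Real.pi * I)
      * (S₁ + S₂ * Complex.exp (-I * ((r : ℂ) + 15 / 14) * Real.pi) + ε r))
    (heven : ∀ r : ℕ, Even r → Y r = 0) :
    S₂ = -S₁ * Complex.exp ((15 / 14 : ℂ) * Real.pi * I) := by
  obtain ⟨C, hC⟩ := hε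
  set c := Complex.exp (-I * (15 / 14 : ℂ) * Real.pi) with hc
  have key : ∀ k : ℕ, 1 ≤ k → S₁ + S₂ * c + ε (2 * k) = 0 := by
    intro k hk
    have h0 := heven (2 * k) ⟨k, two_mul k⟩
    rw [hY] at h0
    have hg : Complex.Gamma (((2 * k : ℕ) : ℂ) + 15 / 14) ≠ 0 := by
      apply Complex.Gamma_ne_zero_of_re_pos
      simp only [Complex.add_re, Complex.natCast_re]
      have : (0:ℝ) < ((15 / 14 : ℂ)).re := by norm_num [Complex.div_re]
      positivity
    have hden : (2 * (Real.pi : ℂ) * I) ≠ 0 := by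
      simp [Real.pi_ne_zero, Complex.I_ne_zero]
    have hmul : Complex.Gamma (((2 * k : ℕ) : ℂ) + 15 / 14) / (2 * Real.pi * I) ≠ 0 :=
      div_ne_zero hg hden
    have h1 : S₁ + S₂ * Complex.exp (-I * (((2 * k : ℕ) : ℂ) + 15 / 14) * Real.pi)
        + ε (2 * k) = 0 := (mul_eq_zero.mp h0).resolve_left hmul
    have hexp : Complex.exp (-I * (((2 * k : ℕ) : ℂ) + 15 / 14) * Real.pi) = c := by
      rw [hc]
      have harg : -I * (((2 * k : ℕ) : ℂ) + 15 / 14) * Real.pi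
          = (-(k : ℤ)) * (2 * Real.pi * I) + -I * (15 / 14 : ℂ) * Real.pi := by
        push_cast; ring
      rw [harg, Complex.exp_add]
      have h2 : Complex.exp ((-(k : ℤ) : ℂ) * (2 * Real.pi * I)) = 1 := by
        simpa using Complex.exp_int_mul_two_pi_mul_I (-(k : ℤ))
      rw [h2, one_mul]
    rwa [hexp] at h1
  have ha : S₁ + S₂ * c = 0 := by
    by_contra h
    have habs : 0 < ‖S₁ + S₂ * c‖ := by
      simpa using (norm_pos_iff.mpr h)
    obtain ⟨n, hn⟩ := exists_nat_gt (C / ‖S₁ + S₂ * c‖)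
    have hk := key (n + 1) (by omega)
    have hε' := hC (2 * (n + 1)) (by omega)
    have heq : S₁ + S₂ * c = -ε (2 * (n + 1)) := by
      linear_combination hk
    have habs2 : ‖S₁ + S₂ * c‖ ≤ C / (2 * (n + 1) : ℕ) := by
      rw [heq, norm_neg]; exact hε'
    have hpos : (0:ℝ) < ((2 * (n + 1) : ℕ) : ℝ) := by positivity
    rw [le_div_iff₀ hpos] at habs2
    rw [div_lt_iff₀ habs] at hn
    have hle : (n : ℝ) ≤ ((2 * (n + 1) : ℕ) : ℝ) := by push_cast; linarith
    nlinarith [mul_le_mul_of_nonneg_right hle habs.le]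
  have hce : c * Complex.exp ((15 / 14 : ℂ) * Real.pi * I) = 1 := by
    rw [hc, ← Complex.exp_add]
    have : -I * (15 / 14 : ℂ) * Real.pi + (15 / 14 : ℂ) * Real.pi * I = 0 := by ring
    rw [this, Complex.exp_zero]
  calc S₂ = S₂ * (c * Complex.exp ((15 / 14 : ℂ) * Real.pi * I)) := by rw [hce, mul_one]
    _ = (S₁ + S₂ * c) * Complex.exp ((15 / 14 : ℂ) * Real.pi * I)
        - S₁ * Complex.exp ((15 / 14 : ℂ) * Real.pi * I) := by ring
    _ = -S₁ * Complex.exp ((15 / 14 : ℂ) * Real.pi * I) := by rw [ha]; ring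
end
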